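/- arXiv:2109.12747 — 5 statements merged into one kernel-verified Lean document; each statement's English description precedes it below -/
import Mathlib

section
/- Let α < β be reals and let Φ : [α,β] → [α,β] be continuous and strictly increasing with Φ(x) > x for all x ∈ [α,β). Then for any x_* ∈ (α, Φ(α)), there exists a continuous and strictly increasing function φ : [α,β] → [α,β] such that φ∘φ = Φ on [α,β] and φ(α) = x_*. -/
open Set Function Topology Filter

noncomputable section

/-- `x` is a fort of `F` on `[a,b]`: `F` is not strictly monotone on any
neighborhood of `x` in `[a,b]`. -/
def IsFort (a b : ℝ) (F : ℝ → ℝ) (x : ℝ) : Prop :=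
  x ∈ Set.Icc a b ∧ ∀ ε : ℝ, 0 < ε →
    ¬ StrictMonoOn F (Set.Icc a b ∩ Set.Ioo (x - ε) (x + ε)) ∧
    ¬ StrictAntiOn F (Set.Icc a b ∩ Set.Ioo (x - ε) (x + ε))

/-- The number of forts `N(F)` of `F` on `[a,b]`. -/
noncomputable def nForts (a b : ℝ) (F : ℝ → ℝ) : ℕ :=
  {x | IsFort a b F x}.ncard

/-- `H(F) = m`: the nonmonotonicity height of `F` on `[a,b]` equals `m`, i.e. `m` is
the least `i ≥ 0` with `N(F^i) = N(F^{i+1})`. -/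
def HeightEq (a b : ℝ) (F : ℝ → ℝ) (m : ℕ) : Prop :=
  IsLeast {i : ℕ | nForts a b (F^[i]) = nForts a b (F^[i + 1])} m

/-- `F` is a PM function on `[a,b]` with forts `c 1 < ... < c v`
(`c 0 = a`, `c (v+1) = b`): `F` is continuous, maps `[a,b]` into itself,
is strictly monotone on each lap `[c i, c (i+1)]`, and each `c i`, `1 ≤ i ≤ v`,
is a fort. -/
structure PMFun (a b : ℝ) (F : ℝ → ℝ) (v : ℕ) (c : ℕ → ℝ) : Prop where
  lt : a < b
  cont : ContinuousOn F (Set.Icc a b)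
  maps : Set.MapsTo F (Set.Icc a b) (Set.Icc a b)
  c_zero : c 0 = a
  c_last : c (v + 1) = b
  c_mono : ∀ i ≤ v, c i < c (i + 1)
  lap_mono : ∀ i ≤ v,
    StrictMonoOn F (Set.Icc (c i) (c (i + 1))) ∨ StrictAntiOn F (Set.Icc (c i) (c (i + 1)))
  fort : ∀ i, 1 ≤ i → i ≤ v → IsFort a b F (c i)

/-- `[d,e]` is a lap of `G` on `[a,b]`: a maximal interval of strict monotonicity,
bounded by forts or the endpoints of `[a,b]`, with no fort inside. -/
def IsLap (a b : ℝ) (G : ℝ → ℝ) (d e : ℝ) : Prop :=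
  a ≤ d ∧ d < e ∧ e ≤ b ∧
  (StrictMonoOn G (Set.Icc d e) ∨ StrictAntiOn G (Set.Icc d e)) ∧
  (d = a ∨ IsFort a b G d) ∧ (e = b ∨ IsFort a b G e) ∧
  ∀ x ∈ Set.Ioo d e, ¬ IsFort a b G x

/-- The set of fixed points of `φ` in `[α,β]`. -/
def fixedSet (α β : ℝ) (φ : ℝ → ℝ) : Set ℝ := {x | x ∈ Set.Icc α β ∧ φ x = x}

/-- `φ` is a reversing-correspondence on `[α,β]`. -/
def RevCorr (α β : ℝ) (φ : ℝ → ℝ) : Prop :=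
  StrictMonoOn φ (Set.Icc α β) ∧ ContinuousOn φ (Set.Icc α β) ∧
  Set.MapsTo φ (Set.Icc α β) (Set.Icc α β) ∧
  ∃ ξ ∈ fixedSet α β φ, ∃ ω : ℝ → ℝ,
    Set.MapsTo ω (fixedSet α β φ) (fixedSet α β φ) ∧
    StrictAntiOn ω (fixedSet α β φ) ∧
    Set.SurjOn ω (fixedSet α β φ) (fixedSet α β φ) ∧
    ω ξ = ξ ∧
    ((α ∈ fixedSet α β φ ∧ β ∈ fixedSet α β φ) ∨
      (α ∉ fixedSet α β φ ∧ β ∉ fixedSet α β φ)) ∧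
    (∀ ξ₁ ∈ fixedSet α β φ, ∀ ξ₂ ∈ fixedSet α β φ, ξ₁ < ξ₂ → ξ₂ ≤ ξ →
      (∀ z ∈ Set.Ioo ξ₁ ξ₂, z ∉ fixedSet α β φ) →
      ∀ x ∈ Set.Ioo ξ₁ ξ₂, ∀ y ∈ Set.Ioo (ω ξ₂) (ω ξ₁),
        (φ x - x) * (φ y - y) < 0)

/-- auxiliary sequence of interval endpoints -/
noncomputable def stmt4aseq (α xs : ℝ) (Φ : ℝ → ℝ) : ℕ → ℝ
  | 0 => α
  | 1 => xs
  | n + 2 => Φ (stmt4aseq α xs Φ n)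

/-- auxiliary sequence of partial square-root maps -/
noncomputable def stmt4fseq (Φ Ψ L Li : ℝ → ℝ) : ℕ → ℝ → ℝ
  | 0 => L
  | 1 => fun x => Φ (Li x)
  | n + 2 => fun x => Φ (stmt4fseq Φ Ψ L Li n (Ψ x))

/-- a strictly monotone surjection of `[a,b]` onto `[f a, f b]` is continuous -/
theorem stmt4contAux {f : ℝ → ℝ} {a b : ℝ}
    (hmono : StrictMonoOn f (Icc a b)) (hsurj : SurjOn f (Icc a b) (Icc (f a) (f b))) :
    ContinuousOn f (Icc a b) := by
  rcases le_or_gt b a with hba | hab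
  · intro x hx
    have hx' : x = a := le_antisymm (hx.2.trans hba) hx.1
    have : Icc a b ⊆ {x} := fun y hy => by
      simp [hx', le_antisymm (hy.2.trans hba) hy.1]
    exact (continuousWithinAt_singleton (f := f) (x := x)).mono this
  intro x hx
  have hmemab : a ∈ Icc a b := ⟨le_rfl, hab.le⟩
  have hmembb : b ∈ Icc a b := ⟨hab.le, le_rfl⟩
  have hright : x < b → ContinuousWithinAt f (Ici x) x := by
    intro hxb
    refine hmono.continuousWithinAt_right_of_exists_between
      (Icc_mem_nhdsGE_of_mem ⟨hx.1, hxb⟩) (fun y hy => ?_)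
    have hfxb : f x < f b := hmono hx hmembb hxb
    have hfa : f a ≤ f x := hmono.monotoneOn hmemab hx hx.1
    obtain ⟨c, hc, hfc⟩ := hsurj (show min y (f b) ∈ Icc (f a) (f b) from
      ⟨le_min (hfa.trans hy.le) (hmono.monotoneOn hmemab hmembb hab.le), min_le_right _ _⟩)
    exact ⟨c, hc, by rw [hfc]; exact lt_min hy hfxb, by rw [hfc]; exact min_le_left _ _⟩
  have hleft : a < x → ContinuousWithinAt f (Iic x) x := by
    intro hax
    refine hmono.continuousWithinAt_left_of_exists_between
      (Icc_mem_nhdsLE_of_mem ⟨hax, hx.2⟩) (fun y hy => ?_)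
    have hfax : f a < f x := hmono hmemab hx hax
    have hfb : f x ≤ f b := hmono.monotoneOn hx hmembb hx.2
    obtain ⟨c, hc, hfc⟩ := hsurj (show max y (f a) ∈ Icc (f a) (f b) from
      ⟨le_max_right _ _, max_le (hy.le.trans hfb) (hmono.monotoneOn hmemab hmembb hab.le)⟩)
    exact ⟨c, hc, by rw [hfc]; exact le_max_left _ _, by rw [hfc]; exact max_lt hy hfax⟩
  rcases eq_or_lt_of_le hx.1 with h1 | h1
  · exact (hright (h1 ▸ hab)).mono (h1 ▸ Icc_subset_Ici_self)
  rcases eq_or_lt_of_le hx.2 with h2 | h2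
  · exact ((hleft h1).mono (by rw [h2]; exact Icc_subset_Iic_self))
  · exact ((hleft h1).union (hright h2)).mono (fun y _ => le_total y x)

/-- Lemma 3.1, increasing case `Φ(x) > x`. -/
theorem stmt4 (α β : ℝ) (hαβ : α < β) (Φ : ℝ → ℝ)
    (hc : ContinuousOn Φ (Set.Icc α β)) (hm : StrictMonoOn Φ (Set.Icc α β))
    (hmaps : Set.MapsTo Φ (Set.Icc α β) (Set.Icc α β))
    (habove : ∀ x ∈ Set.Ico α β, x < Φ x)
    (xs : ℝ) (hxs : xs ∈ Set.Ioo α (Φ α)) :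
    ∃ φ : ℝ → ℝ, ContinuousOn φ (Set.Icc α β) ∧ StrictMonoOn φ (Set.Icc α β) ∧
      Set.MapsTo φ (Set.Icc α β) (Set.Icc α β) ∧
      (∀ x ∈ Set.Icc α β, φ (φ x) = Φ x) ∧ φ α = xs := by
  classical
  obtain ⟨hxs1, hxs2⟩ := hxs
  have hαmem : α ∈ Icc α β := ⟨le_rfl, hαβ.le⟩
  have hβmem : β ∈ Icc α β := ⟨hαβ.le, le_rfl⟩
  have hΦαβ : Φ α ≤ β := (hmaps hαmem).2
  have hxsβ : xs < β := lt_of_lt_of_le hxs2 hΦαβ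
  -- Φ fixes β
  have hΦβ : Φ β = β := by
    refine le_antisymm (hmaps hβmem).2 ?_
    have hne : (𝓝[Ico α β] β).NeBot := by
      refine mem_closure_iff_nhdsWithin_neBot.mp ?_
      rw [closure_Ico hαβ.ne]; exact ⟨hαβ.le, le_rfl⟩
    have ht1 : Filter.Tendsto Φ (𝓝[Ico α β] β) (𝓝 (Φ β)) :=
      (hc β hβmem).mono_left (nhdsWithin_mono _ Ico_subset_Icc_self)
    have ht2 : Filter.Tendsto id (𝓝[Ico α β] β) (𝓝 β) :=
      tendsto_id.mono_left nhdsWithin_le_nhds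
    refine le_of_tendsto_of_tendsto ht2 ht1 ?_
    filter_upwards [self_mem_nhdsWithin] with x hx
    exact (habove x hx).le
  have hΦlt : ∀ x ∈ Ico α β, Φ x < β := fun x hx =>
    hΦβ ▸ hm ⟨hx.1, hx.2.le⟩ hβmem hx.2
  -- the sequence a
  set a : ℕ → ℝ := stmt4aseq α xs Φ with ha
  have ha0 : a 0 = α := rfl
  have ha1 : a 1 = xs := rfl
  have ha2 : ∀ n, a (n + 2) = Φ (a n) := fun n => rfl
  have haa : ∀ n, (a n < a (n + 1) ∧ a n ∈ Ico α β) ∧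
      (a (n + 1) < a (n + 2) ∧ a (n + 1) ∈ Ico α β) := by
    intro n
    induction n with
    | zero =>
      refine ⟨⟨hxs1, le_rfl, hαβ⟩, ?_, hxs1.le, hxsβ⟩
      rw [ha1, ha2 0, ha0]; exact hxs2
    | succ n ih =>
      refine ⟨ih.2, ?_, ?_⟩
      · rw [ha2 n, ha2 (n+1)]
        exact hm ⟨ih.1.2.1, ih.1.2.2.le⟩ ⟨ih.2.2.1, ih.2.2.2.le⟩ ih.1.1
      · rw [ha2 n]
        exact ⟨(hmaps ⟨ih.1.2.1, ih.1.2.2.le⟩).1, hΦlt _ ih.1.2⟩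
  have hstep : ∀ n, a n < a (n + 1) := fun n => (haa n).1.1
  have hIco : ∀ n, a n ∈ Ico α β := fun n => (haa n).1.2
  have hIcc : ∀ n, a n ∈ Icc α β := fun n => ⟨(hIco n).1, (hIco n).2.le⟩
  have hamono : StrictMono a := strictMono_nat_of_lt_succ hstep
  have hsub : ∀ n, Icc (a n) (a (n + 1)) ⊆ Icc α β := fun n =>
    Icc_subset_Icc (hIco n).1 (hIco (n + 1)).2.le
  -- the supremum of a is β
  have hlim : ∀ x, x < β → ∃ n, x < a n := by
    have hbdd : BddAbove (range a) := ⟨β, fun y ⟨n, hn⟩ => hn ▸ (hIco n).2.le⟩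
    have htend : Filter.Tendsto a Filter.atTop (𝓝 (⨆ n, a n)) :=
      tendsto_atTop_ciSup hamono.monotone hbdd
    have hSle : (⨆ n, a n) ≤ β := ciSup_le fun n => (hIco n).2.le
    have hSge : α ≤ ⨆ n, a n := ha0 ▸ le_ciSup hbdd 0
    have hfix : Φ (⨆ n, a n) = ⨆ n, a n := by
      have h1 : Filter.Tendsto (fun n => a (n + 2)) Filter.atTop (𝓝 (⨆ n, a n)) :=
        htend.comp (Filter.tendsto_add_atTop_nat 2)
      have h2 : Filter.Tendsto (fun n => Φ (a n)) Filter.atTop (𝓝 (Φ (⨆ n, a n))) := by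
        have h3 : Filter.Tendsto a Filter.atTop (𝓝[Icc α β] (⨆ n, a n)) :=
          tendsto_nhdsWithin_of_tendsto_nhds_of_eventually_within a htend
            (Filter.Eventually.of_forall fun n => hIcc n)
        exact (hc _ ⟨hSge, hSle⟩).tendsto.comp h3
      have h3 : (fun n => a (n + 2)) = fun n => Φ (a n) := funext fun n => ha2 n
      rw [h3] at h1
      exact tendsto_nhds_unique h2 h1
    rcases eq_or_lt_of_le hSle with hS | hS
    · intro x hx; rw [← hS] at hx; exact exists_lt_of_lt_ciSup hx
    · exact absurd hfix (ne_of_gt (habove _ ⟨hSge, hS⟩))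
  -- the inverse Ψ of Φ
  set Ψ : ℝ → ℝ := Function.invFunOn Φ (Icc α β) with hΨdef
  have hinj : Set.InjOn Φ (Icc α β) := hm.injOn
  have hΨΦ : ∀ x ∈ Icc α β, Ψ (Φ x) = x := fun x hx => hinj.leftInvOn_invFunOn hx
  -- Φ maps lap n onto lap (n+2)
  have hsurjΦ : ∀ n, SurjOn Φ (Icc (a n) (a (n + 1))) (Icc (a (n + 2)) (a (n + 3))) := by
    intro n
    have h := intermediate_value_Icc (hstep n).le (hc.mono (hsub n))
    rwa [← ha2 n, ← ha2 (n + 1)] at h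
  have hΦmapsI : ∀ n, MapsTo Φ (Icc (a n) (a (n + 1))) (Icc (a (n + 2)) (a (n + 3))) := by
    intro n x hx
    rw [ha2 n, ha2 (n + 1)]
    exact ⟨hm.monotoneOn (hsub n (left_mem_Icc.2 (hstep n).le)) (hsub n hx) hx.1,
      hm.monotoneOn (hsub n hx) (hsub n (right_mem_Icc.2 (hstep n).le)) hx.2⟩
  have hΨmem : ∀ n, ∀ x ∈ Icc (a (n + 2)) (a (n + 3)),
      Ψ x ∈ Icc (a n) (a (n + 1)) ∧ Φ (Ψ x) = x := by
    intro n x hx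
    obtain ⟨u, hu, hΦu⟩ := hsurjΦ n hx
    have h := hΨΦ u (hsub n hu)
    rw [← hΦu, h]
    exact ⟨hu, rfl⟩
  have hΨmono : ∀ n, ∀ x ∈ Icc (a (n + 2)) (a (n + 3)), ∀ y ∈ Icc (a (n + 2)) (a (n + 3)),
      x < y → Ψ x < Ψ y := by
    intro n x hx y hy hxy
    obtain ⟨hxm, hxe⟩ := hΨmem n x hx
    obtain ⟨hym, hye⟩ := hΨmem n y hy
    exact (hm.lt_iff_lt (hsub n hxm) (hsub n hym)).mp (by rw [hxe, hye]; exact hxy)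
  -- the linear maps L, Li
  have hd1 : (0:ℝ) < xs - α := sub_pos.2 hxs1
  have hd2 : (0:ℝ) < Φ α - xs := sub_pos.2 hxs2
  set L : ℝ → ℝ := fun t => xs + (t - α) * ((Φ α - xs) / (xs - α)) with hL
  set Li : ℝ → ℝ := fun s => α + (s - xs) * ((xs - α) / (Φ α - xs)) with hLi
  have hLα : L α = xs := by simp [hL]
  have hLxs : L xs = Φ α := by rw [hL]; field_simp; ring
  have hLixs : Li xs = α := by simp [hLi]
  have hLiΦα : Li (Φ α) = xs := by rw [hLi]; field_simp; ring
  have hLiL : ∀ t, Li (L t) = t := by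
    intro t; rw [hL, hLi]; field_simp; ring
  have hLLi : ∀ s, L (Li s) = s := by
    intro s; rw [hL, hLi]; field_simp; ring
  have hLmono : StrictMono L := by
    intro x y hxy
    have hq : 0 < (Φ α - xs) / (xs - α) := div_pos hd2 hd1
    simp only [hL]; nlinarith
  have hLimono : StrictMono Li := by
    intro x y hxy
    have hq : 0 < (xs - α) / (Φ α - xs) := div_pos hd1 hd2
    simp only [hLi]; nlinarith
  have hLmaps : MapsTo L (Icc α xs) (Icc xs (Φ α)) := fun x hx =>
    ⟨hLα ▸ hLmono.monotone hx.1, hLxs ▸ hLmono.monotone hx.2⟩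
  have hLimaps : MapsTo Li (Icc xs (Φ α)) (Icc α xs) := fun x hx =>
    ⟨hLixs ▸ hLimono.monotone hx.1, hLiΦα ▸ hLimono.monotone hx.2⟩
  -- the sequence of maps f
  set f : ℕ → ℝ → ℝ := stmt4fseq Φ Ψ L Li with hf
  have hf0 : ∀ x, f 0 x = L x := fun x => rfl
  have hf1 : ∀ x, f 1 x = Φ (Li x) := fun x => rfl
  have hf2 : ∀ n x, f (n + 2) x = Φ (f n (Ψ x)) := fun n x => rfl
  -- key properties of f, by two-step induction
  have FP : ∀ n,
      (StrictMonoOn (f n) (Icc (a n) (a (n + 1))) ∧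
        MapsTo (f n) (Icc (a n) (a (n + 1))) (Icc (a (n + 1)) (a (n + 2))) ∧
        SurjOn (f n) (Icc (a n) (a (n + 1))) (Icc (a (n + 1)) (a (n + 2)))) := by
    intro n
    induction n using Nat.twoStepInduction with
    | zero =>
      have e0 : Icc (a 0) (a 1) = Icc α xs := by rw [ha0, ha1]
      have e1 : Icc (a 1) (a 2) = Icc xs (Φ α) := by rw [ha1, ha2 0, ha0]
      rw [e0, e1]
      refine ⟨fun x _ y _ hxy => hLmono hxy, hLmaps, fun y hy => ?_⟩
      exact ⟨Li y, hLimaps hy, hLLi y⟩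
    | one =>
      have e1 : Icc (a 1) (a 2) = Icc xs (Φ α) := by rw [ha1, ha2 0, ha0]
      have hIccsub : Icc α xs ⊆ Icc α β := Icc_subset_Icc le_rfl hxsβ.le
      refine ⟨?_, ?_, ?_⟩
      · intro x hx y hy hxy
        rw [e1] at hx hy
        exact hm (hIccsub (hLimaps hx)) (hIccsub (hLimaps hy)) (hLimono hxy)
      · intro x hx
        rw [e1] at hx
        have h1 := hLimaps hx
        rw [hf1]
        rw [ha2 0, ha2 1, ha0, ha1]
        exact ⟨hm.monotoneOn hαmem (hIccsub h1) h1.1,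
          hm.monotoneOn (hIccsub h1) ⟨hxs1.le, hxsβ.le⟩ h1.2⟩
      · intro y hy
        obtain ⟨u, hu, hΦu⟩ := hsurjΦ 0 hy
        rw [ha0, ha1] at hu
        refine ⟨L u, ?_, ?_⟩
        · rw [e1]; exact hLmaps hu
        · rw [hf1, hLiL u, hΦu]
    | more n ih1 _ =>
      obtain ⟨ihm, ihmap, ihsurj⟩ := ih1
      refine ⟨?_, ?_, ?_⟩
      · intro x hx y hy hxy
        rw [hf2, hf2]
        exact hm (hsub (n + 1) (ihmap (hΨmem n x hx).1)) (hsub (n + 1) (ihmap (hΨmem n y hy).1))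
          (ihm (hΨmem n x hx).1 (hΨmem n y hy).1 (hΨmono n x hx y hy hxy))
      · intro x hx
        rw [hf2]
        exact hΦmapsI (n + 1) (ihmap (hΨmem n x hx).1)
      · intro y hy
        obtain ⟨w, hw, hΦw⟩ := hsurjΦ (n + 1) hy
        obtain ⟨u, hu, hfu⟩ := ihsurj hw
        refine ⟨Φ u, hΦmapsI n hu, ?_⟩
        rw [hf2, hΨΦ u (hsub n hu), hfu, hΦw]
  -- endpoint values of f
  have hfend : ∀ n, f n (a n) = a (n + 1) ∧ f n (a (n + 1)) = a (n + 2) := by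
    intro n
    induction n using Nat.twoStepInduction with
    | zero =>
      constructor
      · rw [hf0, ha0, ha1, hLα]
      · rw [hf0, ha1, ha2 0, ha0, hLxs]
    | one =>
      constructor
      · rw [hf1, ha1, ha2 0, ha0, hLixs]
      · rw [hf1, ha2 0, ha0, hLiΦα, ha2 1, ha1]
    | more n ih1 _ =>
      constructor
      · rw [hf2, ha2 n, hΨΦ (a n) (hIcc n), ih1.1, ← ha2 (n + 1)]
      · rw [hf2, ha2 (n + 1), hΨΦ (a (n + 1)) (hIcc (n + 1)), ih1.2, ← ha2 (n + 2)]
  -- composition property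
  have hcomp : ∀ n, ∀ x ∈ Icc (a n) (a (n + 1)), f (n + 1) (f n x) = Φ x := by
    intro n
    induction n using Nat.twoStepInduction with
    | zero =>
      intro x hx
      rw [hf0, hf1, hLiL]
    | one =>
      intro x hx
      rw [ha1, ha2 0, ha0] at hx
      rw [hf1, hf2, hΨΦ (Li x) (Icc_subset_Icc le_rfl hxsβ.le (hLimaps hx)), hf0, hLLi]
    | more n ih1 _ =>
      intro x hx
      obtain ⟨hΨx, hΦΨx⟩ := hΨmem n x hx
      have h1 : f n (Ψ x) ∈ Icc (a (n + 1)) (a (n + 2)) := (FP n).2.1 hΨx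
      rw [hf2, hf2, hΨΦ _ (hsub (n + 1) h1), ih1 _ hΨx, hΦΨx]
  -- the index function and φ
  have hidx : ∀ x, α ≤ x → x < β → ∃ n, a n ≤ x ∧ x < a (n + 1) := by
    intro x h1 h2
    have hex : ∃ n, x < a (n + 1) := by
      obtain ⟨n, hn⟩ := hlim x h2
      exact ⟨n, hn.trans_le (hamono.monotone (Nat.le_succ n))⟩
    refine ⟨Nat.find hex, ?_, Nat.find_spec hex⟩
    rcases Nat.eq_zero_or_pos (Nat.find hex) with h | h
    · rw [h, ha0]; exact h1
    · obtain ⟨m, hm'⟩ := Nat.exists_eq_succ_of_ne_zero h.ne'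
      rw [hm']
      have h3 := Nat.find_min hex (m := m) (by omega)
      push_neg at h3
      exact h3
  set φ : ℝ → ℝ := fun x => if hx : ∃ n, x < a (n + 1) then f (Nat.find hx) x else β with hφ
  have hφeq : ∀ x n, a n ≤ x → x < a (n + 1) → φ x = f n x := by
    intro x n h1 h2
    have hex : ∃ m, x < a (m + 1) := ⟨n, h2⟩
    have hfind : Nat.find hex = n := by
      refine le_antisymm (Nat.find_le h2) ?_
      by_contra h
      push_neg at h
      have h4 := Nat.find_spec hex
      have h5 : a (Nat.find hex + 1) ≤ a n := hamono.monotone (by omega)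
      linarith
    rw [hφ]
    simp only [dif_pos hex, hfind]
  have hφβ : φ β = β := by
    rw [hφ]
    exact dif_neg (by push_neg; exact fun n => (hIco (n + 1)).2.le)
  -- values of φ on each lap
  have hφx : ∀ x ∈ Ico α β, ∃ n, a n ≤ x ∧ x < a (n + 1) ∧ φ x = f n x ∧
      a (n + 1) ≤ φ x ∧ φ x < a (n + 2) := by
    intro x hx
    obtain ⟨n, h1, h2⟩ := hidx x hx.1 hx.2
    have he := hφeq x n h1 h2
    refine ⟨n, h1, h2, he, ?_, ?_⟩
    · rw [he, ← (hfend n).1]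
      exact (FP n).1.monotoneOn (left_mem_Icc.2 (hstep n).le) ⟨h1, h2.le⟩ h1
    · rw [he, ← (hfend n).2]
      exact (FP n).1 ⟨h1, h2.le⟩ (right_mem_Icc.2 (hstep n).le) h2
  have hφα : φ α = xs := by
    rw [hφeq α 0 (le_of_eq ha0.symm) (ha1 ▸ hxs1), hf0, hLα]
  -- strict monotonicity
  have hφmono : StrictMonoOn φ (Icc α β) := by
    intro x hx y hy hxy
    rcases eq_or_lt_of_le hy.2 with hyβ | hyβ
    · obtain ⟨n, _, _, _, _, h5⟩ := hφx x ⟨hx.1, hxy.trans_le hy.2⟩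
      rw [hyβ, hφβ]
      exact h5.trans_le (hIco (n + 2)).2.le
    · obtain ⟨n, hn1, hn2, hn3, hn4, hn5⟩ := hφx x ⟨hx.1, hxy.trans hyβ⟩
      obtain ⟨m, hm1, hm2, hm3, hm4, hm5⟩ := hφx y ⟨hy.1, hyβ⟩
      have hnm : n ≤ m := by
        by_contra h
        push_neg at h
        have h6 : a (m + 1) ≤ a n := hamono.monotone (by omega)
        linarith
      rcases eq_or_lt_of_le hnm with h | h
      · rw [hn3, hm3, ← h]
        exact (FP n).1 ⟨hn1, hn2.le⟩ (h ▸ ⟨hm1, hm2.le⟩) hxy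
      · have h6 : a (n + 2) ≤ a (m + 1) := hamono.monotone (by omega)
        linarith
  -- maps to
  have hφmapsTo : MapsTo φ (Icc α β) (Icc α β) := by
    intro x hx
    rcases eq_or_lt_of_le hx.2 with hxβ | hxβ
    · rw [hxβ, hφβ]; exact hβmem
    · obtain ⟨n, _, _, _, h4, h5⟩ := hφx x ⟨hx.1, hxβ⟩
      exact ⟨(hIco (n + 1)).1.trans h4, (h5.trans (hIco (n + 2)).2).le⟩
  -- functional equation
  have hφΦ : ∀ x ∈ Icc α β, φ (φ x) = Φ x := by
    intro x hx
    rcases eq_or_lt_of_le hx.2 with hxβ | hxβ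
    · rw [hxβ, hφβ, hφβ, hΦβ]
    · obtain ⟨n, h1, h2, h3, h4, h5⟩ := hφx x ⟨hx.1, hxβ⟩
      rw [hφeq (φ x) (n + 1) h4 h5, h3]
      rw [h3] at h4 h5
      exact hcomp n x ⟨h1, h2.le⟩
  -- surjectivity onto [xs, β]
  have hφsurj : SurjOn φ (Icc α β) (Icc (φ α) (φ β)) := by
    rw [hφα, hφβ]
    intro y hy
    rcases eq_or_lt_of_le hy.2 with hyβ | hyβ
    · exact ⟨β, hβmem, hyβ ▸ hφβ⟩
    · obtain ⟨m, h1, h2⟩ := hidx y (hxs1.le.trans hy.1) hyβ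
      have hm1 : 1 ≤ m := by
        by_contra h
        push_neg at h
        interval_cases m
        rw [ha1] at h2
        linarith [hy.1]
      obtain ⟨k, rfl⟩ : ∃ k, m = k + 1 := ⟨m - 1, by omega⟩
      obtain ⟨u, hu, hfu⟩ := (FP k).2.2 (⟨h1, h2.le⟩ : y ∈ Icc (a (k + 1)) (a (k + 2)))
      have huk : u < a (k + 1) := by
        rcases eq_or_lt_of_le hu.2 with h | h
        · rw [h, (hfend k).2] at hfu
          rw [hfu] at h2
          exact absurd h2 (lt_irrefl _)
        · exact h
      exact ⟨u, hsub k hu, (hφeq u k hu.1 huk).trans hfu⟩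
  exact ⟨φ, stmt4contAux hφmono hφsurj, hφmono, hφmapsTo, hφΦ, hφα⟩
end
end

section
/- Let α < β be reals and let Φ : [α,β] → [α,β] be continuous and strictly increasing with Φ(x) < x for all x ∈ (α,β]. Then for any y_* ∈ (Φ(β), β), there exists a continuous and strictly increasing function φ : [α,β] → [α,β] such that φ∘φ = Φ on [α,β] and φ(β) = y_*. -/
open Set Function

noncomputable section

/-- auxiliary continuity lemma: a strictly monotone surjection Icc → Icc is continuous -/
lemma aux_cont {a b : ℝ} {f : ℝ → ℝ} (hab : a < b)
    (hmono : StrictMonoOn f (Set.Icc a b))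
    (hsurj : Set.SurjOn f (Set.Icc a b) (Set.Icc (f a) (f b))) :
    ContinuousOn f (Set.Icc a b) := by
  have hmem : ∀ x ∈ Icc a b, f x ∈ Icc (f a) (f b) := by
    intro x hx
    constructor
    · rcases eq_or_lt_of_le hx.1 with h | h
      · exact le_of_eq (by rw [h])
      · exact (hmono (left_mem_Icc.2 hab.le) hx h).le
    · rcases eq_or_lt_of_le hx.2 with h | h
      · exact le_of_eq (by rw [h])
      · exact (hmono hx (right_mem_Icc.2 hab.le) h).le
  intro x hx
  have hR : x < b → ContinuousWithinAt f (Ici x) x := by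
    intro hxb
    refine hmono.continuousWithinAt_right_of_exists_between
      (Icc_mem_nhdsGE_of_mem ⟨hx.1, hxb⟩) ?_
    intro y hy
    have hfx : f x < f b := hmono hx (right_mem_Icc.2 hab.le) hxb
    refine ⟨Function.invFunOn f (Icc a b) (min y (f b)), ?_, ?_⟩
    · exact Function.invFunOn_mem (hsurj ⟨le_trans (hmem x hx).1 (le_min hy.le hfx.le), min_le_right _ _⟩)
    · have := Function.invFunOn_eq (f := f) (hsurj (⟨le_trans (hmem x hx).1 (le_min hy.le hfx.le), min_le_right _ _⟩ : min y (f b) ∈ Icc (f a) (f b)))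
      rw [this]
      exact ⟨lt_min hy hfx, min_le_left _ _⟩
  have hL : a < x → ContinuousWithinAt f (Iic x) x := by
    intro hax
    refine hmono.continuousWithinAt_left_of_exists_between
      (Icc_mem_nhdsLE_of_mem ⟨hax, hx.2⟩) ?_
    intro y hy
    have hfx : f a < f x := hmono (left_mem_Icc.2 hab.le) hx hax
    refine ⟨Function.invFunOn f (Icc a b) (max y (f a)), ?_, ?_⟩
    · exact Function.invFunOn_mem (hsurj ⟨le_max_right _ _, le_trans (max_le hy.le hfx.le) (hmem x hx).2⟩)
    · have := Function.invFunOn_eq (f := f) (hsurj (⟨le_max_right _ _, le_trans (max_le hy.le hfx.le) (hmem x hx).2⟩ : max y (f a) ∈ Icc (f a) (f b)))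
      rw [this]
      exact ⟨le_max_left _ _, max_lt hy hfx⟩
  rcases lt_or_eq_of_le hx.1 with h1 | h1
  · rcases lt_or_eq_of_le hx.2 with h2 | h2
    · refine ((hL h1).union (hR h2)).mono ?_
      intro z hz
      exact (le_total z x).imp id id
    · refine (hL h1).mono ?_
      intro z hz
      exact mem_Iic.2 (h2 ▸ hz.2)
  · refine (hR (h1 ▸ hab)).mono ?_
    intro z hz
    exact mem_Ici.2 (h1 ▸ hz.1)

noncomputable def auxA (β ys : ℝ) (Φ : ℝ → ℝ) : ℕ → ℝ × ℝ
  | 0 => (β, ys)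
  | n+1 => ((auxA β ys Φ n).2, Φ (auxA β ys Φ n).1)

noncomputable def auxSeq (β ys : ℝ) (Φ : ℝ → ℝ) (n : ℕ) : ℝ := (auxA β ys Φ n).1

lemma auxSeq_add_two (β ys : ℝ) (Φ : ℝ → ℝ) (n : ℕ) :
    auxSeq β ys Φ (n + 2) = Φ (auxSeq β ys Φ n) := by
  show (auxA β ys Φ (n+2)).1 = Φ (auxA β ys Φ n).1
  rw [auxA, auxA]

noncomputable def auxF (L Li Φ Ψ : ℝ → ℝ) : ℕ → (ℝ → ℝ) × (ℝ → ℝ)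
  | 0 => (L, Li)
  | n+1 => (Φ ∘ (auxF L Li Φ Ψ n).2, (auxF L Li Φ Ψ n).1 ∘ Ψ)

lemma auxF_succ (L Li Φ Ψ : ℝ → ℝ) (n : ℕ) :
    auxF L Li Φ Ψ (n+1) = (Φ ∘ (auxF L Li Φ Ψ n).2, (auxF L Li Φ Ψ n).1 ∘ Ψ) := by
  rw [auxF]

/-- Lemma 3.1, decreasing case `Φ(x) < x`. -/
theorem stmt5 (α β : ℝ) (hαβ : α < β) (Φ : ℝ → ℝ)
    (hc : ContinuousOn Φ (Set.Icc α β)) (hm : StrictMonoOn Φ (Set.Icc α β))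
    (hmaps : Set.MapsTo Φ (Set.Icc α β) (Set.Icc α β))
    (hbelow : ∀ x ∈ Set.Ioc α β, Φ x < x)
    (ys : ℝ) (hys : ys ∈ Set.Ioo (Φ β) β) :
    ∃ φ : ℝ → ℝ, ContinuousOn φ (Set.Icc α β) ∧ StrictMonoOn φ (Set.Icc α β) ∧
      Set.MapsTo φ (Set.Icc α β) (Set.Icc α β) ∧
      (∀ x ∈ Set.Icc α β, φ (φ x) = Φ x) ∧ φ β = ys := by
  classical
  obtain ⟨hys1, hys2⟩ := hys
  have hαβ' : α ≤ β := hαβ.le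
  have memα : α ∈ Icc α β := left_mem_Icc.2 hαβ'
  have memβ : β ∈ Icc α β := right_mem_Icc.2 hαβ'
  have hΦβ : Φ β ∈ Icc α β := hmaps memβ
  have hΦα : Φ α = α := by
    rcases lt_or_eq_of_le (hmaps memα).1 with h | h
    · exfalso
      have h1 : Φ (Φ α) < Φ α := hbelow _ ⟨h, (hmaps memα).2⟩
      have h2 : Φ α < Φ (Φ α) := hm memα (hmaps memα) h
      linarith
    · exact h.symm
  -- the orbit sequence
  set a : ℕ → ℝ := auxSeq β ys Φ with ha_def
  have ha0 : a 0 = β := rfl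
  have ha1 : a 1 = ys := rfl
  have haS : ∀ n, a (n+2) = Φ (a n) := fun n => auxSeq_add_two β ys Φ n
  have ha2 : a 2 = Φ β := by rw [haS 0, ha0]
  have hmem2 : ∀ n, (α < a n ∧ a n ≤ β) ∧ (α < a (n+1) ∧ a (n+1) ≤ β) := by
    intro n
    induction n with
    | zero =>
      refine ⟨⟨?_, ?_⟩, ⟨?_, ?_⟩⟩
      · rw [ha0]; exact hαβ
      · rw [ha0]
      · rw [ha1]; exact lt_of_le_of_lt hΦβ.1 hys1
      · rw [ha1]; exact hys2.le
    | succ n ih =>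
      refine ⟨ih.2, ?_, ?_⟩
      · rw [haS]
        calc α = Φ α := hΦα.symm
          _ < Φ (a n) := hm memα ⟨ih.1.1.le, ih.1.2⟩ ih.1.1
      · rw [haS]
        exact (hmaps ⟨ih.1.1.le, ih.1.2⟩).2
  have amem : ∀ n, a n ∈ Icc α β := fun n => ⟨(hmem2 n).1.1.le, (hmem2 n).1.2⟩
  have apos : ∀ n, α < a n := fun n => (hmem2 n).1.1
  have adec2 : ∀ n, a (n+1) < a n ∧ a (n+2) < a (n+1) := by
    intro n
    induction n with
    | zero =>
      refine ⟨?_, ?_⟩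
      · rw [ha0, ha1]; exact hys2
      · rw [ha1, ha2]; exact hys1
    | succ n ih =>
      refine ⟨ih.2, ?_⟩
      rw [haS (n+1), haS n]
      exact hm (amem (n+1)) (amem n) ih.1
  have adec : ∀ n, a (n+1) < a n := fun n => (adec2 n).1
  have aanti : StrictAnti a := strictAnti_nat_of_succ_lt adec
  have hbddB : BddBelow (Set.range a) := by
    refine ⟨α, ?_⟩
    rintro y ⟨n, rfl⟩
    exact (apos n).le
  have htendInf : Filter.Tendsto a Filter.atTop (nhds (⨅ n, a n)) :=
    tendsto_atTop_ciInf aanti.antitone hbddB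
  have hLvmem : (⨅ n, a n) ∈ Icc α β := by
    constructor
    · exact le_ciInf (fun n => (apos n).le)
    · calc (⨅ n, a n) ≤ a 0 := ciInf_le hbddB 0
        _ = β := ha0
  have hfix : Φ (⨅ n, a n) = (⨅ n, a n) := by
    have h1 : Filter.Tendsto (fun n => a (n+2)) Filter.atTop (nhds (⨅ n, a n)) :=
      htendInf.comp (Filter.tendsto_add_atTop_nat 2)
    have h2 : Filter.Tendsto (fun n => Φ (a n)) Filter.atTop (nhds (Φ (⨅ n, a n))) := by
      have hcw : ContinuousWithinAt Φ (Icc α β) (⨅ n, a n) := hc _ hLvmem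
      exact hcw.tendsto.comp (tendsto_nhdsWithin_of_tendsto_nhds_of_eventually_within a
        htendInf (Filter.Eventually.of_forall amem))
    have h3 : (fun n => a (n+2)) = fun n => Φ (a n) := funext haS
    rw [h3] at h1
    exact tendsto_nhds_unique h2 h1
  have hLvα : (⨅ n, a n) = α := by
    by_contra h
    have hlt : α < (⨅ n, a n) := lt_of_le_of_ne hLvmem.1 (Ne.symm h)
    exact absurd hfix (ne_of_lt (hbelow _ ⟨hlt, hLvmem.2⟩))
  have htend : Filter.Tendsto a Filter.atTop (nhds α) := by rw [← hLvα]; exact htendInf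
  -- lap decomposition
  have hlap : ∀ x, α < x → x ≤ β → ∃ n, a (n+1) < x ∧ x ≤ a n := by
    intro x hαx hxβ
    have hev : ∀ᶠ n in Filter.atTop, a n < x := htend.eventually_lt_const hαx
    obtain ⟨N, hN⟩ := Filter.eventually_atTop.1 hev
    have hP : ∃ n, a (n+1) < x := ⟨N, hN (N+1) (Nat.le_succ N)⟩
    refine ⟨Nat.find hP, Nat.find_spec hP, ?_⟩
    rcases Nat.eq_zero_or_pos (Nat.find hP) with h0 | hpos
    · rw [h0, ha0]; exact hxβ
    · obtain ⟨k, hk⟩ : ∃ k, Nat.find hP = k + 1 := ⟨Nat.find hP - 1, by omega⟩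
      have := Nat.find_min hP (show k < Nat.find hP by omega)
      rw [hk]
      exact le_of_not_gt this
  -- the affine seed map and its inverse
  have hd1 : (0:ℝ) < β - ys := sub_pos.2 hys2
  have hd2 : (0:ℝ) < ys - Φ β := sub_pos.2 hys1
  set L : ℝ → ℝ := fun x => Φ β + (x - ys) * ((ys - Φ β) / (β - ys)) with hLdef
  set Li : ℝ → ℝ := fun y => ys + (y - Φ β) * ((β - ys) / (ys - Φ β)) with hLidef
  have hLmono : StrictMono L := by
    intro x y hxy
    have hq : 0 < (ys - Φ β) / (β - ys) := div_pos hd2 hd1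
    simp only [hLdef]
    nlinarith
  have hLimono : StrictMono Li := by
    intro x y hxy
    have hq : 0 < (β - ys) / (ys - Φ β) := div_pos hd1 hd2
    simp only [hLidef]
    nlinarith
  have hLys : L ys = Φ β := by simp [hLdef]
  have hLβ : L β = ys := by
    simp only [hLdef]
    field_simp
    ring
  have hLiΦβ : Li (Φ β) = ys := by simp [hLidef]
  have hLiys : Li ys = β := by
    simp only [hLidef]
    field_simp
    ring
  have hLiL : ∀ x, Li (L x) = x := by
    intro x
    simp only [hLdef, hLidef]
    field_simp
    ring
  have hLLi : ∀ y, L (Li y) = y := by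
    intro y
    simp only [hLdef, hLidef]
    field_simp
    ring
  -- the inverse of Φ
  set Ψ : ℝ → ℝ := Function.invFunOn Φ (Icc α β) with hΨdef
  have hΨΦ : ∀ x ∈ Icc α β, Ψ (Φ x) = x := fun x hx => hm.injOn.leftInvOn_invFunOn hx
  have hΦsurj : ∀ u v : ℝ, u ∈ Icc α β → v ∈ Icc α β → u ≤ v →
      SurjOn Φ (Icc u v) (Icc (Φ u) (Φ v)) := by
    intro u v hu hv huv
    exact intermediate_value_Icc huv (hc.mono (Icc_subset_Icc hu.1 hv.2))
  have hΨspec : ∀ u v : ℝ, u ∈ Icc α β → v ∈ Icc α β → ∀ y ∈ Icc (Φ u) (Φ v),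
      Ψ y ∈ Icc u v ∧ Φ (Ψ y) = y := by
    intro u v hu hv y hy
    have huv : u ≤ v := (hm.le_iff_le hu hv).1 (le_trans hy.1 hy.2)
    obtain ⟨x, hxm, hxe⟩ := hΦsurj u v hu hv huv hy
    have hxab : x ∈ Icc α β := ⟨le_trans hu.1 hxm.1, le_trans hxm.2 hv.2⟩
    have hx2 : Ψ y = x := by rw [← hxe, hΨΦ x hxab]
    rw [hx2]
    exact ⟨hxm, hxe⟩
  have hΨmono : ∀ u v : ℝ, u ∈ Icc α β → v ∈ Icc α β →
      StrictMonoOn Ψ (Icc (Φ u) (Φ v)) := by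
    intro u v hu hv y1 h1 y2 h2 h12
    by_contra h
    push_neg at h
    obtain ⟨he1, he1'⟩ := hΨspec u v hu hv y1 h1
    obtain ⟨he2, he2'⟩ := hΨspec u v hu hv y2 h2
    have hsub : Icc u v ⊆ Icc α β := Icc_subset_Icc hu.1 hv.2
    have : Φ (Ψ y2) ≤ Φ (Ψ y1) := hm.monotoneOn (hsub he2) (hsub he1) h
    rw [he1', he2'] at this
    exact absurd h12 (not_lt.2 this)
  -- the family of maps
  set f : ℕ → ℝ → ℝ := fun n => (auxF L Li Φ Ψ n).1 with hfdef
  set g : ℕ → ℝ → ℝ := fun n => (auxF L Li Φ Ψ n).2 with hgdef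
  have hf0 : ∀ x, f 0 x = L x := fun x => rfl
  have hg0 : ∀ x, g 0 x = Li x := fun x => rfl
  have hfS : ∀ n x, f (n+1) x = Φ (g n x) := by
    intro n x
    show (auxF L Li Φ Ψ (n+1)).1 x = _
    rw [auxF_succ]
    rfl
  have hgS : ∀ n y, g (n+1) y = f n (Ψ y) := by
    intro n y
    show (auxF L Li Φ Ψ (n+1)).2 y = _
    rw [auxF_succ]
    rfl
  have hsub : ∀ k m : ℕ, Icc (a k) (a m) ⊆ Icc α β := fun k m z hz =>
    ⟨le_trans (amem k).1 hz.1, le_trans hz.2 (amem m).2⟩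
  -- the invariant
  have hInv : ∀ n : ℕ,
      MapsTo (f n) (Icc (a (n+1)) (a n)) (Icc (a (n+2)) (a (n+1))) ∧
      StrictMonoOn (f n) (Icc (a (n+1)) (a n)) ∧
      SurjOn (f n) (Icc (a (n+1)) (a n)) (Icc (a (n+2)) (a (n+1))) ∧
      MapsTo (g n) (Icc (a (n+2)) (a (n+1))) (Icc (a (n+1)) (a n)) ∧
      StrictMonoOn (g n) (Icc (a (n+2)) (a (n+1))) ∧
      (∀ x ∈ Icc (a (n+1)) (a n), g n (f n x) = x) ∧
      (∀ y ∈ Icc (a (n+2)) (a (n+1)), f n (g n y) = y) ∧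
      f n (a (n+1)) = a (n+2) ∧ f n (a n) = a (n+1) := by
    intro n
    induction n with
    | zero =>
      rw [ha0, ha1, ha2]
      refine ⟨?_, ?_, ?_, ?_, ?_, ?_, ?_, ?_, ?_⟩
      · intro x hx
        rw [hf0]
        constructor
        · calc Φ β = L ys := hLys.symm
            _ ≤ L x := hLmono.monotone hx.1
        · calc L x ≤ L β := hLmono.monotone hx.2
            _ = ys := hLβ
      · intro x _ y _ hxy
        rw [hf0, hf0]
        exact hLmono hxy
      · intro y hy
        refine ⟨Li y, ⟨?_, ?_⟩, ?_⟩
        · calc ys = Li (Φ β) := hLiΦβ.symm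
            _ ≤ Li y := hLimono.monotone hy.1
        · calc Li y ≤ Li ys := hLimono.monotone hy.2
            _ = β := hLiys
        · rw [hf0]; exact hLLi y
      · intro y hy
        rw [hg0]
        constructor
        · calc ys = Li (Φ β) := hLiΦβ.symm
            _ ≤ Li y := hLimono.monotone hy.1
        · calc Li y ≤ Li ys := hLimono.monotone hy.2
            _ = β := hLiys
      · intro x _ y _ hxy
        rw [hg0, hg0]
        exact hLimono hxy
      · intro x _
        rw [hf0, hg0]; exact hLiL x
      · intro y _
        rw [hf0, hg0]; exact hLLi y
      · rw [hf0]; exact hLys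
      · rw [hf0]; exact hLβ
    | succ n ih =>
      obtain ⟨ihmap, ihmono, ihsurj, ihgmap, ihgmono, ihgf, ihfg, ihe1, ihe2⟩ := ih
      have hmemn1 : a (n+1) ∈ Icc (a (n+1)) (a n) := left_mem_Icc.2 (adec n).le
      have hmemn : a n ∈ Icc (a (n+1)) (a n) := right_mem_Icc.2 (adec n).le
      have hge1 : g n (a (n+2)) = a (n+1) := by rw [← ihe1, ihgf _ hmemn1]
      have hge2 : g n (a (n+1)) = a n := by rw [← ihe2, ihgf _ hmemn]
      refine ⟨?_, ?_, ?_, ?_, ?_, ?_, ?_, ?_, ?_⟩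
      · -- maps
        intro x hx
        rw [hfS]
        have h1 : g n x ∈ Icc (a (n+1)) (a n) := ihgmap hx
        rw [haS (n+1), haS n]
        constructor
        · exact hm.monotoneOn (amem (n+1)) (hsub _ _ h1) h1.1
        · exact hm.monotoneOn (hsub _ _ h1) (amem n) h1.2
      · -- strict mono
        intro x hx y hy hxy
        rw [hfS, hfS]
        exact hm (hsub _ _ (ihgmap hx)) (hsub _ _ (ihgmap hy)) (ihgmono hx hy hxy)
      · -- surj
        intro y hy
        rw [haS (n+1), haS n] at hy
        obtain ⟨z, hz, hze⟩ := hΦsurj (a (n+1)) (a n) (amem _) (amem _) (adec n).le hy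
        refine ⟨f n z, ihmap hz, ?_⟩
        rw [hfS, ihgf z hz, hze]
      · -- g maps
        intro y hy
        rw [hgS]
        rw [haS (n+1), haS n] at hy
        have h1 : Ψ y ∈ Icc (a (n+1)) (a n) := (hΨspec _ _ (amem (n+1)) (amem n) y hy).1
        exact ihmap h1
      · -- g strict mono
        intro y1 h1 y2 h2 h12
        rw [hgS, hgS]
        rw [haS (n+1), haS n] at h1 h2
        refine ihmono (hΨspec _ _ (amem (n+1)) (amem n) y1 h1).1
          (hΨspec _ _ (amem (n+1)) (amem n) y2 h2).1
          (hΨmono _ _ (amem (n+1)) (amem n) h1 h2 h12)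
      · -- g ∘ f = id
        intro x hx
        rw [hfS, hgS, hΨΦ _ (hsub _ _ (ihgmap hx)), ihfg x hx]
      · -- f ∘ g = id
        intro y hy
        rw [hfS, hgS]
        rw [haS (n+1), haS n] at hy
        obtain ⟨h1, h2⟩ := hΨspec _ _ (amem (n+1)) (amem n) y hy
        rw [ihgf _ h1, h2]
      · -- endpoint 1
        rw [hfS, hge1, haS (n+1)]
      · -- endpoint 2
        rw [hfS, hge2, haS n]
  -- the solution
  have hφex : ∃ φ : ℝ → ℝ, ∀ x, φ x =
      if h : ∃ n, a (n+1) < x then f (Nat.find h) x else α :=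
    ⟨_, fun x => rfl⟩
  obtain ⟨φ, hφdef⟩ := hφex
  have hφα : φ α = α := by
    rw [hφdef]
    rw [dif_neg]
    push_neg
    intro n
    exact (apos (n+1)).le
  have hφeq : ∀ n, ∀ x ∈ Icc (a (n+1)) (a n), φ x = f n x := by
    intro n x hx
    rcases eq_or_lt_of_le hx.1 with hxe | hxl
    · have hex : ∃ m, a (m+1) < x := ⟨n+1, by rw [← hxe]; exact adec (n+1)⟩
      rw [hφdef, dif_pos hex]
      have h1 : Nat.find hex ≤ n+1 := Nat.find_le (by rw [← hxe]; exact adec (n+1))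
      have h2 : n+1 ≤ Nat.find hex := by
        have hspec : a (Nat.find hex + 1) < a (n+1) := by
          rw [hxe]; exact Nat.find_spec hex
        have := aanti.lt_iff_gt.1 hspec
        omega
      have h3 : Nat.find hex = n + 1 := le_antisymm h1 h2
      rw [h3, ← hxe]
      rw [(hInv (n+1)).2.2.2.2.2.2.2.2, (hInv n).2.2.2.2.2.2.2.1]
    · have hex : ∃ m, a (m+1) < x := ⟨n, hxl⟩
      rw [hφdef, dif_pos hex]
      have h1 : Nat.find hex ≤ n := Nat.find_le hxl
      have h2 : n ≤ Nat.find hex := by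
        have hspec : a (Nat.find hex + 1) < x := Nat.find_spec hex
        have := aanti.lt_iff_gt.1 (lt_of_lt_of_le hspec hx.2)
        omega
      rw [le_antisymm h1 h2]
  have hφβ : φ β = ys := by
    have hβmem : β ∈ Icc (a 1) (a 0) := by
      rw [ha0, ha1]
      exact right_mem_Icc.2 hys2.le
    rw [hφeq 0 β hβmem, hf0, hLβ]
  have hφmono : StrictMonoOn φ (Icc α β) := by
    intro x hx y hy hxy
    rcases eq_or_lt_of_le hx.1 with hax | hax
    · rw [← hax, hφα]
      have hαy : α < y := by rw [hax]; exact hxy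
      obtain ⟨n, hn1, hn2⟩ := hlap y hαy hy.2
      rw [hφeq n y ⟨hn1.le, hn2⟩]
      have h1 : a (n+2) ≤ f n y := ((hInv n).1 ⟨hn1.le, hn2⟩).1
      exact lt_of_lt_of_le (apos (n+2)) h1
    · obtain ⟨m, hm1, hm2⟩ := hlap x hax hx.2
      obtain ⟨n, hn1, hn2⟩ := hlap y (lt_trans hax hxy) hy.2
      rw [hφeq m x ⟨hm1.le, hm2⟩, hφeq n y ⟨hn1.le, hn2⟩]
      have hnm : n ≤ m := by
        by_contra h
        push_neg at h
        have : a n ≤ a (m+1) := aanti.antitone h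
        linarith
      rcases eq_or_lt_of_le hnm with he | hlt
      · rw [← he] at hm1 hm2 ⊢
        exact (hInv n).2.1 ⟨hm1.le, hm2⟩ ⟨hn1.le, hn2⟩ hxy
      · have h1 : f m x ≤ a (m+1) := ((hInv m).1 ⟨hm1.le, hm2⟩).2
        have h2 : a (n+2) < f n y := by
          have := (hInv n).2.1 (left_mem_Icc.2 (adec n).le) ⟨hn1.le, hn2⟩ hn1
          rwa [(hInv n).2.2.2.2.2.2.2.1] at this
        have h3 : a (m+1) ≤ a (n+2) := aanti.antitone (by omega)
        linarith
  have hφmaps : MapsTo φ (Icc α β) (Icc α β) := by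
    intro x hx
    rcases eq_or_lt_of_le hx.1 with hax | hax
    · rw [← hax, hφα]; exact memα
    · obtain ⟨n, hn1, hn2⟩ := hlap x hax hx.2
      rw [hφeq n x ⟨hn1.le, hn2⟩]
      exact hsub _ _ ((hInv n).1 ⟨hn1.le, hn2⟩)
  have hφsurj : SurjOn φ (Icc α β) (Icc α ys) := by
    intro y hy
    rcases eq_or_lt_of_le hy.1 with hay | hay
    · exact ⟨α, memα, by rw [hφα, hay]⟩
    · obtain ⟨m, hm1, hm2⟩ := hlap y hay (le_trans hy.2 hys2.le)
      obtain ⟨k, rfl⟩ : ∃ k, m = k + 1 := by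
        rcases Nat.eq_zero_or_pos m with h0 | hpos
        · exfalso
          rw [h0, ha1] at hm1
          exact absurd hy.2 (not_le.2 hm1)
        · exact ⟨m - 1, by omega⟩
      obtain ⟨x, hxm, hxe⟩ := (hInv k).2.2.1 ⟨hm1.le, hm2⟩
      exact ⟨x, hsub _ _ hxm, by rw [hφeq k x hxm, hxe]⟩
  have hφcomp : ∀ x ∈ Icc α β, φ (φ x) = Φ x := by
    intro x hx
    rcases eq_or_lt_of_le hx.1 with hax | hax
    · rw [← hax, hφα, hφα, hΦα]
    · obtain ⟨n, hn1, hn2⟩ := hlap x hax hx.2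
      rw [hφeq n x ⟨hn1.le, hn2⟩]
      have hfx : f n x ∈ Icc (a (n+2)) (a (n+1)) := (hInv n).1 ⟨hn1.le, hn2⟩
      rw [hφeq (n+1) (f n x) hfx, hfS n (f n x), (hInv n).2.2.2.2.2.1 x ⟨hn1.le, hn2⟩]
  have hφcont : ContinuousOn φ (Icc α β) := by
    have hIcc : Icc (φ α) (φ β) = Icc α ys := by rw [hφα, hφβ]
    exact aux_cont hαβ hφmono (hIcc ▸ hφsurj)
  exact ⟨φ, hφcont, hφmono, hφmaps, hφcomp, hφβ⟩
end
end

section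
/- Let I = [a,b] and let F : I → I be a PM function with finite nonmonotonicity height H(F) = m > 0. Then F^m(I) is contained in some lap of the PM function F^m (that is, in its characteristic interval K(F^m)), while for every integer n with 1 ≤ n < m, F^n(I) is not contained in any lap of F^n. In other words, m is the smallest positive integer n such that F^n(I) ⊆ K(F^n). -/
open Set Function

noncomputable section

/-- mono or anti -/
def MoA (g : ℝ → ℝ) (s : Set ℝ) : Prop := StrictMonoOn g s ∨ StrictAntiOn g s

namespace Aux

variable {a b : ℝ} {F g φ G H : ℝ → ℝ} {v : ℕ} {c : ℕ → ℝ}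

lemma moa_mono {s t : Set ℝ} (h : MoA g t) (hst : s ⊆ t) : MoA g s :=
  h.imp (fun h => h.mono hst) (fun h => h.mono hst)

lemma moa_comp {s t : Set ℝ} (hφ : MoA φ t) (hg : MoA g s) (hm : Set.MapsTo g s t) :
    MoA (φ ∘ g) s := by
  rcases hφ with h1 | h1 <;> rcases hg with h2 | h2
  · exact Or.inl (h1.comp h2 hm)
  · exact Or.inr (h1.comp_strictAntiOn h2 hm)
  · exact Or.inr (h1.comp_strictMonoOn h2 hm)
  · exact Or.inl (h1.comp h2 hm)

lemma not_fort_intro {x ε : ℝ} (hε : 0 < ε)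
    (h : MoA g (Icc a b ∩ Ioo (x - ε) (x + ε))) : ¬ IsFort a b g x := by
  intro hf
  rcases hf.2 ε hε with ⟨h1, h2⟩
  rcases h with h | h
  exacts [h1 h, h2 h]

lemma not_fort_elim {x : ℝ} (hx : x ∈ Icc a b) (h : ¬ IsFort a b g x) :
    ∃ ε > 0, MoA g (Icc a b ∩ Ioo (x - ε) (x + ε)) := by
  by_contra hc
  push_neg at hc
  exact h ⟨hx, fun ε hε => by
    have := hc ε hε
    exact ⟨fun hm => this (Or.inl hm), fun hm => this (Or.inr hm)⟩⟩

lemma fort_mem {x : ℝ} (h : IsFort a b g x) : x ∈ Icc a b := h.1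

/-- forts of `G` are forts of `H ∘ G` (for continuous `G`). -/
lemma fort_comp (hG : ContinuousOn G (Icc a b)) {x : ℝ} (hx : IsFort a b G x) :
    IsFort a b (H ∘ G) x := by
  refine ⟨hx.1, fun ε hε => ?_⟩
  have key : ¬ MoA (H ∘ G) (Icc a b ∩ Ioo (x - ε) (x + ε)) := by
    intro h
    have hinjHG : InjOn (H ∘ G) (Icc a b ∩ Ioo (x - ε) (x + ε)) := by
      rcases h with h | h
      exacts [h.injOn, h.injOn]
    set ε' := ε / 2 with hε'
    have hε'pos : 0 < ε' := by positivity
    set d := max a (x - ε') with hd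
    set e := min b (x + ε') with he
    have hde : d ≤ e := by
      have h1 : d ≤ x := max_le hx.1.1 (by linarith)
      have h2 : x ≤ e := le_min hx.1.2 (by linarith)
      linarith
    have hsub : Icc d e ⊆ Icc a b ∩ Ioo (x - ε) (x + ε) := by
      intro y hy
      refine ⟨⟨le_trans (le_max_left _ _) hy.1, le_trans hy.2 (min_le_left _ _)⟩, ?_, ?_⟩
      · have := le_trans (le_max_right _ _) hy.1; linarith
      · have := le_trans hy.2 (min_le_right _ _); linarith
    have hinjG : InjOn G (Icc d e) := by
      intro u hu w hw huw
      exact hinjHG (hsub hu) (hsub hw) (by simp [Function.comp, huw])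
    have hmoaG : MoA G (Icc d e) :=
      ContinuousOn.strictMonoOn_of_injOn_Icc' hde
        (hG.mono (hsub.trans Set.inter_subset_left)) hinjG
    have hsub2 : Icc a b ∩ Ioo (x - ε') (x + ε') ⊆ Icc d e := by
      intro y hy
      exact ⟨max_le hy.1.1 hy.2.1.le, le_min hy.1.2 hy.2.2.le⟩
    have := hx.2 ε' hε'pos
    rcases moa_mono hmoaG hsub2 with h' | h'
    exacts [this.1 h', this.2 h']
  exact ⟨fun h => key (Or.inl h), fun h => key (Or.inr h)⟩

/-- if near `x`, `g` is monotone and maps into a set where `φ` is monotone,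
then `x` is not a fort of `φ ∘ g`. -/
lemma not_fort_comp {x : ℝ} (T : Set ℝ) (hφ : MoA φ T)
    (h : ∃ ε > 0, MoA g (Icc a b ∩ Ioo (x - ε) (x + ε)) ∧
      Set.MapsTo g (Icc a b ∩ Ioo (x - ε) (x + ε)) T) :
    ¬ IsFort a b (φ ∘ g) x := by
  rcases h with ⟨ε, hε, hmoa, hmaps⟩
  exact not_fort_intro hε (moa_comp hφ hmoa hmaps)

lemma glue_mono {f : ℝ → ℝ} {u w x : ℝ} (h1 : StrictMonoOn f (Icc u w))
    (h2 : StrictMonoOn f (Icc w x)) (huw : u ≤ w) (hwx : w ≤ x) :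
    StrictMonoOn f (Icc u x) := by
  intro p hp q hq hpq
  rcases le_or_gt q w with hqw | hqw
  · exact h1 ⟨hp.1, hpq.le.trans hqw⟩ ⟨hq.1, hqw⟩ hpq
  · rcases le_or_gt w p with hwp | hwp
    · exact h2 ⟨hwp, hp.2⟩ ⟨hwp.trans hpq.le, hq.2⟩ hpq
    · exact lt_trans (h1 ⟨hp.1, hwp.le⟩ ⟨huw, le_refl w⟩ hwp)
        (h2 ⟨le_refl w, hwx⟩ ⟨hqw.le, hq.2⟩ hqw)

/-- local-to-global: no fort inside `(d,e)` implies strict monotonicity on `[d,e]`. -/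
lemma mono_of_fortFree (hc : ContinuousOn g (Icc a b)) {d e : ℝ} (hde : d ≤ e)
    (hsub : Icc d e ⊆ Icc a b) (hff : ∀ x ∈ Ioo d e, ¬ IsFort a b g x) :
    MoA g (Icc d e) := by
  rcases eq_or_lt_of_le hde with rfl | hde2
  · left
    intro p hp q hq hpq
    have hpd : p = d := le_antisymm hp.2 hp.1
    have hqd : q = d := le_antisymm hq.2 hq.1
    exact absurd hpq (by rw [hpd, hqd]; exact lt_irrefl _)
  · have hgc2 : ContinuousOn g (Icc d e) := hc.mono hsub
    have helper : forall x1, x1 ∈ Icc d e → ∀ x2 ∈ Icc d e, ∀ w ∈ Ioo x1 x2,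
        ∃ t1 ∈ Ioo x1 w, ∃ t2 ∈ Ioo w x2,
          (g t1 < g w ∧ g w < g t2) ∨ (g t2 < g w ∧ g w < g t1) := by
      intro x1 h1 x2 h2 w hw
      have hwde : w ∈ Ioo d e := ⟨lt_of_le_of_lt h1.1 hw.1, lt_of_lt_of_le hw.2 h2.2⟩
      have hwab : w ∈ Icc a b := hsub ⟨hwde.1.le, hwde.2.le⟩
      obtain ⟨ε, hε, hmoa⟩ := not_fort_elim hwab (hff w hwde)
      set t1 := max (w - ε / 2) ((x1 + w) / 2) with ht1
      set t2 := min (w + ε / 2) ((w + x2) / 2) with ht2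
      have ht1w : t1 < w := max_lt (by linarith) (by rcases hw with ⟨hA, hB⟩; linarith)
      have ht1x1 : x1 < t1 := lt_max_of_lt_right (by rcases hw with ⟨hA, hB⟩; linarith)
      have hwt2 : w < t2 := lt_min (by linarith) (by rcases hw with ⟨hA, hB⟩; linarith)
      have ht2x2 : t2 < x2 := min_lt_of_right_lt (by rcases hw with ⟨hA, hB⟩; linarith)
      have ht1N : t1 ∈ Icc a b ∩ Ioo (w - ε) (w + ε) := by
        refine ⟨hsub ⟨le_trans h1.1 ht1x1.le, le_trans ht1w.le hwde.2.le⟩, ?_, ?_⟩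
        · have := le_max_left (w - ε / 2) ((x1 + w) / 2); linarith
        · linarith
      have ht2N : t2 ∈ Icc a b ∩ Ioo (w - ε) (w + ε) := by
        refine ⟨hsub ⟨le_trans hwde.1.le hwt2.le, le_trans ht2x2.le h2.2⟩, ?_, ?_⟩
        · linarith
        · have := min_le_left (w + ε / 2) ((w + x2) / 2); linarith
      have hwN : w ∈ Icc a b ∩ Ioo (w - ε) (w + ε) := ⟨hwab, by constructor <;> linarith⟩
      refine ⟨t1, ⟨ht1x1, ht1w⟩, t2, ⟨hwt2, ht2x2⟩, ?_⟩
      rcases hmoa with h | h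
      · exact Or.inl ⟨h ht1N hwN ht1w, h hwN ht2N hwt2⟩
      · exact Or.inr ⟨h hwN ht2N hwt2, h ht1N hwN ht1w⟩
    have key : ∀ x1 ∈ Icc d e, ∀ x2 ∈ Icc d e, x1 < x2 → g x1 ≠ g x2 := by
      intro x1 h1 x2 h2 hlt heq
      have hsub12 : Icc x1 x2 ⊆ Icc d e := Icc_subset_Icc h1.1 h2.2
      by_cases hconst : ∀ w ∈ Icc x1 x2, g w = g x1
      · set w := (x1 + x2) / 2 with hwdef
        have hw : w ∈ Ioo x1 x2 := ⟨by rw [hwdef]; linarith, by rw [hwdef]; linarith⟩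
        obtain ⟨t1, ht1, t2, ht2, hcomp⟩ := helper x1 h1 x2 h2 w hw
        have e1 : g t1 = g x1 := hconst t1 ⟨ht1.1.le, le_trans ht1.2.le hw.2.le⟩
        have e2 : g t2 = g x1 := hconst t2 ⟨le_trans hw.1.le ht2.1.le, ht2.2.le⟩
        have ew : g w = g x1 := hconst w ⟨hw.1.le, hw.2.le⟩
        rcases hcomp with ⟨hA, hB⟩ | ⟨hA, hB⟩
        · rw [e1, ew] at hA; exact lt_irrefl _ hA
        · rw [e2, ew] at hA; exact lt_irrefl _ hA
      · push_neg at hconst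
        obtain ⟨w0, hw0, hneq⟩ := hconst
        rcases lt_or_gt_of_ne hneq with hlt0 | hgt0
        · obtain ⟨w, hwmem, hmin⟩ := isCompact_Icc.exists_isMinOn ⟨x1, left_mem_Icc.mpr hlt.le⟩
            (hgc2.mono hsub12)
          have hgw : g w < g x1 := lt_of_le_of_lt (hmin hw0) hlt0
          have hw1 : w ≠ x1 := fun h => absurd hgw (by rw [h]; exact lt_irrefl _)
          have hw2 : w ≠ x2 := fun h => absurd hgw (by rw [h, ← heq]; exact lt_irrefl _)
          have hwIoo : w ∈ Ioo x1 x2 :=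
            ⟨lt_of_le_of_ne hwmem.1 (Ne.symm hw1), lt_of_le_of_ne hwmem.2 hw2⟩
          obtain ⟨t1, ht1, t2, ht2, hcomp⟩ := helper x1 h1 x2 h2 w hwIoo
          have ht1m : t1 ∈ Icc x1 x2 := ⟨ht1.1.le, le_trans ht1.2.le hwIoo.2.le⟩
          have ht2m : t2 ∈ Icc x1 x2 := ⟨le_trans hwIoo.1.le ht2.1.le, ht2.2.le⟩
          rcases hcomp with ⟨hA, hB⟩ | ⟨hA, hB⟩
          · exact absurd (hmin ht1m) (not_le.mpr hA)
          · exact absurd (hmin ht2m) (not_le.mpr hA)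
        · obtain ⟨w, hwmem, hmax⟩ := isCompact_Icc.exists_isMaxOn ⟨x1, left_mem_Icc.mpr hlt.le⟩
            (hgc2.mono hsub12)
          have hgw : g x1 < g w := lt_of_lt_of_le hgt0 (hmax hw0)
          have hw1 : w ≠ x1 := fun h => absurd hgw (by rw [h]; exact lt_irrefl _)
          have hw2 : w ≠ x2 := fun h => absurd hgw (by rw [h, ← heq]; exact lt_irrefl _)
          have hwIoo : w ∈ Ioo x1 x2 :=
            ⟨lt_of_le_of_ne hwmem.1 (Ne.symm hw1), lt_of_le_of_ne hwmem.2 hw2⟩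
          obtain ⟨t1, ht1, t2, ht2, hcomp⟩ := helper x1 h1 x2 h2 w hwIoo
          have ht1m : t1 ∈ Icc x1 x2 := ⟨ht1.1.le, le_trans ht1.2.le hwIoo.2.le⟩
          have ht2m : t2 ∈ Icc x1 x2 := ⟨le_trans hwIoo.1.le ht2.1.le, ht2.2.le⟩
          rcases hcomp with ⟨hA, hB⟩ | ⟨hA, hB⟩
          · exact absurd (hmax ht2m) (not_le.mpr hB)
          · exact absurd (hmax ht1m) (not_le.mpr hB)
    have hinj : InjOn g (Icc d e) := by
      intro x1 h1 x2 h2 heq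
      rcases lt_trichotomy x1 x2 with h | h | h
      · exact absurd heq (key _ h1 _ h2 h)
      · exact h
      · exact absurd heq.symm (key _ h2 _ h1 h)
    exact ContinuousOn.strictMonoOn_of_injOn_Icc' hde hgc2 hinj

lemma exists_lap (hPM : PMFun a b F v c) {x : ℝ} (hx : x ∈ Icc a b) (hxb : x ≠ b) :
    ∃ i ≤ v, c i ≤ x ∧ x < c (i + 1) := by
  classical
  set P : ℕ → Prop := fun j => c j ≤ x with hP
  have hP0 : P 0 := by simp only [hP, hPM.c_zero]; exact hx.1
  set i := Nat.findGreatest P (v + 1) with hi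
  have hile : i ≤ v + 1 := Nat.findGreatest_le (v + 1)
  have hPi : P i := Nat.findGreatest_spec (Nat.zero_le _) hP0
  have hiv : i ≤ v := by
    rcases Nat.lt_or_ge i (v + 1) with h | h
    · exact Nat.lt_succ_iff.mp h
    · exfalso
      have hieq : i = v + 1 := le_antisymm hile h
      have hcb : c (v + 1) ≤ x := hieq ▸ hPi
      rw [hPM.c_last] at hcb
      exact hxb (le_antisymm hx.2 hcb)
  refine ⟨i, hiv, hPi, ?_⟩
  by_contra h
  push_neg at h
  exact Nat.findGreatest_is_greatest (Nat.lt_succ_self i) (Nat.succ_le_succ hiv) h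

lemma subset_lap (hPM : PMFun a b F v c) {p q : ℝ} (hp : a ≤ p) (hpq : p ≤ q) (hq : q ≤ b)
    (hforts : ∀ j, 1 ≤ j → j ≤ v → c j ∉ Ioo p q) :
    ∃ i ≤ v, Icc p q ⊆ Icc (c i) (c (i + 1)) := by
  by_cases hpb : p = b
  · refine ⟨v, le_rfl, ?_⟩
    intro y hy
    have hyb : y = b := le_antisymm (hy.2.trans hq) (hpb ▸ hy.1)
    exact ⟨by rw [hyb, ← hPM.c_last]; exact (hPM.c_mono v le_rfl).le,
      by rw [hyb, hPM.c_last]⟩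
  · obtain ⟨i, hiv, h1, h2⟩ := exists_lap hPM ⟨hp, hpq.trans hq⟩ hpb
    refine ⟨i, hiv, ?_⟩
    have hqe : q ≤ c (i + 1) := by
      by_contra h
      push_neg at h
      rcases Nat.lt_or_ge (i + 1) (v + 1) with hc1 | hc1
      · exact hforts (i + 1) (Nat.succ_le_succ (Nat.zero_le _)) (Nat.lt_succ_iff.mp hc1)
          ⟨h2, h⟩
      · have hieq : i + 1 = v + 1 := le_antisymm (Nat.succ_le_succ hiv) hc1
        rw [hieq, hPM.c_last] at h
        exact absurd hq (not_le.mpr h)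
    exact Icc_subset_Icc h1 hqe

lemma F_moa_near (hPM : PMFun a b F v c) {y : ℝ} (hy : y ∈ Icc a b)
    (hne : ∀ j, 1 ≤ j → j ≤ v → y ≠ c j) :
    ∃ η > 0, MoA F (Icc a b ∩ Ioo (y - η) (y + η)) := by
  by_cases hyb : y = b
  · refine ⟨b - c v, ?_, ?_⟩
    · have h := hPM.c_mono v le_rfl; rw [hPM.c_last] at h; linarith
    · refine moa_mono (hPM.lap_mono v le_rfl) ?_
      intro u hu
      constructor
      · have h2 := hu.2.1; rw [hyb] at h2; linarith
      · rw [hPM.c_last, ← hyb]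
        have := hu.1.2
        rw [← hyb] at this; exact this
  · obtain ⟨i, hiv, h1, h2⟩ := exists_lap hPM hy hyb
    rcases eq_or_lt_of_le h1 with heq | hlt
    · have hi0 : i = 0 := by
        by_contra h
        exact hne i (Nat.one_le_iff_ne_zero.mpr h) hiv heq.symm
      refine ⟨c (i + 1) - y, by linarith, ?_⟩
      refine moa_mono (hPM.lap_mono i hiv) ?_
      intro u hu
      constructor
      · rw [hi0, hPM.c_zero]; exact hu.1.1
      · have h3 := hu.2.2; linarith
    · refine ⟨min (y - c i) (c (i + 1) - y), by
        have hA : (0:ℝ) < y - c i := by linarith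
        have hB : (0:ℝ) < c (i + 1) - y := by linarith
        positivity, ?_⟩
      refine moa_mono (hPM.lap_mono i hiv) ?_
      intro u hu
      constructor
      · have h3 := hu.2.1
        have hm := min_le_left (y - c i) (c (i + 1) - y)
        linarith
      · have h3 := hu.2.2
        have hm := min_le_right (y - c i) (c (i + 1) - y)
        linarith

lemma cont_iter (hPM : PMFun a b F v c) (k : ℕ) : ContinuousOn (F^[k]) (Icc a b) := by
  induction k with
  | zero => simpa using continuousOn_id
  | succ k ih =>
    rw [Function.iterate_succ']
    exact hPM.cont.comp ih (hPM.maps.iterate k)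

lemma cover_lap (hPM : PMFun a b F v c) {x : ℝ} (hx : x ∈ Icc a b) :
    ∃ i ≤ v, x ∈ Icc (c i) (c (i + 1)) := by
  by_cases hxb : x = b
  · exact ⟨v, le_rfl, by rw [hxb, ← hPM.c_last]; exact ⟨(hPM.c_mono v le_rfl).le, le_rfl⟩⟩
  · obtain ⟨i, hiv, h1, h2⟩ := exists_lap hPM hx hxb
    exact ⟨i, hiv, h1, h2.le⟩

lemma finite_gap {T : Set ℝ} (hfin : T.Finite) {x : ℝ} (hx : x ∉ T) :
    ∃ γ > 0, ∀ u ∈ T, γ ≤ |u - x| := by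
  classical
  rcases T.eq_empty_or_nonempty with rfl | hne
  · exact ⟨1, one_pos, by simp⟩
  · have hTf : hfin.toFinset.Nonempty := by
      rwa [Set.Finite.toFinset_nonempty]
    refine ⟨hfin.toFinset.inf' hTf (fun u => |u - x|), ?_,
      fun u hu => Finset.inf'_le _ (hfin.mem_toFinset.mpr hu)⟩
    obtain ⟨u, hu, he⟩ := Finset.exists_mem_eq_inf' hTf (fun u => |u - x|)
    rw [he]
    exact abs_pos.mpr (sub_ne_zero.mpr (fun h => hx (h ▸ hfin.mem_toFinset.mp hu)))

lemma preimage_finite (hPM : PMFun a b F v c) (k : ℕ) (y : ℝ) :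
    (Icc a b ∩ F^[k] ⁻¹' {y}).Finite := by
  induction k generalizing y with
  | zero =>
    apply Set.Finite.subset (Set.finite_singleton y)
    intro u hu
    simpa using hu.2
  | succ k ih =>
    have hone : ∀ i, i ≤ v → (Icc (c i) (c (i + 1)) ∩ F ⁻¹' {y}).Subsingleton := by
      intro i hi u hu w hw
      have hinj : InjOn F (Icc (c i) (c (i + 1))) := by
        rcases hPM.lap_mono i hi with h | h
        exacts [h.injOn, h.injOn]
      have : F u = F w := by
        have h1 : F u = y := hu.2
        have h2 : F w = y := hw.2
        rw [h1, h2]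
      exact hinj hu.1 hw.1 this
    have hZ : (Icc a b ∩ F ⁻¹' {y}).Finite := by
      apply Set.Finite.subset (Set.Finite.biUnion (Set.finite_Icc (0:ℕ) v)
        (fun i hi => ((hone i (Set.mem_Icc.mp hi).2).finite)))
      intro x hx
      obtain ⟨i, hiv, hmem⟩ := cover_lap hPM hx.1
      exact Set.mem_biUnion (Set.mem_Icc.mpr ⟨Nat.zero_le _, hiv⟩) ⟨hmem, hx.2⟩
    apply Set.Finite.subset (hZ.biUnion (fun z _ => ih z))
    intro x hx
    have hxI : x ∈ Icc a b := hx.1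
    have hz : F^[k] x ∈ Icc a b := (hPM.maps.iterate k) hxI
    have heq : F (F^[k] x) = y := by
      have h0 : F^[k + 1] x = y := hx.2
      rw [Function.iterate_succ_apply'] at h0
      exact h0
    exact Set.mem_biUnion (⟨hz, heq⟩ : F^[k] x ∈ Icc a b ∩ F ⁻¹' {y})
      ⟨hxI, rfl⟩

lemma forts_finite (hPM : PMFun a b F v c) (k : ℕ) :
    {x | IsFort a b (F^[k]) x}.Finite := by
  induction k with
  | zero =>
    apply Set.Finite.subset Set.finite_empty
    intro x hx
    exfalso
    refine not_fort_intro one_pos (Or.inl ?_) hx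
    intro p hp q hq hpq
    simpa using hpq
  | succ k ih =>
    apply Set.Finite.subset (ih.union (Set.Finite.biUnion (Set.finite_Icc 1 v)
      (fun j _ => preimage_finite hPM k (c j))))
    intro x hx
    rw [Set.mem_union]
    by_contra hmem
    push_neg at hmem
    obtain ⟨hnf, hnU⟩ := hmem
    have hxI : x ∈ Icc a b := hx.1
    obtain ⟨ε₀, hε₀, hmoa0⟩ := not_fort_elim hxI hnf
    have hyI : F^[k] x ∈ Icc a b := (hPM.maps.iterate k) hxI
    have hne : ∀ j, 1 ≤ j → j ≤ v → F^[k] x ≠ c j := by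
      intro j h1 h2 heq
      exact hnU (Set.mem_biUnion (Set.mem_Icc.mpr ⟨h1, h2⟩)
        ⟨hxI, by rw [Set.mem_preimage, Set.mem_singleton_iff, heq]⟩)
    obtain ⟨η, hη, hFmoa⟩ := F_moa_near hPM hyI hne
    have hcw : ContinuousWithinAt (F^[k]) (Icc a b) x := (cont_iter hPM k) x hxI
    obtain ⟨δ₁, hδ₁, hδprop⟩ := Metric.continuousWithinAt_iff.mp hcw η hη
    set ε := min ε₀ δ₁ with hε
    have hεpos : 0 < ε := lt_min hε₀ hδ₁
    have hnot : ¬ IsFort a b (F ∘ F^[k]) x := by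
      apply not_fort_comp (Icc a b ∩ Ioo (F^[k] x - η) (F^[k] x + η)) hFmoa
      refine ⟨ε, hεpos, moa_mono hmoa0 (Set.inter_subset_inter_right _
        (Ioo_subset_Ioo (by have h0 := min_le_left ε₀ δ₁; simp only [hε]; linarith)
          (by have h0 := min_le_left ε₀ δ₁; simp only [hε]; linarith))), ?_⟩
      · intro u hu
        refine ⟨(hPM.maps.iterate k) hu.1, ?_⟩
        have hd : dist (F^[k] u) (F^[k] x) < η := by
          apply hδprop hu.1
          rw [Real.dist_eq]
          rw [abs_lt]
          obtain ⟨hu1, hu2⟩ := hu.2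
          have := min_le_right ε₀ δ₁
          constructor <;> linarith
        rw [Real.dist_eq, abs_lt] at hd
        constructor <;> linarith [hd.1, hd.2]
    have hx2 : IsFort a b (F^[k + 1]) x := hx
    rw [Function.iterate_succ'] at hx2
    exact hnot hx2

lemma image_infinite (hPM : PMFun a b F v c) (k : ℕ) :
    (F^[k] '' Icc a b).Infinite := by
  induction k with
  | zero => simpa using Set.Icc_infinite hPM.lt
  | succ k ih =>
    have hJI : F^[k] '' Icc a b ⊆ Icc a b := by
      intro y hy
      obtain ⟨x, hx, e⟩ := hy
      exact e ▸ (hPM.maps.iterate k) hx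
    have hcov : F^[k] '' Icc a b ⊆
        ⋃ i ∈ Set.Icc 0 v, (F^[k] '' Icc a b ∩ Icc (c i) (c (i + 1))) := by
      intro y hy
      obtain ⟨i, hiv, hmem⟩ := cover_lap hPM (hJI hy)
      exact Set.mem_biUnion (Set.mem_Icc.mpr ⟨Nat.zero_le _, hiv⟩) ⟨hy, hmem⟩
    have hex : ∃ i ≤ v, (F^[k] '' Icc a b ∩ Icc (c i) (c (i + 1))).Infinite := by
      by_contra h
      push_neg at h
      have hfin : (F^[k] '' Icc a b).Finite :=
        Set.Finite.subset (Set.Finite.biUnion (Set.finite_Icc (0:ℕ) v)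
          (fun i hi => h i (Set.mem_Icc.mp hi).2)) hcov
      exact ih hfin
    obtain ⟨i, hiv, hinf⟩ := hex
    have hinj : InjOn F (F^[k] '' Icc a b ∩ Icc (c i) (c (i + 1))) := by
      rcases hPM.lap_mono i hiv with h | h
      exacts [h.injOn.mono Set.inter_subset_right, h.injOn.mono Set.inter_subset_right]
    have himg : (F '' (F^[k] '' Icc a b ∩ Icc (c i) (c (i + 1)))).Infinite := hinf.image hinj
    apply Set.Infinite.mono ?_ himg
    rw [Function.iterate_succ', Set.image_comp]
    exact Set.image_mono Set.inter_subset_left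

lemma smon_neg {s : Set ℝ} : StrictMonoOn (fun y => -(g y)) s ↔ StrictAntiOn g s := by
  constructor <;> intro h p hp q hq hpq <;> have h2 := h hp hq hpq <;>
    simp only [neg_lt_neg_iff] at h2 ⊢ <;> exact h2

lemma santi_neg {s : Set ℝ} : StrictAntiOn (fun y => -(g y)) s ↔ StrictMonoOn g s := by
  constructor <;> intro h p hp q hq hpq <;> have h2 := h hp hq hpq <;>
    simp only [neg_lt_neg_iff] at h2 ⊢ <;> exact h2

lemma moa_neg {s : Set ℝ} : MoA (fun y => -(g y)) s ↔ MoA g s := by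
  unfold MoA
  rw [smon_neg, santi_neg]
  exact Or.comm

lemma fort_neg {x : ℝ} : IsFort a b (fun y => -(g y)) x ↔ IsFort a b g x := by
  constructor <;> intro h <;> refine ⟨h.1, fun ε hε => ?_⟩ <;>
    obtain ⟨h1, h2⟩ := h.2 ε hε
  · exact ⟨fun hm => h2 (santi_neg.mpr hm), fun hm => h1 (smon_neg.mpr hm)⟩
  · exact ⟨fun hm => h2 (smon_neg.mp hm), fun hm => h1 (santi_neg.mp hm)⟩

lemma crossing (hc : ContinuousOn g (Icc a b)) (hfin : {x | IsFort a b g x}.Finite)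
    {s t z : ℝ} (hs : s ∈ Icc a b) (ht : t ∈ Icc a b) (hst : s < t)
    (h1 : g s < z) (h2 : z < g t) :
    ∃ x0 δ, 0 < δ ∧ Icc (x0 - δ) (x0 + δ) ⊆ Icc a b ∧
      MoA g (Icc (x0 - δ) (x0 + δ)) ∧ g x0 = z := by
  have construct : ∀ s t : ℝ, s ∈ Icc a b → t ∈ Icc a b → s < t →
      g s < z → z < g t →
      ∃ x0, x0 ∈ Ioo s t ∧ g x0 = z ∧ ∀ w ∈ Ico s x0, g w < z := by
    intro s t hs ht hst h1 h2
    set B := {x | x ∈ Icc s t ∧ z ≤ g x} with hB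
    have hsub : Icc s t ⊆ Icc a b := Icc_subset_Icc hs.1 ht.2
    have hBclosed : IsClosed B := by
      have hBeq : B = Icc s t ∩ g ⁻¹' (Ici z) := by
        ext u
        simp [hB, Set.mem_Ici, and_comm]
      rw [hBeq]
      exact (hc.mono hsub).preimage_isClosed_of_isClosed isClosed_Icc isClosed_Ici
    have hBne : B.Nonempty := ⟨t, ⟨⟨hst.le, le_rfl⟩, h2.le⟩⟩
    have hBbdd : BddBelow B := (bddBelow_Icc : BddBelow (Icc s t)).mono (fun u hu => hu.1)
    set x0 := sInf B with hx0
    have hx0B : x0 ∈ B := hBclosed.csInf_mem hBne hBbdd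
    have hx0t : x0 ≤ t := csInf_le hBbdd ⟨⟨hst.le, le_rfl⟩, h2.le⟩
    have hlow : ∀ w ∈ Ico s x0, g w < z := by
      intro w hw
      by_contra hcon
      push_neg at hcon
      exact absurd (csInf_le hBbdd ⟨⟨hw.1, hw.2.le.trans hx0t⟩, hcon⟩) (not_le.mpr hw.2)
    have hsx0 : s < x0 := by
      rcases eq_or_lt_of_le hx0B.1.1 with h | h
      · exfalso; rw [← h] at hx0B; exact absurd hx0B.2 (not_le.mpr h1)
      · exact h
    have hgx0 : g x0 = z := by
      have hivt : z ∈ Icc (g s) (g x0) := ⟨h1.le, hx0B.2⟩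
      obtain ⟨w, hwmem, hgw⟩ := intermediate_value_Icc hx0B.1.1
        (hc.mono (Icc_subset_Icc hs.1 (hx0B.1.2.trans ht.2))) hivt
      have hwB : w ∈ B := ⟨⟨hwmem.1, hwmem.2.trans hx0B.1.2⟩, hgw.ge⟩
      have hle : x0 ≤ w := csInf_le hBbdd hwB
      have hwx0 : w = x0 := le_antisymm hwmem.2 hle
      rw [← hwx0]; exact hgw
    have hx0lt : x0 < t := by
      rcases eq_or_lt_of_le hx0t with h | h
      · exfalso; rw [h] at hgx0; exact absurd hgx0.symm (ne_of_lt h2)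
      · exact h
    exact ⟨x0, ⟨hsx0, hx0lt⟩, hgx0, hlow⟩
  have finish : ∀ x0 s t : ℝ, s ∈ Icc a b → t ∈ Icc a b → x0 ∈ Ioo s t → g x0 = z →
      ¬ IsFort a b g x0 →
      ∃ x0 δ, 0 < δ ∧ Icc (x0 - δ) (x0 + δ) ⊆ Icc a b ∧
        MoA g (Icc (x0 - δ) (x0 + δ)) ∧ g x0 = z := by
    intro x0 s t hs ht hx0 hgx0 hnf
    have hx0ab : x0 ∈ Icc a b := ⟨hs.1.trans hx0.1.le, hx0.2.le.trans ht.2⟩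
    obtain ⟨ε, hε, hmoa⟩ := not_fort_elim hx0ab hnf
    have hax0 : a < x0 := lt_of_le_of_lt hs.1 hx0.1
    have hx0b : x0 < b := lt_of_lt_of_le hx0.2 ht.2
    set δ := min (ε / 2) (min (x0 - a) (b - x0)) with hδ
    have hδ1 : δ ≤ ε / 2 := min_le_left _ _
    have hδ2 : δ ≤ x0 - a := le_trans (min_le_right _ _) (min_le_left _ _)
    have hδ3 : δ ≤ b - x0 := le_trans (min_le_right _ _) (min_le_right _ _)
    have hδpos : 0 < δ := lt_min (by linarith) (lt_min (by linarith) (by linarith))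
    have hsubab : Icc (x0 - δ) (x0 + δ) ⊆ Icc a b := by
      intro u hu
      obtain ⟨hu1, hu2⟩ := hu
      constructor <;> linarith
    refine ⟨x0, δ, hδpos, hsubab, moa_mono hmoa ?_, hgx0⟩
    intro u hu
    obtain ⟨hu1, hu2⟩ := hu
    exact ⟨hsubab ⟨hu1, hu2⟩, by constructor <;> linarith⟩
  have main : ∀ n : ℕ, ∀ s t : ℝ, s ∈ Icc a b → t ∈ Icc a b → s < t →
      g s < z → z < g t → ({x | IsFort a b g x} ∩ Ioo s t).ncard ≤ n →
      ∃ x0 δ, 0 < δ ∧ Icc (x0 - δ) (x0 + δ) ⊆ Icc a b ∧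
        MoA g (Icc (x0 - δ) (x0 + δ)) ∧ g x0 = z := by
    intro n
    induction n with
    | zero =>
      intro s t hs ht hst h1 h2 hcard
      obtain ⟨x0, hx0mem, hgx0, hlow⟩ := construct s t hs ht hst h1 h2
      apply finish x0 s t hs ht hx0mem hgx0
      intro hf
      have hmem : x0 ∈ {x | IsFort a b g x} ∩ Ioo s t := ⟨hf, hx0mem⟩
      have hzero : ({x | IsFort a b g x} ∩ Ioo s t).ncard = 0 := Nat.le_zero.mp hcard
      rw [(Set.ncard_eq_zero (hfin.inter_of_left _)).mp hzero] at hmem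
      exact hmem
    | succ n ih =>
      intro s t hs ht hst h1 h2 hcard
      obtain ⟨x0, hx0mem, hgx0, hlow⟩ := construct s t hs ht hst h1 h2
      by_cases hf : IsFort a b g x0
      · by_cases hex : ∃ w ∈ Ioc x0 t, g w < z
        · obtain ⟨s', hs'mem, hgs'⟩ := hex
          have hs'ab : s' ∈ Icc a b :=
            ⟨(hs.1.trans hx0mem.1.le).trans hs'mem.1.le, hs'mem.2.trans ht.2⟩
          have hs't : s' < t := lt_of_le_of_ne hs'mem.2
            (fun h => absurd (h ▸ hgs') (not_lt.mpr h2.le))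
          apply ih s' t hs'ab ht hs't hgs' h2
          have hss : {x | IsFort a b g x} ∩ Ioo s' t ⊂ {x | IsFort a b g x} ∩ Ioo s t := by
            constructor
            · intro u hu
              exact ⟨hu.1, ⟨lt_trans (lt_trans hx0mem.1 hs'mem.1) hu.2.1, hu.2.2⟩⟩
            · intro hsub2
              have hx0in : x0 ∈ {x | IsFort a b g x} ∩ Ioo s t := ⟨hf, hx0mem⟩
              exact absurd (hsub2 hx0in).2.1 (not_lt.mpr hs'mem.1.le)
          have hlt := Set.ncard_lt_ncard hss (hfin.inter_of_left _)
          omega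
        · exfalso
          push_neg at hex
          set T := ({x | IsFort a b g x} \ {x0}) ∪ {s, t} with hT
          have hTfin : T.Finite := (hfin.diff : ({x | IsFort a b g x} \ {x0}).Finite).union ((Set.finite_singleton t).insert s)
          have hxnot : x0 ∉ T := by
            intro h
            rcases (Set.mem_union x0 _ _).mp h with h | h
            · exact h.2 rfl
            · rcases Set.mem_insert_iff.mp h with h | h
              · exact absurd h.symm (ne_of_lt hx0mem.1)
              · rw [Set.mem_singleton_iff] at h
                exact absurd h (ne_of_lt hx0mem.2)
          obtain ⟨γ0, hγ0, hgap⟩ := finite_gap hTfin hxnot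
          set γ := min (γ0 / 2) (min ((x0 - s) / 2) ((t - x0) / 2)) with hγ
          have hγ1 : γ ≤ γ0 / 2 := min_le_left _ _
          have hγ2 : γ ≤ (x0 - s) / 2 := le_trans (min_le_right _ _) (min_le_left _ _)
          have hγ3 : γ ≤ (t - x0) / 2 := le_trans (min_le_right _ _) (min_le_right _ _)
          have hγpos : 0 < γ := by
            obtain ⟨hA, hB⟩ := hx0mem
            exact lt_min (by linarith) (lt_min (by linarith) (by linarith))
          have hsab : s ∈ Icc a b := hs
          have hx0s : s < x0 := hx0mem.1
          have hx0t : x0 < t := hx0mem.2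
          have hff1 : ∀ u ∈ Ioo (x0 - γ) x0, ¬ IsFort a b g u := by
            intro u hu hufort
            have hune : u ≠ x0 := ne_of_lt hu.2
            have hmem : u ∈ T := Set.mem_union_left _ ⟨hufort, hune⟩
            have hgapu := hgap u hmem
            have habs : |u - x0| < γ0 := by
              rw [abs_lt]
              obtain ⟨hA, hB⟩ := hu
              constructor <;> linarith
            linarith
          have hff2 : ∀ u ∈ Ioo x0 (x0 + γ), ¬ IsFort a b g u := by
            intro u hu hufort
            have hune : u ≠ x0 := (ne_of_lt hu.1).symm
            have hmem : u ∈ T := Set.mem_union_left _ ⟨hufort, hune⟩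
            have hgapu := hgap u hmem
            have habs : |u - x0| < γ0 := by
              rw [abs_lt]
              obtain ⟨hA, hB⟩ := hu
              constructor <;> linarith
            linarith
          have hsubL : Icc (x0 - γ) x0 ⊆ Icc a b := by
            intro u hu
            obtain ⟨hu1, hu2⟩ := hu
            have h1' := hs.1
            have h2' := ht.2
            constructor <;> linarith
          have hsubR : Icc x0 (x0 + γ) ⊆ Icc a b := by
            intro u hu
            obtain ⟨hu1, hu2⟩ := hu
            have h1' := hs.1
            have h2' := ht.2
            constructor <;> linarith
          have moaL := mono_of_fortFree hc (by linarith : x0 - γ ≤ x0) hsubL hff1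
          have moaR := mono_of_fortFree hc (by linarith : x0 ≤ x0 + γ) hsubR hff2
          have hLmono : StrictMonoOn g (Icc (x0 - γ) x0) := by
            rcases moaL with h | h
            · exact h
            · exfalso
              have hend : g (x0 - γ) > g x0 :=
                h ⟨le_rfl, by linarith⟩ ⟨by linarith, le_rfl⟩ (by linarith)
              have hlow' : g (x0 - γ) < z := hlow (x0 - γ) ⟨by linarith, by linarith⟩
              rw [hgx0] at hend
              linarith
          have hRmono : StrictMonoOn g (Icc x0 (x0 + γ)) := by
            rcases moaR with h | h
            · exact h
            · exfalso
              have hend : g x0 > g (x0 + γ) :=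
                h ⟨le_rfl, by linarith⟩ ⟨by linarith, le_rfl⟩ (by linarith)
              have hhi : z ≤ g (x0 + γ) := hex (x0 + γ) ⟨by linarith, by linarith⟩
              rw [hgx0] at hend
              linarith
          have hglue := glue_mono hLmono hRmono (by linarith) (by linarith)
          exact (hf.2 γ hγpos).1 (hglue.mono (fun u hu => ⟨hu.2.1.le, hu.2.2.le⟩))
      · exact finish x0 s t hs ht hx0mem hgx0 hf
  exact main (({x | IsFort a b g x} ∩ Ioo s t).ncard) s t hs ht hst h1 h2 le_rfl

lemma crossing' (hc : ContinuousOn g (Icc a b)) (hfin : {x | IsFort a b g x}.Finite)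
    {s t z : ℝ} (hs : s ∈ Icc a b) (ht : t ∈ Icc a b) (hst : s < t)
    (h : g s < z ∧ z < g t ∨ g t < z ∧ z < g s) :
    ∃ x0 δ, 0 < δ ∧ Icc (x0 - δ) (x0 + δ) ⊆ Icc a b ∧
      MoA g (Icc (x0 - δ) (x0 + δ)) ∧ g x0 = z := by
  rcases h with ⟨hA, hB⟩ | ⟨hA, hB⟩
  · exact crossing hc hfin hs ht hst hA hB
  · have hseteq : {x | IsFort a b (fun y => -(g y)) x} = {x | IsFort a b g x} := by
      ext u
      exact fort_neg
    have hfin' : {x | IsFort a b (fun y => -(g y)) x}.Finite := by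
      rw [hseteq]; exact hfin
    obtain ⟨x0, δ, hδ, hsub, hmoa, hgx0⟩ :=
      crossing (g := fun y => -(g y)) (z := -z) hc.neg hfin' hs ht hst
        (neg_lt_neg hB) (neg_lt_neg hA)
    refine ⟨x0, δ, hδ, hsub, moa_neg.mp hmoa, ?_⟩
    have hval : -(g x0) = -z := hgx0
    linarith

lemma moa_transfer {I' J : Set ℝ} (hg : MoA g I') (hJ : J ⊆ g '' I')
    (hcomp : MoA (φ ∘ g) I') : MoA φ J := by
  have hlt1 : StrictMonoOn g I' → ∀ x1 ∈ I', ∀ x2 ∈ I', g x1 < g x2 → x1 < x2 := by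
    intro hm x1 h1 x2 h2 hlt
    rcases lt_trichotomy x1 x2 with h | h | h
    · exact h
    · exact absurd hlt (by rw [h]; exact lt_irrefl _)
    · exact absurd (hm h2 h1 h) (not_lt.mpr hlt.le)
  have hlt2 : StrictAntiOn g I' → ∀ x1 ∈ I', ∀ x2 ∈ I', g x1 < g x2 → x2 < x1 := by
    intro hm x1 h1 x2 h2 hlt
    rcases lt_trichotomy x2 x1 with h | h | h
    · exact h
    · exact absurd hlt (by rw [h]; exact lt_irrefl _)
    · exact absurd (hm h1 h2 h) (not_lt.mpr hlt.le)
  rcases hg with hgm | hgm <;> rcases hcomp with hcm | hcm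
  · left
    intro y1 hy1 y2 hy2 hlt
    obtain ⟨x1, hx1, e1⟩ := hJ hy1
    obtain ⟨x2, hx2, e2⟩ := hJ hy2
    have hx12 : x1 < x2 := hlt1 hgm x1 hx1 x2 hx2 (by rw [e1, e2]; exact hlt)
    have h3 := hcm hx1 hx2 hx12
    simp only [Function.comp] at h3
    rwa [e1, e2] at h3
  · right
    intro y1 hy1 y2 hy2 hlt
    obtain ⟨x1, hx1, e1⟩ := hJ hy1
    obtain ⟨x2, hx2, e2⟩ := hJ hy2
    have hx12 : x1 < x2 := hlt1 hgm x1 hx1 x2 hx2 (by rw [e1, e2]; exact hlt)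
    have h3 := hcm hx1 hx2 hx12
    simp only [Function.comp] at h3
    rwa [e1, e2] at h3
  · right
    intro y1 hy1 y2 hy2 hlt
    obtain ⟨x1, hx1, e1⟩ := hJ hy1
    obtain ⟨x2, hx2, e2⟩ := hJ hy2
    have hx12 : x2 < x1 := hlt2 hgm x1 hx1 x2 hx2 (by rw [e1, e2]; exact hlt)
    have h3 := hcm hx2 hx1 hx12
    simp only [Function.comp] at h3
    rwa [e1, e2] at h3
  · left
    intro y1 hy1 y2 hy2 hlt
    obtain ⟨x1, hx1, e1⟩ := hJ hy1
    obtain ⟨x2, hx2, e2⟩ := hJ hy2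
    have hx12 : x2 < x1 := hlt2 hgm x1 hx1 x2 hx2 (by rw [e1, e2]; exact hlt)
    have h3 := hcm hx2 hx1 hx12
    simp only [Function.comp] at h3
    rwa [e1, e2] at h3

lemma fort_pullback (hgc : ContinuousOn g (Icc a b)) {x0 δ z : ℝ} (hδ : 0 < δ)
    (hsub : Icc (x0 - δ) (x0 + δ) ⊆ Icc a b) (hmoa : MoA g (Icc (x0 - δ) (x0 + δ)))
    (hz : g x0 = z) (hfort : IsFort a b φ z) : IsFort a b (φ ∘ g) x0 := by
  have hx0ab : x0 ∈ Icc a b := hsub ⟨by linarith, by linarith⟩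
  refine ⟨hx0ab, fun ε hε => ?_⟩
  set ε' := min ε δ with hε'
  have hε'pos : 0 < ε' := lt_min hε hδ
  set δ' := ε' / 2 with hδ'
  have hε'ε : ε' ≤ ε := min_le_left _ _
  have hε'δ : ε' ≤ δ := min_le_right _ _
  have hδ'pos : 0 < δ' := by positivity
  have hI'sub : Icc (x0 - δ') (x0 + δ') ⊆ Icc (x0 - δ) (x0 + δ) :=
    Icc_subset_Icc (by linarith) (by linarith)
  have hI'ab : Icc (x0 - δ') (x0 + δ') ⊆ Icc a b := hI'sub.trans hsub
  have hI'N : Icc (x0 - δ') (x0 + δ') ⊆ Icc a b ∩ Ioo (x0 - ε) (x0 + ε) := by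
    intro u hu
    obtain ⟨hu1, hu2⟩ := hu
    exact ⟨hI'ab ⟨hu1, hu2⟩, by constructor <;> linarith⟩
  have hgc' : ContinuousOn g (Icc (x0 - δ') (x0 + δ')) := hgc.mono hI'ab
  have hmoa' : MoA g (Icc (x0 - δ') (x0 + δ')) := moa_mono hmoa hI'sub
  have hkey : ∃ u w, u < z ∧ z < w ∧ Icc u w ⊆ g '' Icc (x0 - δ') (x0 + δ') := by
    have hmem1 : x0 - δ' ∈ Icc (x0 - δ') (x0 + δ') := ⟨le_rfl, by linarith⟩
    have hmem2 : x0 + δ' ∈ Icc (x0 - δ') (x0 + δ') := ⟨by linarith, le_rfl⟩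
    have hmemx : x0 ∈ Icc (x0 - δ') (x0 + δ') := ⟨by linarith, by linarith⟩
    rcases hmoa' with h | h
    · refine ⟨g (x0 - δ'), g (x0 + δ'), ?_, ?_, intermediate_value_Icc (by linarith) hgc'⟩
      · rw [← hz]; exact h hmem1 hmemx (by linarith)
      · rw [← hz]; exact h hmemx hmem2 (by linarith)
    · refine ⟨g (x0 + δ'), g (x0 - δ'), ?_, ?_, intermediate_value_Icc' (by linarith) hgc'⟩
      · rw [← hz]; exact h hmemx hmem2 (by linarith)
      · rw [← hz]; exact h hmem1 hmemx (by linarith)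
  obtain ⟨u, w, huz, hzw, hsurj⟩ := hkey
  set η := min (z - u) (w - z) with hη
  have hη1 : η ≤ z - u := min_le_left _ _
  have hη2 : η ≤ w - z := min_le_right _ _
  have hηpos : 0 < η := lt_min (by linarith) (by linarith)
  have hJsub : Icc a b ∩ Ioo (z - η) (z + η) ⊆ Icc u w := by
    intro y hy
    obtain ⟨hy1, hy2⟩ := hy.2
    constructor <;> linarith
  have hcontra := hfort.2 η hηpos
  constructor <;> intro hcm
  · have hφmoa : MoA φ (Icc a b ∩ Ioo (z - η) (z + η)) :=
      moa_transfer hmoa' (hJsub.trans hsurj) (Or.inl (hcm.mono hI'N))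
    rcases hφmoa with h | h
    exacts [hcontra.1 h, hcontra.2 h]
  · have hφmoa : MoA φ (Icc a b ∩ Ioo (z - η) (z + η)) :=
      moa_transfer hmoa' (hJsub.trans hsurj) (Or.inr (hcm.mono hI'N))
    rcases hφmoa with h | h
    exacts [hcontra.1 h, hcontra.2 h]

end Aux

/-- Lemma 3.3: `H(F) = m` is the smallest positive integer `n`
with `F^n(I) ⊆ K(F^n)`. -/
theorem stmt7 (a b : ℝ) (F : ℝ → ℝ) (v : ℕ) (c : ℕ → ℝ)
    (hPM : PMFun a b F v c) (hv : 1 ≤ v)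
    (m : ℕ) (hm : 0 < m) (hH : HeightEq a b F m) :
    (∃ d e : ℝ, IsLap a b (F^[m]) d e ∧
      Set.MapsTo (F^[m]) (Set.Icc a b) (Set.Icc d e)) ∧
    (∀ n : ℕ, 1 ≤ n → n < m → ∀ d e : ℝ, IsLap a b (F^[n]) d e →
      ¬ Set.MapsTo (F^[n]) (Set.Icc a b) (Set.Icc d e)) := by
  classical
  have hcont := Aux.cont_iter hPM
  constructor
  · -- Part 1
    have hmH : nForts a b (F^[m]) = nForts a b (F^[m + 1]) := hH.1
    have hsubA : {x | IsFort a b (F^[m]) x} ⊆ {x | IsFort a b (F^[m + 1]) x} := by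
      intro x hx
      have h2 : IsFort a b (F ∘ F^[m]) x := Aux.fort_comp (hcont m) hx
      show IsFort a b (F^[m + 1]) x
      rw [Function.iterate_succ']
      exact h2
    have hAeq : {x | IsFort a b (F^[m]) x} = {x | IsFort a b (F^[m + 1]) x} :=
      Set.eq_of_subset_of_ncard_le hsubA (le_of_eq hmH.symm) (Aux.forts_finite hPM (m + 1))
    have hne : (Icc a b).Nonempty := ⟨a, le_refl a, hPM.lt.le⟩
    obtain ⟨xp, hxp, hminOn⟩ := isCompact_Icc.exists_isMinOn hne (hcont m)
    obtain ⟨xq, hxq, hmaxOn⟩ := isCompact_Icc.exists_isMaxOn hne (hcont m)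
    set p := F^[m] xp with hp
    set q := F^[m] xq with hq
    have hrange : ∀ x ∈ Icc a b, p ≤ F^[m] x ∧ F^[m] x ≤ q :=
      fun x hx => ⟨hminOn hx, hmaxOn hx⟩
    have hpab : p ∈ Icc a b := (hPM.maps.iterate m) hxp
    have hqab : q ∈ Icc a b := (hPM.maps.iterate m) hxq
    have hpq : p < q := by
      rcases lt_or_ge p q with h | h
      · exact h
      · exfalso
        have hsub1 : F^[m] '' Icc a b ⊆ {p} := by
          intro y hy
          obtain ⟨x, hx, e⟩ := hy
          obtain ⟨h1, h2⟩ := hrange x hx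
          rw [e] at h1 h2
          exact Set.mem_singleton_iff.mpr (le_antisymm (h2.trans h) h1)
        exact Aux.image_infinite hPM m ((Set.finite_singleton p).subset hsub1)
    have hIccpq : Icc p q ⊆ F^[m] '' Icc a b := by
      rcases le_total xp xq with h | h
      · have h2 := intermediate_value_Icc h ((hcont m).mono (Icc_subset_Icc hxp.1 hxq.2))
        exact fun y hy => Set.image_mono (Icc_subset_Icc hxp.1 hxq.2) (h2 hy)
      · have h2 := intermediate_value_Icc' h ((hcont m).mono (Icc_subset_Icc hxq.1 hxp.2))
        exact fun y hy => Set.image_mono (Icc_subset_Icc hxq.1 hxp.2) (h2 hy)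
    have hxpq_ne : xp ≠ xq := by
      intro h
      rw [hp, hq, h] at hpq
      exact lt_irrefl _ hpq
    have hcross : ∀ z : ℝ, z ∈ Ioo p q →
        ∃ x0 δ, 0 < δ ∧ Icc (x0 - δ) (x0 + δ) ⊆ Icc a b ∧
          MoA (F^[m]) (Icc (x0 - δ) (x0 + δ)) ∧ F^[m] x0 = z := by
      intro z hz
      rcases lt_or_gt_of_ne hxpq_ne with h | h
      · exact Aux.crossing' (hcont m) (Aux.forts_finite hPM m) hxp hxq h
          (Or.inl ⟨hz.1, hz.2⟩)
      · exact Aux.crossing' (hcont m) (Aux.forts_finite hPM m) hxq hxp h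
          (Or.inr ⟨hz.1, hz.2⟩)
    have hstep6 : ∀ j, 1 ≤ j → j ≤ v → c j ∉ Ioo p q := by
      intro j hj1 hjv hmem
      obtain ⟨x0, δ, hδ, hsubB, hmoaB, hgx0⟩ := hcross (c j) hmem
      have hnf : ¬ IsFort a b (F^[m]) x0 :=
        Aux.not_fort_intro hδ (Aux.moa_mono hmoaB (fun u hu => ⟨hu.2.1.le, hu.2.2.le⟩))
      have hfort1 : IsFort a b (F^[m + 1]) x0 := by
        rw [Function.iterate_succ']
        exact Aux.fort_pullback (hcont m) hδ hsubB hmoaB hgx0 (hPM.fort j hj1 hjv)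
      have hxmem : x0 ∈ {x | IsFort a b (F^[m + 1]) x} := hfort1
      rw [← hAeq] at hxmem
      exact hnf hxmem
    obtain ⟨i, hiv, hlapsub⟩ := Aux.subset_lap hPM hpab.1 hpq.le hqab.2 hstep6
    have hFmoa : MoA F (Icc p q) := Aux.moa_mono (hPM.lap_mono i hiv) hlapsub
    have hinv : Set.MapsTo F (Icc p q) (Icc p q) := by
      intro y hy
      obtain ⟨x, hx, e⟩ := hIccpq hy
      have h1 : F y = F^[m] (F x) := by
        rw [← e, ← Function.iterate_succ_apply' F m x, Function.iterate_succ_apply F m x]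
      have hFx : F x ∈ Icc a b := hPM.maps hx
      rw [h1]
      exact ⟨(hrange _ hFx).1, (hrange _ hFx).2⟩
    have hmoaIter : ∀ k, MoA (F^[k]) (Icc p q) := by
      intro k
      induction k with
      | zero =>
        left
        intro u _ w _ h
        simpa using h
      | succ k ih =>
        rw [Function.iterate_succ]
        exact Aux.moa_comp ih hFmoa hinv
    have hstep9 : ∀ z ∈ Ioo p q, ¬ IsFort a b (F^[m]) z := by
      intro z hz hzf
      obtain ⟨x0, δ, hδ, hsubB, hmoaB, hgx0⟩ := hcross z hz
      have hnf2m : ¬ IsFort a b (F^[m] ∘ F^[m]) x0 := by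
        apply Aux.not_fort_comp (Icc p q) (hmoaIter m)
        refine ⟨δ, hδ, Aux.moa_mono hmoaB (fun u hu => ⟨hu.2.1.le, hu.2.2.le⟩), ?_⟩
        intro u hu
        exact ⟨(hrange u hu.1).1, (hrange u hu.1).2⟩
      exact hnf2m (Aux.fort_pullback (hcont m) hδ hsubB hmoaB hgx0 hzf)
    -- construct the lap [d, e]
    have hSfin : {x | IsFort a b (F^[m]) x}.Finite := Aux.forts_finite hPM m
    have hDfin : (insert a {x ∈ {x | IsFort a b (F^[m]) x} | x ≤ p}).Finite :=
      (hSfin.subset (Set.sep_subset _ _)).insert a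
    have haD : a ∈ hDfin.toFinset := hDfin.mem_toFinset.mpr (Set.mem_insert a _)
    set d := hDfin.toFinset.max' ⟨a, haD⟩ with hd
    have hdD : d ∈ insert a {x ∈ {x | IsFort a b (F^[m]) x} | x ≤ p} :=
      hDfin.mem_toFinset.mp (hDfin.toFinset.max'_mem _)
    have hdp : d ≤ p := by
      apply Finset.max'_le
      intro u hu
      rcases Set.mem_insert_iff.mp (hDfin.mem_toFinset.mp hu) with rfl | hu2
      · exact hpab.1
      · exact hu2.2
    have had : a ≤ d := Finset.le_max' _ a haD
    have hEfin : (insert b {x ∈ {x | IsFort a b (F^[m]) x} | q ≤ x}).Finite :=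
      (hSfin.subset (Set.sep_subset _ _)).insert b
    have hbE : b ∈ hEfin.toFinset := hEfin.mem_toFinset.mpr (Set.mem_insert b _)
    set e := hEfin.toFinset.min' ⟨b, hbE⟩ with he
    have heE : e ∈ insert b {x ∈ {x | IsFort a b (F^[m]) x} | q ≤ x} :=
      hEfin.mem_toFinset.mp (hEfin.toFinset.min'_mem _)
    have hqe : q ≤ e := by
      apply Finset.le_min'
      intro u hu
      rcases Set.mem_insert_iff.mp (hEfin.mem_toFinset.mp hu) with rfl | hu2
      · exact hqab.2
      · exact hu2.2
    have heb : e ≤ b := Finset.min'_le _ b hbE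
    have hde : d < e := lt_of_le_of_lt hdp (lt_of_lt_of_le hpq hqe)
    have hff : ∀ x ∈ Ioo d e, ¬ IsFort a b (F^[m]) x := by
      intro x hx hxf
      rcases le_or_gt x p with hxle | hxgt
      · have hxD : x ∈ hDfin.toFinset :=
          hDfin.mem_toFinset.mpr (Set.mem_insert_of_mem a ⟨hxf, hxle⟩)
        exact absurd (Finset.le_max' _ x hxD) (not_le.mpr hx.1)
      · rcases le_or_gt q x with hqle | hqgt
        · have hxE : x ∈ hEfin.toFinset :=
            hEfin.mem_toFinset.mpr (Set.mem_insert_of_mem b ⟨hxf, hqle⟩)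
          exact absurd (Finset.min'_le _ x hxE) (not_le.mpr hx.2)
        · exact hstep9 x ⟨hxgt, hqgt⟩ hxf
    have hmoaDE : MoA (F^[m]) (Icc d e) :=
      Aux.mono_of_fortFree (hcont m) hde.le (Icc_subset_Icc had (heb.trans (le_refl b))) hff
    refine ⟨d, e, ⟨had, hde, heb, hmoaDE, ?_, ?_, hff⟩, ?_⟩
    · rcases Set.mem_insert_iff.mp hdD with h | h
      · exact Or.inl h
      · exact Or.inr h.1
    · rcases Set.mem_insert_iff.mp heE with h | h
      · exact Or.inl h
      · exact Or.inr h.1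
    · intro x hx
      exact ⟨le_trans hdp (hrange x hx).1, le_trans (hrange x hx).2 hqe⟩
  · -- Part 2
    intro n hn1 hnm d e hlap hmaps
    obtain ⟨had, hde, heb, hmoaL, _hd, _he, _hff⟩ := hlap
    have hforteq : {x | IsFort a b (F^[n]) x} = {x | IsFort a b (F^[n + 1]) x} := by
      apply Set.Subset.antisymm
      · intro x hx
        have h2 : IsFort a b (F ∘ F^[n]) x := Aux.fort_comp (hcont n) hx
        show IsFort a b (F^[n + 1]) x
        rw [Function.iterate_succ']
        exact h2
      · intro x hx
        have hx2 : IsFort a b (F^[n - 1] ∘ F^[n + 1]) x := Aux.fort_comp (hcont (n + 1)) hx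
        have hx2' : IsFort a b (F^[n] ∘ F^[n]) x := by
          have hnn : n + n = (n - 1) + (n + 1) := by omega
          have heq : F^[n] ∘ F^[n] = F^[n - 1] ∘ F^[n + 1] := by
            rw [← Function.iterate_add, hnn, Function.iterate_add]
          rw [heq]
          exact hx2
        by_contra hnf
        have hxab : x ∈ Icc a b := hx2'.1
        obtain ⟨ε, hε, hmoaN⟩ := Aux.not_fort_elim hxab hnf
        refine Aux.not_fort_comp (Icc d e) hmoaL ⟨ε, hε, hmoaN, ?_⟩ hx2'
        intro u hu
        exact hmaps hu.1
    have hnmem : n ∈ {i : ℕ | nForts a b (F^[i]) = nForts a b (F^[i + 1])} := by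
      show nForts a b (F^[n]) = nForts a b (F^[n + 1])
      unfold nForts
      rw [hforteq]
    exact absurd hnm (not_lt.mpr (hH.2 hnmem))
end
end

section
/- Let I = [a,b] and let F : I → I be a PM function with H(F) = 1 and characteristic interval K(F) = [a',b']. Suppose (K^+): F is strictly increasing on [a',b'], and (K_0^+): for every x ∈ I, F(x) = a' implies F(a') = a', and F(x) = b' implies F(b') = b'. Then for every integer n > 1, there exists a continuous f : I → I with f^n = F (n-fold composition), i.e., F has a continuous iterative root of order n. -/
open Set Function

noncomputable section

section AuxIterativeRoot
open Filter Topology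

private lemma chart_exists (x0 σ x1 θ : ℝ) (h1 : x0 < σ) (h2 : σ < x1)
    (hθ : 0 < θ) (hθ1 : θ < 1) :
    ∃ dd cc : ℝ → ℝ, StrictMono dd ∧ Continuous dd ∧
      (∀ t, cc (dd t) = t) ∧ (∀ x, dd (cc x) = x) ∧ dd 0 = x0 ∧ dd 1 = x1 ∧ dd θ = σ := by
  have hσx : (0:ℝ) < σ - x0 := by linarith
  have hx1σ : (0:ℝ) < x1 - σ := by linarith
  have h1θ : (0:ℝ) < 1 - θ := by linarith
  have hθ0 : θ ≠ 0 := ne_of_gt hθ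
  have h1θ0 : (1:ℝ) - θ ≠ 0 := ne_of_gt h1θ
  set k1 : ℝ := (σ - x0)/θ with hk1
  set k2 : ℝ := (x1 - σ)/(1-θ) with hk2
  have hk1p : 0 < k1 := div_pos hσx hθ
  have hk2p : 0 < k2 := div_pos hx1σ h1θ
  have hθk1 : x0 + θ * k1 = σ := by rw [hk1]; field_simp; ring
  have h1k2 : σ + (1 - θ) * k2 = x1 := by rw [hk2]; field_simp; ring
  refine ⟨fun t => if t ≤ θ then x0 + t * k1 else σ + (t - θ) * k2,
    fun x => if x ≤ σ then (x - x0) / k1 else θ + (x - σ) / k2, ?_, ?_, ?_, ?_, ?_, ?_, ?_⟩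
  · -- strict mono
    intro s t hst
    by_cases hs : s ≤ θ <;> by_cases ht : t ≤ θ
    · simp only [if_pos hs, if_pos ht]; nlinarith
    · simp only [if_pos hs, if_neg ht]; push_neg at ht
      have : x0 + s * k1 ≤ σ := by nlinarith
      nlinarith
    · exact absurd (hst.le.trans ht) hs
    · simp only [if_neg hs, if_neg ht]; nlinarith
  · -- continuous
    apply Continuous.if_le (by continuity) (by continuity) continuous_id continuous_const
    intro x hx; simp only [id] at hx; subst hx; linarith [hθk1]
  · -- cc ∘ dd
    intro t
    by_cases ht : t ≤ θ
    · have hle : x0 + t * k1 ≤ σ := by nlinarith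
      simp only [if_pos ht, if_pos hle]
      have : x0 + t * k1 - x0 = t * k1 := by ring
      rw [this, mul_div_assoc, div_self (ne_of_gt hk1p), mul_one]
    · push_neg at ht
      have hgt : ¬ (σ + (t - θ) * k2 ≤ σ) := by push_neg; nlinarith
      simp only [if_neg (not_le.mpr ht), if_neg hgt]
      have : σ + (t - θ) * k2 - σ = (t - θ) * k2 := by ring
      rw [this, mul_div_assoc, div_self (ne_of_gt hk2p), mul_one]; ring
  · -- dd ∘ cc
    intro x
    by_cases hx : x ≤ σ
    · have hle : (x - x0)/k1 ≤ θ := by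
        rw [div_le_iff₀ hk1p]; nlinarith
      simp only [if_pos hx, if_pos hle]
      rw [div_mul_eq_mul_div, mul_div_assoc, div_self (ne_of_gt hk1p), mul_one]; ring
    · push_neg at hx
      have hgt : ¬ (θ + (x - σ)/k2 ≤ θ) := by
        push_neg; have : 0 < (x - σ)/k2 := div_pos (by linarith) hk2p; linarith
      simp only [if_neg (not_le.mpr hx), if_neg hgt]
      have : θ + (x - σ) / k2 - θ = (x - σ)/k2 := by ring
      rw [this, div_mul_eq_mul_div, mul_div_assoc, div_self (ne_of_gt hk2p), mul_one]; ring
  · show _ = _; beta_reduce; rw [if_pos hθ.le]; ring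
  · show _ = _; beta_reduce; rw [if_neg (not_le.mpr hθ1)]; linarith [h1k2]
  · show _ = _; beta_reduce; rw [if_pos le_rfl]; linarith [hθk1]

private lemma comp_root (g : ℝ ≃o ℝ) (n : ℕ) (hn : 2 ≤ n) (p q : ℝ)
    (hp : g p = p) (hq : g q = q)
    (hinc : ∀ x ∈ Ioo p q, x < g x)
    (x0 σ : ℝ) (hx0 : x0 ∈ Ioo p q) (hσ1 : x0 < σ) (hσ2 : σ < g x0) :
    ∃ f : ℝ → ℝ, MapsTo f (Ioo p q) (Ioo p q) ∧ StrictMonoOn f (Ioo p q) ∧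
      ContinuousOn f (Ioo p q) ∧ (∀ x ∈ Ioo p q, x < f x ∧ f x < g x) ∧
      (∀ x ∈ Ioo p q, f^[n] x = g x) ∧ f^[n-1] x0 = σ := by
  have hn0 : (0:ℝ) < n := by positivity
  have hn0' : (n:ℝ) ≠ 0 := ne_of_gt hn0
  set θ : ℝ := ((n:ℝ) - 1)/n with hθdef
  have hθpos : 0 < θ := by
    apply div_pos _ hn0
    have : (2:ℝ) ≤ n := by exact_mod_cast hn
    linarith
  have hθlt1 : θ < 1 := by
    rw [div_lt_one hn0]; linarith
  -- g maps the component into itself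
  have gmap : ∀ x ∈ Ioo p q, g x ∈ Ioo p q := by
    intro x hx
    exact ⟨by rw [← hp]; exact g.strictMono hx.1, by rw [← hq]; exact g.strictMono hx.2⟩
  have hsp : g.symm p = p := g.symm_apply_eq.mpr hp.symm
  have hsq : g.symm q = q := g.symm_apply_eq.mpr hq.symm
  have gsmap : ∀ x ∈ Ioo p q, g.symm x ∈ Ioo p q := by
    intro x hx
    exact ⟨by rw [← hsp]; exact g.symm.strictMono hx.1, by rw [← hsq]; exact g.symm.strictMono hx.2⟩
  -- integer iterates
  set gz : ℤ → ℝ → ℝ := fun k x => if 0 ≤ k then (⇑g)^[k.toNat] x else (⇑g.symm)^[(-k).toNat] x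
    with hgzdef
  have gz_zero : ∀ x, gz 0 x = x := by intro x; simp [hgzdef]
  have gz_succ : ∀ k x, gz (k+1) x = g (gz k x) := by
    intro k x
    by_cases h : 0 ≤ k
    · simp only [hgzdef, if_pos h, if_pos (by omega : (0:ℤ) ≤ k + 1)]
      have : (k+1).toNat = k.toNat + 1 := by omega
      rw [this, Function.iterate_succ_apply']
    · by_cases h1 : k = -1
      · subst h1
        have h2 : ¬ (0:ℤ) ≤ -1 := by omega
        simp only [hgzdef, if_neg h2]
        norm_num [g.apply_symm_apply]
      · have hk2 : ¬ (0 ≤ k + 1) := by omega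
        simp only [hgzdef, if_neg h, if_neg hk2]
        have : (-k).toNat = (-(k+1)).toNat + 1 := by omega
        rw [this, Function.iterate_succ_apply', g.apply_symm_apply]
  have gz_pred : ∀ k x, gz (k-1) x = g.symm (gz k x) := by
    intro k x
    have := gz_succ (k-1) x
    rw [sub_add_cancel] at this
    rw [this, g.symm_apply_apply]
  have gz_add : ∀ a b : ℤ, ∀ x, gz (a + b) x = gz a (gz b x) := by
    intro a
    induction a using Int.induction_on with
    | zero => intro b x; rw [zero_add, gz_zero]
    | succ i ih =>
        intro b x
        have h1 : (i:ℤ) + 1 + b = (i + b) + 1 := by ring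
        rw [h1, gz_succ, ih, ← gz_succ]
    | pred i ih =>
        intro b x
        have h1 : (-(i:ℤ) - 1 + b) = (-(i:ℤ) + b) - 1 := by ring
        have h2 : (-(i:ℤ) - 1) = -(i:ℤ) - 1 := rfl
        rw [h1, gz_pred, ih, ← gz_pred]
  have gz_one : ∀ x, gz 1 x = g x := by
    intro x; rw [show (1:ℤ) = 0 + 1 by ring, gz_succ, gz_zero]
  have gz_mono : ∀ k, StrictMono (gz k) := by
    intro k
    simp only [hgzdef]
    split
    · exact g.strictMono.iterate _
    · exact g.symm.strictMono.iterate _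
  have gz_cont : ∀ k, Continuous (gz k) := by
    intro k
    simp only [hgzdef]
    split
    · exact g.continuous.iterate _
    · exact g.symm.continuous.iterate _
  have gz_maps : ∀ k x, x ∈ Ioo p q → gz k x ∈ Ioo p q := by
    have hit : ∀ (m : ℕ) x, x ∈ Ioo p q → (⇑g)^[m] x ∈ Ioo p q := by
      intro m
      induction m with
      | zero => intro x hx; simpa using hx
      | succ m ih => intro x hx; rw [Function.iterate_succ_apply']; exact gmap _ (ih x hx)
    have hit' : ∀ (m : ℕ) x, x ∈ Ioo p q → (⇑g.symm)^[m] x ∈ Ioo p q := by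
      intro m
      induction m with
      | zero => intro x hx; simpa using hx
      | succ m ih => intro x hx; rw [Function.iterate_succ_apply']; exact gsmap _ (ih x hx)
    intro k x hx
    simp only [hgzdef]
    split
    · exact hit _ x hx
    · exact hit' _ x hx
  have gz_cancel : ∀ k x, gz (-k) (gz k x) = x := by
    intro k x; rw [← gz_add, neg_add_cancel, gz_zero]
  -- the orbit of x0
  set e : ℤ → ℝ := fun k => gz k x0 with hedef
  have he_mem : ∀ k, e k ∈ Ioo p q := fun k => gz_maps k x0 hx0
  have he_succ : ∀ k, e (k+1) = g (e k) := fun k => gz_succ k x0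
  have he_lt : ∀ k, e k < e (k+1) := by
    intro k; rw [he_succ]; exact hinc _ (he_mem k)
  have he_mono : StrictMono e := strictMono_int_of_lt_succ he_lt
  have he_e0 : e 0 = x0 := gz_zero x0
  have he_e1 : e 1 = g x0 := gz_one x0
  -- limits of the orbit
  have hbddA : BddAbove (Set.range e) := ⟨q, by rintro y ⟨k, rfl⟩; exact (he_mem k).2.le⟩
  have hbddB : BddBelow (Set.range e) := ⟨p, by rintro y ⟨k, rfl⟩; exact (he_mem k).1.le⟩
  have htop : Tendsto e atTop (nhds (⨆ k, e k)) := tendsto_atTop_ciSup he_mono.monotone hbddA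
  have hbot : Tendsto e atBot (nhds (⨅ k, e k)) := tendsto_atBot_ciInf he_mono.monotone hbddB
  have hsup_fix : (⨆ k, e k) = q := by
    set L := ⨆ k, e k with hL
    have hLq : L ≤ q := ciSup_le fun k => (he_mem k).2.le
    have hpL : p < L := lt_of_lt_of_le hx0.1 (he_e0 ▸ le_ciSup hbddA 0)
    have hgL : g L = L := by
      have h1 : Tendsto (fun k => e (k+1)) atTop (nhds L) :=
        htop.comp (tendsto_atTop_add_const_right atTop 1 tendsto_id)
      have h2 : Tendsto (fun k => g (e k)) atTop (nhds (g L)) :=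
        (g.continuous.tendsto L).comp htop
      have h3 : (fun k => e (k+1)) = fun k => g (e k) := funext he_succ
      rw [h3] at h1
      exact tendsto_nhds_unique h2 h1
    rcases lt_or_eq_of_le hLq with h | h
    · exact absurd hgL (ne_of_gt (hinc L ⟨hpL, h⟩))
    · exact h
  have hinf_fix : (⨅ k, e k) = p := by
    set L := ⨅ k, e k with hL
    have hpL : p ≤ L := le_ciInf fun k => (he_mem k).1.le
    have hLq : L < q := lt_of_le_of_lt (he_e0 ▸ ciInf_le hbddB 0) hx0.2
    have hgL : g L = L := by
      have h1 : Tendsto (fun k => e (k+1)) atBot (nhds L) :=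
        hbot.comp (tendsto_atBot_add_const_right atBot 1 tendsto_id)
      have h2 : Tendsto (fun k => g (e k)) atBot (nhds (g L)) :=
        (g.continuous.tendsto L).comp hbot
      have h3 : (fun k => e (k+1)) = fun k => g (e k) := funext he_succ
      rw [h3] at h1
      exact tendsto_nhds_unique h2 h1
    rcases lt_or_eq_of_le hpL with h | h
    · exact absurd hgL (ne_of_gt (hinc L ⟨h, hLq⟩))
    · exact h.symm
  -- covering
  have hKex : ∀ y ∈ Ioo p q, ∃ k : ℤ, e k ≤ y ∧ y < e (k+1) := by
    intro y hy
    have h1 : ∃ k, e k < y := by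
      have := hbot.eventually_lt_const (hinf_fix ▸ hy.1)
      exact this.exists
    have h2 : ∃ k, y < e k := by
      have := htop.eventually_const_lt (hsup_fix ▸ hy.2)
      exact this.exists
    obtain ⟨k0, hk0⟩ := h1
    obtain ⟨k1, hk1⟩ := h2
    have hbdd : ∀ z ∈ {k : ℤ | e k ≤ y}, z ≤ k1 := by
      intro z hz
      by_contra hc
      push_neg at hc
      exact absurd (lt_of_lt_of_le hk1 (he_mono.monotone hc.le)) (not_lt.mpr hz)
    obtain ⟨lub, hlub1, hlub2⟩ := Int.exists_greatest_of_bdd ⟨k1, hbdd⟩ ⟨k0, hk0.le⟩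
    refine ⟨lub, hlub1, ?_⟩
    by_contra hc
    push_neg at hc
    have := hlub2 (lub + 1) hc
    omega
  set K : ℝ → ℤ := fun y => if h : y ∈ Ioo p q then (hKex y h).choose else 0 with hKdef
  have Kspec : ∀ y (h : y ∈ Ioo p q), e (K y) ≤ y ∧ y < e (K y + 1) := by
    intro y h
    simp only [hKdef, dif_pos h]
    exact (hKex y h).choose_spec
  have K_uniq : ∀ y ∈ Ioo p q, ∀ k : ℤ, e k ≤ y → y < e (k+1) → K y = k := by
    intro y hy k h1 h2
    obtain ⟨h3, h4⟩ := Kspec y hy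
    have ha : K y < k + 1 := by
      rw [← he_mono.lt_iff_lt]; exact lt_of_le_of_lt h3 h2
    have hb : k < K y + 1 := by
      rw [← he_mono.lt_iff_lt]; exact lt_of_le_of_lt h1 h4
    omega
  -- the chart
  obtain ⟨dd, cc, hdd_mono, hdd_cont, hcd, hdc, hd0, hd1, hdθ⟩ :=
    chart_exists x0 σ (g x0) θ hσ1 hσ2 hθpos hθlt1
  have hcc_mono : StrictMono cc := by
    intro s t hst
    have h2 := hdd_mono.lt_iff_lt (a := cc s) (b := cc t)
    rw [hdc, hdc] at h2
    exact h2.mp hst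
  have hc0 : cc x0 = 0 := by rw [← hd0, hcd]
  have hc1 : cc (g x0) = 1 := by rw [← hd1, hcd]
  -- Abel function and inverse
  set A : ℝ → ℝ := fun y => (K y : ℝ) + cc (gz (-(K y)) y) with hAdef
  set B : ℝ → ℝ := fun t => gz ⌊t⌋ (dd (Int.fract t)) with hBdef
  -- location of the base representative
  have hw : ∀ y ∈ Ioo p q, x0 ≤ gz (-(K y)) y ∧ gz (-(K y)) y < g x0 := by
    intro y hy
    obtain ⟨h1, h2⟩ := Kspec y hy
    constructor
    · have := (gz_mono (-(K y))).monotone h1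
      rwa [gz_cancel] at this
    · have := gz_mono (-(K y)) h2
      rwa [show gz (-K y) (e (K y + 1)) = g x0 by
        rw [hedef]
        show gz (-K y) (gz (K y + 1) x0) = g x0
        rw [← gz_add, show -K y + (K y + 1) = 1 by ring, gz_one]] at this
  have hcw : ∀ y ∈ Ioo p q, cc (gz (-(K y)) y) ∈ Ico (0:ℝ) 1 := by
    intro y hy
    obtain ⟨h1, h2⟩ := hw y hy
    exact ⟨hc0 ▸ hcc_mono.monotone h1, hc1 ▸ hcc_mono h2⟩
  -- B ∘ A = id on the component
  have hBA : ∀ y ∈ Ioo p q, B (A y) = y := by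
    intro y hy
    have hfl : ⌊A y⌋ = K y := by
      rw [hAdef]
      show ⌊(K y : ℝ) + cc (gz (-(K y)) y)⌋ = K y
      rw [Int.floor_intCast_add, Int.floor_eq_zero_iff.mpr (hcw y hy), add_zero]
    have hfr : Int.fract (A y) = cc (gz (-(K y)) y) := by
      rw [Int.fract, hfl, hAdef]
      push_cast
      ring
    rw [hBdef]
    show gz ⌊A y⌋ (dd (Int.fract (A y))) = y
    rw [hfl, hfr, hdc, ← gz_add, show K y + -K y = 0 by ring, gz_zero]
  -- membership of B
  have hdd_mem : ∀ t : ℝ, dd (Int.fract t) ∈ Ioo p q ∧ x0 ≤ dd (Int.fract t) ∧ dd (Int.fract t) < g x0 := by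
    intro t
    have h1 : x0 ≤ dd (Int.fract t) := hd0 ▸ hdd_mono.monotone (Int.fract_nonneg t)
    have h2 : dd (Int.fract t) < g x0 := hd1 ▸ hdd_mono (Int.fract_lt_one t)
    exact ⟨⟨lt_of_lt_of_le hx0.1 h1, lt_trans h2 (gmap x0 hx0).2⟩, h1, h2⟩
  have hB_mem : ∀ t, B t ∈ Ioo p q := by
    intro t
    exact gz_maps _ _ (hdd_mem t).1
  have hB_lb : ∀ t : ℝ, e ⌊t⌋ ≤ B t := by
    intro t
    exact (gz_mono ⌊t⌋).monotone (hdd_mem t).2.1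
  have hB_ub : ∀ t : ℝ, B t < e (⌊t⌋ + 1) := by
    intro t
    have := gz_mono ⌊t⌋ (hdd_mem t).2.2
    rwa [show gz ⌊t⌋ (g x0) = e (⌊t⌋ + 1) by
      rw [hedef]
      show gz ⌊t⌋ (g x0) = gz (⌊t⌋ + 1) x0
      rw [← gz_one x0, ← gz_add]] at this
  -- A ∘ B = id
  have hAB : ∀ t, A (B t) = t := by
    intro t
    have hK : K (B t) = ⌊t⌋ := K_uniq _ (hB_mem t) _ (hB_lb t) (hB_ub t)
    rw [hAdef]
    show (K (B t) : ℝ) + cc (gz (-(K (B t))) (B t)) = t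
    rw [hK, hBdef]
    show (⌊t⌋ : ℝ) + cc (gz (-⌊t⌋) (gz ⌊t⌋ (dd (Int.fract t)))) = t
    rw [gz_cancel, hcd, Int.floor_add_fract]
  -- B is strictly monotone
  have hB_mono : StrictMono B := by
    intro s t hst
    rcases lt_or_eq_of_le (Int.floor_le_floor hst.le) with h | h
    · calc B s < e (⌊s⌋ + 1) := hB_ub s
        _ ≤ e ⌊t⌋ := he_mono.monotone (by omega)
        _ ≤ B t := hB_lb t
    · have hfr : Int.fract s < Int.fract t := by
        rw [Int.fract, Int.fract, h]
        linarith
      show gz ⌊s⌋ (dd (Int.fract s)) < gz ⌊t⌋ (dd (Int.fract t))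
      rw [← h]
      exact gz_mono _ (hdd_mono hfr)
  have hB_add1 : ∀ t, B (t + 1) = g (B t) := by
    intro t
    rw [hBdef]
    show gz ⌊t+1⌋ (dd (Int.fract (t+1))) = g (gz ⌊t⌋ (dd (Int.fract t)))
    rw [Int.fract_add_one, Int.floor_add_one, gz_succ]
  -- A is strictly monotone on the component
  have hA_mono : StrictMonoOn A (Ioo p q) := by
    intro y hy y' hy' hlt
    by_contra hc
    push_neg at hc
    have := hB_mono.monotone hc
    rw [hBA y hy, hBA y' hy'] at this
    exact absurd hlt (not_lt.mpr this)
  -- the order isomorphism ℝ ≃o Ioo p q induced by B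
  have hpq : p < q := lt_trans hx0.1 hx0.2
  set EB : ℝ → ↥(Ioo p q) := fun t => ⟨B t, hB_mem t⟩ with hEBdef
  have hEB_mono : StrictMono EB := by
    intro s t hst
    exact Subtype.mk_lt_mk.mpr (hB_mono hst)
  have hEB_surj : Function.Surjective EB := by
    rintro ⟨y, hy⟩
    exact ⟨A y, Subtype.ext (hBA y hy)⟩
  set E : ℝ ≃o ↥(Ioo p q) := StrictMono.orderIsoOfSurjective EB hEB_mono hEB_surj with hEdef
  have hE_apply : ∀ t, (E t : ℝ) = B t := fun t => rfl
  have hEsymm : ∀ y (hy : y ∈ Ioo p q), (E.symm ⟨y, hy⟩ : ℝ) = A y := by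
    intro y hy
    have : E (A y) = ⟨y, hy⟩ := Subtype.ext (hBA y hy)
    rw [← this, E.symm_apply_apply]
  -- the root
  refine ⟨fun y => B (A y + 1/n), ?_, ?_, ?_, ?_, ?_, ?_⟩
  · intro y _
    exact hB_mem _
  · intro y hy y' hy' hlt
    have h := hA_mono hy hy' hlt
    show B (A y + 1/(n:ℝ)) < B (A y' + 1/(n:ℝ))
    exact hB_mono (add_lt_add_left h (1/(n:ℝ)))
  · rw [continuousOn_iff_continuous_restrict]
    have hre : (Ioo p q).domRestrict (fun y => B (A y + 1/n)) =
        fun y : ↥(Ioo p q) => (E (((E.symm y : ℝ)) + 1/n) : ℝ) := by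
      funext y
      simp only [Set.domRestrict_apply, hE_apply]
      congr 1
      rw [show (E.symm y : ℝ) = A y from by
        obtain ⟨y, hy⟩ := y; exact hEsymm y hy]
    rw [hre]
    exact continuous_subtype_val.comp (E.continuous.comp
      (E.symm.continuous.add continuous_const))
  · intro y hy
    have h1 : (0:ℝ) < 1/n := by positivity
    have h2 : (1:ℝ)/n < 1 := by
      rw [div_lt_one hn0]
      exact_mod_cast hn.trans_lt' one_lt_two
    constructor
    · have := hB_mono (lt_add_of_pos_right (A y) h1)
      rwa [hBA y hy] at this
    · have := hB_mono (add_lt_add_right h2 (A y))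
      rwa [hB_add1, hBA y hy] at this
  · -- iteration
    have hIt : ∀ y ∈ Ioo p q, ∀ j : ℕ,
        (fun y => B (A y + 1/n))^[j] y = B (A y + j/n) := by
      intro y hy j
      induction j with
      | zero => simp [hBA y hy]
      | succ j ih =>
          rw [Function.iterate_succ_apply', ih]
          beta_reduce
          rw [hAB]
          congr 1
          push_cast
          ring
    intro y hy
    rw [hIt y hy n, show (n:ℝ)/n = 1 by field_simp, hB_add1, hBA y hy]
  · -- the value at x0
    have hK0 : K x0 = 0 := by
      apply K_uniq x0 hx0
      · rw [he_e0]
      · rw [show (0:ℤ)+1 = 1 by ring, he_e1]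
        exact hinc x0 hx0
    have hA0 : A x0 = 0 := by
      rw [hAdef]
      show (K x0 : ℝ) + cc (gz (-(K x0)) x0) = 0
      rw [hK0]
      norm_num [gz_zero, hc0]
    have hIt : ∀ j : ℕ, (fun y => B (A y + 1/n))^[j] x0 = B (A x0 + j/n) := by
      intro j
      induction j with
      | zero => simp [hBA x0 hx0]
      | succ j ih =>
          rw [Function.iterate_succ_apply', ih]
          beta_reduce
          rw [hAB]
          congr 1
          push_cast
          ring
    rw [hIt (n-1), hA0, zero_add]
    have hcast : ((n - 1 : ℕ) : ℝ) = (n:ℝ) - 1 := by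
      have : 1 ≤ n := by omega
      push_cast [this]
      ring
    rw [hcast]
    have hfl : ⌊((n:ℝ)-1)/n⌋ = 0 := Int.floor_eq_zero_iff.mpr ⟨hθpos.le, hθlt1⟩
    have hfr : Int.fract (((n:ℝ)-1)/n) = θ := by
      rw [Int.fract, hfl]
      simp [hθdef]
    rw [hBdef]
    show gz ⌊((n:ℝ)-1)/n⌋ (dd (Int.fract (((n:ℝ)-1)/n))) = σ
    rw [hfl, hfr, hdθ, gz_zero]


private def negConj (g : ℝ ≃o ℝ) : ℝ ≃o ℝ where
  toFun := fun x => -(g (-x))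
  invFun := fun x => -(g.symm (-x))
  left_inv := by intro x; simp
  right_inv := by intro x; simp
  map_rel_iff' := by
    intro a b
    simp only [Equiv.coe_fn_mk, neg_le_neg_iff, OrderIso.le_iff_le]

private lemma negConj_apply (g : ℝ ≃o ℝ) (x : ℝ) : negConj g x = -(g (-x)) := rfl

private lemma comp_root_dec (g : ℝ ≃o ℝ) (n : ℕ) (hn : 2 ≤ n) (p q : ℝ)
    (hp : g p = p) (hq : g q = q)
    (hdec : ∀ x ∈ Ioo p q, g x < x)
    (x0 σ : ℝ) (hx0 : x0 ∈ Ioo p q) (hσ1 : g x0 < σ) (hσ2 : σ < x0) :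
    ∃ f : ℝ → ℝ, MapsTo f (Ioo p q) (Ioo p q) ∧ StrictMonoOn f (Ioo p q) ∧
      ContinuousOn f (Ioo p q) ∧ (∀ x ∈ Ioo p q, g x < f x ∧ f x < x) ∧
      (∀ x ∈ Ioo p q, f^[n] x = g x) ∧ f^[n-1] x0 = σ := by
  set gneg := negConj g with hgneg
  have hmem : ∀ x, x ∈ Ioo (-q) (-p) ↔ -x ∈ Ioo p q := by
    intro x
    constructor
    · rintro ⟨h1, h2⟩; exact ⟨by linarith, by linarith⟩
    · rintro ⟨h1, h2⟩; exact ⟨by linarith, by linarith⟩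
  obtain ⟨fneg, hhmaps, hhmono, hhcont, hhsand, hhiter, hhmark⟩ :=
    comp_root gneg n hn (-q) (-p)
      (by rw [negConj_apply, neg_neg, hq])
      (by rw [negConj_apply, neg_neg, hp])
      (by
        intro x hx
        rw [negConj_apply]
        have := hdec (-x) ((hmem x).mp hx)
        linarith)
      (-x0) (-σ)
      ((hmem (-x0)).mpr (by rwa [neg_neg]))
      (by linarith)
      (by rw [negConj_apply, neg_neg]; linarith)
  refine ⟨fun x => -(fneg (-x)), ?_, ?_, ?_, ?_, ?_, ?_⟩
  · intro x hx
    have := hhmaps ((hmem (-x)).mpr (by rwa [neg_neg]))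
    rw [hmem] at this
    simpa using this
  · intro x hx y hy hxy
    have := hhmono ((hmem (-y)).mpr (by rwa [neg_neg])) ((hmem (-x)).mpr (by rwa [neg_neg]))
      (by linarith)
    simpa using this
  · have : (fun x => -(fneg (-x))) = Neg.neg ∘ fneg ∘ Neg.neg := rfl
    rw [this]
    apply Continuous.comp_continuousOn continuous_neg
    apply ContinuousOn.comp hhcont (continuous_neg.continuousOn)
    intro x hx
    exact (hmem (-x)).mpr (by rwa [neg_neg])
  · intro x hx
    obtain ⟨h1, h2⟩ := hhsand (-x) ((hmem (-x)).mpr (by rwa [neg_neg]))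
    rw [negConj_apply, neg_neg] at h2
    refine ⟨?_, ?_⟩
    · show g x < -fneg (-x)
      linarith
    · show -fneg (-x) < x
      linarith
  · intro x hx
    have hiterneg : ∀ j : ℕ, (fun x => -(fneg (-x)))^[j] x = -(fneg^[j] (-x)) := by
      intro j
      induction j with
      | zero => simp
      | succ j ih => rw [Function.iterate_succ_apply', ih, Function.iterate_succ_apply']; simp
    rw [hiterneg n, hhiter (-x) ((hmem (-x)).mpr (by rwa [neg_neg])), negConj_apply, neg_neg,
      neg_neg]
  · have hiterneg : ∀ j : ℕ, (fun x => -(fneg (-x)))^[j] x0 = -(fneg^[j] (-x0)) := by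
      intro j
      induction j with
      | zero => simp
      | succ j ih => rw [Function.iterate_succ_apply', ih, Function.iterate_succ_apply']; simp
    rw [hiterneg (n-1), hhmark, neg_neg]

private lemma glue_root (g : ℝ ≃o ℝ) (n : ℕ) (hn : 2 ≤ n)
    (hfixlo : ∀ x : ℝ, ∃ y, y < x ∧ g y = y) (hfixhi : ∀ x : ℝ, ∃ y, x < y ∧ g y = y)
    (α sα β tβ : ℝ)
    (hαs : α < g α → α < sα ∧ sα < g α)
    (hβt : g β < β → g β < tβ ∧ tβ < β) :
    ∃ f : ℝ → ℝ, StrictMono f ∧ Continuous f ∧ (∀ x, f^[n] x = g x) ∧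
      (∀ x, min x (g x) ≤ f x ∧ f x ≤ max x (g x)) ∧
      (α < g α → f^[n-1] α ≤ sα) ∧ (g β < β → tβ ≤ f^[n-1] β) := by
  have hFixClosed : IsClosed {y : ℝ | g y = y} := isClosed_eq g.continuous continuous_id
  -- endpoints of components
  set pp : ℝ → ℝ := fun x => sSup ({y | g y = y} ∩ Iic x) with hppdef
  set qq : ℝ → ℝ := fun x => sInf ({y | g y = y} ∩ Ici x) with hqqdef
  have pp_ne : ∀ x, ({y | g y = y} ∩ Iic x).Nonempty := by
    intro x; obtain ⟨y, h1, h2⟩ := hfixlo x; exact ⟨y, h2, h1.le⟩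
  have qq_ne : ∀ x, ({y | g y = y} ∩ Ici x).Nonempty := by
    intro x; obtain ⟨y, h1, h2⟩ := hfixhi x; exact ⟨y, h2, h1.le⟩
  have pp_bdd : ∀ x, BddAbove ({y | g y = y} ∩ Iic x) := fun x => ⟨x, fun y hy => hy.2⟩
  have qq_bdd : ∀ x, BddBelow ({y | g y = y} ∩ Ici x) := fun x => ⟨x, fun y hy => hy.2⟩
  have pp_mem : ∀ x, g (pp x) = pp x ∧ pp x ≤ x := by
    intro x
    exact (hFixClosed.inter isClosed_Iic).csSup_mem (pp_ne x) (pp_bdd x)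
  have qq_mem : ∀ x, g (qq x) = qq x ∧ x ≤ qq x := by
    intro x
    exact (hFixClosed.inter isClosed_Ici).csInf_mem (qq_ne x) (qq_bdd x)
  have pp_lt : ∀ x, g x ≠ x → pp x < x := by
    intro x hx
    rcases lt_or_eq_of_le (pp_mem x).2 with h | h
    · exact h
    · exact absurd (h ▸ (pp_mem x).1) hx
  have qq_gt : ∀ x, g x ≠ x → x < qq x := by
    intro x hx
    rcases lt_or_eq_of_le (qq_mem x).2 with h | h
    · exact h
    · exfalso; apply hx; rw [h]; exact (qq_mem x).1
  have mem_comp : ∀ x, g x ≠ x → x ∈ Ioo (pp x) (qq x) := fun x hx => ⟨pp_lt x hx, qq_gt x hx⟩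
  have no_fix : ∀ x y, y ∈ Ioo (pp x) (qq x) → g y ≠ y := by
    intro x y hy hfix
    rcases le_total y x with h | h
    · exact absurd (le_csSup (pp_bdd x) ⟨hfix, h⟩) (not_le.mpr hy.1)
    · exact absurd (csInf_le (qq_bdd x) ⟨hfix, h⟩) (not_le.mpr hy.2)
  have comp_inv : ∀ x, g x ≠ x → ∀ y ∈ Ioo (pp x) (qq x), pp y = pp x ∧ qq y = qq x := by
    intro x hx y hy
    constructor
    · apply le_antisymm
      · apply csSup_le (pp_ne y)
        rintro z ⟨hz1, hz2⟩
        by_contra hc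
        push_neg at hc
        exact no_fix x z ⟨hc, lt_of_le_of_lt hz2 hy.2⟩ hz1
      · exact le_csSup (pp_bdd y) ⟨(pp_mem x).1, hy.1.le⟩
    · apply le_antisymm
      · exact csInf_le (qq_bdd y) ⟨(qq_mem x).1, hy.2.le⟩
      · apply le_csInf (qq_ne y)
        rintro z ⟨hz1, hz2⟩
        by_contra hc
        push_neg at hc
        exact no_fix x z ⟨lt_of_lt_of_le hy.1 hz2, hc⟩ hz1
  -- intermediate value helper
  have ivt_fix : ∀ u v : ℝ, u ≤ v → u < g u → g v < v → ∃ z ∈ Icc u v, g z = z := by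
    intro u v huv hu hv
    have hcont : ContinuousOn (fun z => g z - z) (Icc u v) :=
      (g.continuous.sub continuous_id).continuousOn
    have h0 : (0:ℝ) ∈ Icc ((fun z => g z - z) v) ((fun z => g z - z) u) := by
      constructor <;> simp <;> linarith
    obtain ⟨z, hz, hz0⟩ := intermediate_value_Icc' huv hcont h0
    exact ⟨z, hz, by linarith [sub_eq_zero.mp hz0]⟩
  have ivt_fix' : ∀ u v : ℝ, u ≤ v → g u < u → v < g v → ∃ z ∈ Icc u v, g z = z := by
    intro u v huv hu hv
    have hcont : ContinuousOn (fun z => g z - z) (Icc u v) :=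
      (g.continuous.sub continuous_id).continuousOn
    have h0 : (0:ℝ) ∈ Icc ((fun z => g z - z) u) ((fun z => g z - z) v) := by
      constructor <;> simp <;> linarith
    obtain ⟨z, hz, hz0⟩ := intermediate_value_Icc huv hcont h0
    exact ⟨z, hz, by linarith [sub_eq_zero.mp hz0]⟩
  -- per-component root with the marked-point conditions
  have main : ∀ p q : ℝ, ∃ fc : ℝ → ℝ,
      (p < q ∧ g p = p ∧ g q = q ∧ (∀ y ∈ Ioo p q, g y ≠ y)) →
      (MapsTo fc (Ioo p q) (Ioo p q) ∧ StrictMonoOn fc (Ioo p q) ∧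
        ContinuousOn fc (Ioo p q) ∧
        (∀ y ∈ Ioo p q, min y (g y) < fc y ∧ fc y < max y (g y)) ∧
        (∀ y ∈ Ioo p q, fc^[n] y = g y) ∧
        (α ∈ Ioo p q → α < g α → fc^[n-1] α ≤ sα) ∧
        (β ∈ Ioo p q → g β < β → tβ ≤ fc^[n-1] β)) := by
    intro p q
    by_cases hcond : p < q ∧ g p = p ∧ g q = q ∧ (∀ y ∈ Ioo p q, g y ≠ y)
    swap
    · exact ⟨id, fun h => absurd h hcond⟩
    obtain ⟨hpq, hp, hq, hnf⟩ := hcond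
    have hwmem : (p+q)/2 ∈ Ioo p q := ⟨by linarith, by linarith⟩
    have dich : (∀ y ∈ Ioo p q, y < g y) ∨ (∀ y ∈ Ioo p q, g y < y) := by
      rcases lt_or_gt_of_ne (hnf _ hwmem) with h | h
      · -- g w < w
        right
        intro y hy
        rcases lt_or_gt_of_ne (hnf y hy) with h' | h'
        · exact h'
        · exfalso
          rcases le_total y ((p+q)/2) with hc | hc
          · obtain ⟨z, hz, hzf⟩ := ivt_fix y ((p+q)/2) hc h' h
            exact hnf z ⟨lt_of_lt_of_le hy.1 hz.1, lt_of_le_of_lt hz.2 hwmem.2⟩ hzf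
          · obtain ⟨z, hz, hzf⟩ := ivt_fix' ((p+q)/2) y hc h h'
            exact hnf z ⟨lt_of_lt_of_le hwmem.1 hz.1, lt_of_le_of_lt hz.2 hy.2⟩ hzf
      · left
        intro y hy
        rcases lt_or_gt_of_ne (hnf y hy) with h' | h'
        · exfalso
          rcases le_total y ((p+q)/2) with hc | hc
          · obtain ⟨z, hz, hzf⟩ := ivt_fix' y ((p+q)/2) hc h' h
            exact hnf z ⟨lt_of_lt_of_le hy.1 hz.1, lt_of_le_of_lt hz.2 hwmem.2⟩ hzf
          · obtain ⟨z, hz, hzf⟩ := ivt_fix ((p+q)/2) y hc h h'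
            exact hnf z ⟨lt_of_lt_of_le hwmem.1 hz.1, lt_of_le_of_lt hz.2 hy.2⟩ hzf
        · exact h'
    rcases dich with hinc | hdec
    · -- increasing component
      by_cases hαin : α ∈ Ioo p q
      · have hαg : α < g α := hinc α hαin
        obtain ⟨hs1, hs2⟩ := hαs hαg
        obtain ⟨fc, h1, h2, h3, h4, h5, h6⟩ := comp_root g n hn p q hp hq hinc α sα hαin hs1 hs2
        refine ⟨fc, fun _ => ⟨h1, h2, h3, ?_, h5, fun _ _ => le_of_eq h6, ?_⟩⟩
        · intro y hy
          refine ⟨?_, ?_⟩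
          · rw [min_eq_left (hinc y hy).le]; exact (h4 y hy).1
          · rw [max_eq_right (hinc y hy).le]; exact (h4 y hy).2
        · intro hβin hβg
          exact absurd (hinc β hβin) (not_lt.mpr hβg.le)
      · set x0 := (p+q)/2 with hx0def
        have hgx0 : x0 < g x0 := hinc x0 hwmem
        obtain ⟨fc, h1, h2, h3, h4, h5, h6⟩ := comp_root g n hn p q hp hq hinc
          x0 ((x0 + g x0)/2) hwmem (by linarith) (by linarith)
        refine ⟨fc, fun _ => ⟨h1, h2, h3, ?_, h5, fun hin _ => absurd hin hαin, ?_⟩⟩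
        · intro y hy
          refine ⟨?_, ?_⟩
          · rw [min_eq_left (hinc y hy).le]; exact (h4 y hy).1
          · rw [max_eq_right (hinc y hy).le]; exact (h4 y hy).2
        · intro hβin hβg
          exact absurd (hinc β hβin) (not_lt.mpr hβg.le)
    · -- decreasing component
      by_cases hβin : β ∈ Ioo p q
      · have hβg : g β < β := hdec β hβin
        obtain ⟨ht1, ht2⟩ := hβt hβg
        obtain ⟨fc, h1, h2, h3, h4, h5, h6⟩ := comp_root_dec g n hn p q hp hq hdec β tβ hβin ht1 ht2
        refine ⟨fc, fun _ => ⟨h1, h2, h3, ?_, h5, ?_, fun _ _ => ge_of_eq h6⟩⟩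
        · intro y hy
          refine ⟨?_, ?_⟩
          · rw [min_eq_right (hdec y hy).le]; exact (h4 y hy).1
          · rw [max_eq_left (hdec y hy).le]; exact (h4 y hy).2
        · intro hαin hαg
          exact absurd (hdec α hαin) (not_lt.mpr hαg.le)
      · set x0 := (p+q)/2 with hx0def
        have hgx0 : g x0 < x0 := hdec x0 hwmem
        obtain ⟨fc, h1, h2, h3, h4, h5, h6⟩ := comp_root_dec g n hn p q hp hq hdec
          x0 ((x0 + g x0)/2) hwmem (by linarith) (by linarith)
        refine ⟨fc, fun _ => ⟨h1, h2, h3, ?_, h5, ?_, fun hin _ => absurd hin hβin⟩⟩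
        · intro y hy
          refine ⟨?_, ?_⟩
          · rw [min_eq_right (hdec y hy).le]; exact (h4 y hy).1
          · rw [max_eq_left (hdec y hy).le]; exact (h4 y hy).2
        · intro hαin hαg
          exact absurd (hdec α hαin) (not_lt.mpr hαg.le)
  -- the global root
  set f : ℝ → ℝ := fun x => if g x = x then x else (main (pp x) (qq x)).choose x with hfdef
  have spec : ∀ x, g x ≠ x →
      (MapsTo ((main (pp x) (qq x)).choose) (Ioo (pp x) (qq x)) (Ioo (pp x) (qq x)) ∧
        StrictMonoOn ((main (pp x) (qq x)).choose) (Ioo (pp x) (qq x)) ∧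
        ContinuousOn ((main (pp x) (qq x)).choose) (Ioo (pp x) (qq x)) ∧
        (∀ y ∈ Ioo (pp x) (qq x), min y (g y) < (main (pp x) (qq x)).choose y ∧
          (main (pp x) (qq x)).choose y < max y (g y)) ∧
        (∀ y ∈ Ioo (pp x) (qq x), ((main (pp x) (qq x)).choose)^[n] y = g y) ∧
        (α ∈ Ioo (pp x) (qq x) → α < g α → ((main (pp x) (qq x)).choose)^[n-1] α ≤ sα) ∧
        (β ∈ Ioo (pp x) (qq x) → g β < β → tβ ≤ ((main (pp x) (qq x)).choose)^[n-1] β)) := by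
    intro x hx
    exact (main (pp x) (qq x)).choose_spec
      ⟨lt_trans (pp_lt x hx) (qq_gt x hx), (pp_mem x).1, (qq_mem x).1, no_fix x⟩
  have f_eq : ∀ x, g x ≠ x → ∀ y ∈ Ioo (pp x) (qq x), f y = (main (pp x) (qq x)).choose y := by
    intro x hx y hy
    have hyne : g y ≠ y := no_fix x y hy
    obtain ⟨h1, h2⟩ := comp_inv x hx y hy
    rw [hfdef]
    show (if g y = y then y else (main (pp y) (qq y)).choose y) = _
    rw [if_neg hyne, h1, h2]
  have f_self : ∀ x, g x = x → f x = x := by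
    intro x hx
    rw [hfdef]
    show (if g x = x then x else _) = x
    rw [if_pos hx]
  have f_in : ∀ x, g x ≠ x → f x ∈ Ioo (pp x) (qq x) := by
    intro x hx
    rw [f_eq x hx x (mem_comp x hx)]
    exact (spec x hx).1 (mem_comp x hx)
  have f_iter_comp : ∀ x, g x ≠ x → ∀ j : ℕ, ∀ y ∈ Ioo (pp x) (qq x),
      f^[j] y = ((main (pp x) (qq x)).choose)^[j] y := by
    intro x hx j
    induction j with
    | zero => intro y _; simp
    | succ j ih =>
        intro y hy
        rw [Function.iterate_succ_apply, Function.iterate_succ_apply]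
        rw [f_eq x hx y hy]
        exact ih _ ((spec x hx).1 hy)
  have hsand : ∀ x, min x (g x) ≤ f x ∧ f x ≤ max x (g x) := by
    intro x
    by_cases hx : g x = x
    · rw [f_self x hx, hx]
      simp
    · have := (spec x hx).2.2.2.1 x (mem_comp x hx)
      rw [← f_eq x hx x (mem_comp x hx)] at this
      exact ⟨this.1.le, this.2.le⟩
  refine ⟨f, ?_, ?_, ?_, hsand, ?_, ?_⟩
  · -- strict mono
    intro x y hxy
    by_cases hx : g x = x <;> by_cases hy : g y = y
    · rw [f_self x hx, f_self y hy]; exact hxy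
    · rw [f_self x hx]
      have h1 : x ≤ pp y := le_csSup (pp_bdd y) ⟨hx, hxy.le⟩
      exact lt_of_le_of_lt h1 (f_in y hy).1
    · rw [f_self y hy]
      have h1 : qq x ≤ y := csInf_le (qq_bdd x) ⟨hy, hxy.le⟩
      exact lt_of_lt_of_le (f_in x hx).2 h1
    · by_cases hyin : y < qq x
      · have hymem : y ∈ Ioo (pp x) (qq x) := ⟨lt_trans (pp_lt x hx) hxy, hyin⟩
        rw [f_eq x hx x (mem_comp x hx), f_eq x hx y hymem]
        exact (spec x hx).2.1 (mem_comp x hx) hymem hxy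
      · push_neg at hyin
        have h2 : qq x < y := lt_of_le_of_ne hyin (fun h => hy (h ▸ (qq_mem x).1))
        have h3 : qq x ≤ pp y := le_csSup (pp_bdd y) ⟨(qq_mem x).1, h2.le⟩
        calc f x < qq x := (f_in x hx).2
          _ ≤ pp y := h3
          _ < f y := (f_in y hy).1
  · -- continuous
    rw [continuous_iff_continuousAt]
    intro x
    by_cases hx : g x = x
    · have hmin : Tendsto (fun y => min y (g y)) (𝓝 x) (𝓝 x) := by
        have := (continuous_id.min g.continuous).tendsto x
        simpa [hx] using this
      have hmax : Tendsto (fun y => max y (g y)) (𝓝 x) (𝓝 x) := by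
        have := (continuous_id.max g.continuous).tendsto x
        simpa [hx] using this
      have hsq : Tendsto f (𝓝 x) (𝓝 x) :=
        tendsto_of_tendsto_of_tendsto_of_le_of_le hmin hmax
          (fun y => (hsand y).1) (fun y => (hsand y).2)
      rw [ContinuousAt, f_self x hx]
      exact hsq
    · have hnb : Ioo (pp x) (qq x) ∈ 𝓝 x := Ioo_mem_nhds (pp_lt x hx) (qq_gt x hx)
      have hca : ContinuousAt ((main (pp x) (qq x)).choose) x :=
        (spec x hx).2.2.1.continuousAt hnb
      apply hca.congr
      exact Filter.eventuallyEq_of_mem hnb (fun y hy => (f_eq x hx y hy).symm)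
  · intro x
    by_cases hx : g x = x
    · rw [Function.iterate_fixed (f_self x hx) n, hx]
    · rw [f_iter_comp x hx n x (mem_comp x hx)]
      exact (spec x hx).2.2.2.2.1 x (mem_comp x hx)
  · intro hαg
    have hα : g α ≠ α := ne_of_gt hαg
    rw [f_iter_comp α hα (n-1) α (mem_comp α hα)]
    exact (spec α hα).2.2.2.2.2.1 (mem_comp α hα) hαg
  · intro hβg
    have hβ : g β ≠ β := ne_of_lt hβg
    rw [f_iter_comp β hβ (n-1) β (mem_comp β hβ)]
    exact (spec β hβ).2.2.2.2.2.2 (mem_comp β hβ) hβg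

private lemma surj_of_id_outside (f : ℝ → ℝ) (hc : Continuous f) (u v : ℝ)
    (h : ∀ x, x ≤ u → f x = x) (h' : ∀ x, v ≤ x → f x = x) : Function.Surjective f := by
  intro y
  set lo := min y u - 1 with hlo
  set hi := max y v + 1 with hhi
  have h1 : f lo = lo := h lo (by simp only [hlo]; linarith [min_le_right y u])
  have h2 : f hi = hi := h' hi (by simp only [hhi]; linarith [le_max_right y v])
  have hle : lo ≤ hi := by
    simp only [hlo, hhi]
    have := min_le_left y u
    have := le_max_left y v
    linarith
  have hy : y ∈ Icc (f lo) (f hi) := by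
    rw [h1, h2]
    constructor
    · simp only [hlo]; linarith [min_le_left y u]
    · simp only [hhi]; linarith [le_max_left y v]
  obtain ⟨x, _, hx⟩ := intermediate_value_Icc hle hc.continuousOn hy
  exact ⟨x, hx⟩

private lemma smOn_glue (f : ℝ → ℝ) (a : ℝ) (h1 : StrictMonoOn f (Iic a))
    (h2 : StrictMonoOn f (Ici a)) : StrictMono f := by
  intro x y hxy
  rcases le_total y a with h | h
  · exact h1 (hxy.le.trans h) h hxy
  · rcases le_total x a with h' | h'
    · rcases eq_or_lt_of_le h' with he | hl
      · subst he
        exact h2 (mem_Ici.mpr le_rfl) (mem_Ici.mpr h) hxy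
      · have hfa : f x < f a := h1 (mem_Iic.mpr hl.le) (mem_Iic.mpr le_rfl) hl
        rcases eq_or_lt_of_le h with he | hl2
        · rwa [he] at hfa
        · exact hfa.trans (h2 (mem_Ici.mpr le_rfl) (mem_Ici.mpr h) hl2)
    · exact h2 h' (h'.trans hxy.le) hxy

private lemma smOn_Iic_Icc (f : ℝ → ℝ) (a b : ℝ) (h1 : StrictMonoOn f (Iic a))
    (h2 : StrictMonoOn f (Icc a b)) : StrictMonoOn f (Iic b) := by
  intro x hx y hy hxy
  rcases le_total y a with h | h
  · exact h1 (mem_Iic.mpr (hxy.le.trans h)) (mem_Iic.mpr h) hxy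
  · rcases le_total x a with h' | h'
    · rcases eq_or_lt_of_le h' with he | hl
      · subst he
        exact h2 (mem_Icc.mpr ⟨le_rfl, (hxy.le.trans hy)⟩) (mem_Icc.mpr ⟨h, hy⟩) hxy
      · have hfa : f x < f a := h1 (mem_Iic.mpr hl.le) (mem_Iic.mpr le_rfl) hl
        rcases eq_or_lt_of_le h with he | hl2
        · rwa [he] at hfa
        · exact hfa.trans (h2 (mem_Icc.mpr ⟨le_rfl, hl2.le.trans hy⟩) (mem_Icc.mpr ⟨h, hy⟩) hl2)
    · exact h2 (mem_Icc.mpr ⟨h', hxy.le.trans hy⟩) (mem_Icc.mpr ⟨h, hy⟩) hxy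

private lemma smOn_Icc_Ici (f : ℝ → ℝ) (a b : ℝ) (h1 : StrictMonoOn f (Icc a b))
    (h2 : StrictMonoOn f (Ici b)) : StrictMonoOn f (Ici a) := by
  intro x hx y hy hxy
  rcases le_total y b with h | h
  · exact h1 (mem_Icc.mpr ⟨hx, hxy.le.trans h⟩) (mem_Icc.mpr ⟨hy, h⟩) hxy
  · rcases le_total x b with h' | h'
    · rcases eq_or_lt_of_le h' with he | hl
      · exact h2 (mem_Ici.mpr (le_of_eq he.symm)) (mem_Ici.mpr h) hxy
      · have hfa : f x < f b := h1 (mem_Icc.mpr ⟨hx, hl.le⟩) (mem_Icc.mpr ⟨hx.trans hl.le, le_rfl⟩) hl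
        rcases eq_or_lt_of_le h with he | hl2
        · rwa [he] at hfa
        · exact hfa.trans (h2 (mem_Ici.mpr le_rfl) (mem_Ici.mpr h) hl2)
    · exact h2 (mem_Ici.mpr h') (mem_Ici.mpr h) hxy

end AuxIterativeRoot

/-- Theorem A, sufficiency: under (K⁺) and (K₀⁺), `F` has continuous
iterative roots of every order `n > 1`. -/
theorem stmt8 (a b : ℝ) (F : ℝ → ℝ) (v : ℕ) (c : ℕ → ℝ)
    (hPM : PMFun a b F v c) (hv : 1 ≤ v)
    (j : ℕ) (hj : j ≤ v) (a' b' : ℝ) (ha' : a' = c j) (hb' : b' = c (j + 1))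
    (hK : Set.MapsTo F (Set.Icc a b) (Set.Icc a' b'))
    (hKplus : StrictMonoOn F (Set.Icc a' b'))
    (hK0 : ∀ x ∈ Set.Icc a b, (F x = a' → F a' = a') ∧ (F x = b' → F b' = b')) :
    ∀ n : ℕ, 1 < n → ∃ f : ℝ → ℝ, ContinuousOn f (Set.Icc a b) ∧
      Set.MapsTo f (Set.Icc a b) (Set.Icc a b) ∧
      ∀ x ∈ Set.Icc a b, f^[n] x = F x := by
  intro n hn1
  have hn : 2 ≤ n := hn1
  -- ordering of the fort points
  have hcM : ∀ i k : ℕ, i ≤ k → k ≤ v + 1 → c i ≤ c k := by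
    intro i k hik hk
    induction k with
    | zero =>
        have hi0 : i = 0 := by omega
        simp [hi0]
    | succ k ih =>
        by_cases h : i = k + 1
        · simp [h]
        · have h1 : i ≤ k := by omega
          exact (ih h1 (by omega)).trans (hPM.c_mono k (by omega)).le
  have hab : a < b := hPM.lt
  have ha'b' : a' < b' := by rw [ha', hb']; exact hPM.c_mono j hj
  have haa' : a ≤ a' := by rw [ha', ← hPM.c_zero]; exact hcM 0 j (by omega) (by omega)
  have hb'b : b' ≤ b := by rw [hb', ← hPM.c_last]; exact hcM (j+1) (v+1) (by omega) le_rfl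
  have hsub : Set.Icc a' b' ⊆ Set.Icc a b := Set.Icc_subset_Icc haa' hb'b
  have ha'mem : a' ∈ Set.Icc a b := ⟨haa', ha'b'.le.trans hb'b⟩
  have hb'mem : b' ∈ Set.Icc a b := ⟨haa'.trans ha'b'.le, hb'b⟩
  have hFa' : F a' ∈ Set.Icc a' b' := hK ha'mem
  have hFb' : F b' ∈ Set.Icc a' b' := hK hb'mem
  -- the clamped version of F and the extension G
  set Fc : ℝ → ℝ := fun x => F (max a' (min x b')) with hFcdef
  have hFc_cont : Continuous Fc := by
    apply (hPM.cont.mono (fun z hz => hsub hz)).comp_continuous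
      (continuous_const.max (continuous_id.min continuous_const))
    intro x
    exact ⟨le_max_left _ _, max_le ha'b'.le (min_le_right _ _)⟩
  have hFc_eq : ∀ x ∈ Set.Icc a' b', Fc x = F x := by
    intro x hx
    show F (max a' (min x b')) = F x
    rw [min_eq_left hx.2, max_eq_right hx.1]
  set A2 : ℝ → ℝ := fun x => (a' - 1) + (x - (a' - 1)) * (F a' - (a' - 1)) with hA2def
  set A4 : ℝ → ℝ := fun x => F b' + (x - b') * ((b' + 1) - F b') with hA4def
  set G : ℝ → ℝ := fun x =>
    if x ≤ a' - 1 then x else if x ≤ a' then A2 x else if x ≤ b' then Fc x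
    else if x ≤ b' + 1 then A4 x else x with hGdef
  have hs2 : (0:ℝ) < F a' - (a' - 1) := by have h := hFa'.1; linarith
  have hs4 : (0:ℝ) < (b' + 1) - F b' := by have h := hFb'.2; linarith
  -- evaluation lemmas
  have hA2a : A2 (a' - 1) = a' - 1 := by show (a'-1) + ((a'-1) - (a'-1)) * _ = a' - 1; ring
  have hA2b : A2 a' = F a' := by show (a'-1) + (a' - (a'-1)) * (F a' - (a'-1)) = F a'; ring
  have hA4a : A4 b' = F b' := by show F b' + (b' - b') * _ = F b'; ring
  have hA4b : A4 (b' + 1) = b' + 1 := by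
    show F b' + ((b'+1) - b') * ((b'+1) - F b') = b' + 1; ring
  have hG1 : ∀ x, x ≤ a' - 1 → G x = x := by
    intro x hx
    show (if x ≤ a' - 1 then x else _) = x
    rw [if_pos hx]
  have hG2 : ∀ x, a' - 1 ≤ x → x ≤ a' → G x = A2 x := by
    intro x h1 h2
    show (if x ≤ a' - 1 then x else if x ≤ a' then A2 x else _) = A2 x
    rcases eq_or_lt_of_le h1 with he | hl
    · rw [if_pos (le_of_eq he.symm), ← he, hA2a]
    · rw [if_neg (not_le.mpr hl), if_pos h2]
  have hG3 : ∀ x ∈ Set.Icc a' b', G x = F x := by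
    intro x hx
    have hx1 : ¬ x ≤ a' - 1 := not_le.mpr (by linarith [hx.1])
    show (if x ≤ a' - 1 then x else if x ≤ a' then A2 x else if x ≤ b' then Fc x else _) = F x
    rw [if_neg hx1]
    by_cases h2 : x ≤ a'
    · have hxa : x = a' := le_antisymm h2 hx.1
      rw [if_pos h2, hxa, hA2b]
    · rw [if_neg h2, if_pos hx.2]
      exact hFc_eq x ⟨(not_le.mp h2).le, hx.2⟩
  have hG4 : ∀ x, b' ≤ x → x ≤ b' + 1 → G x = A4 x := by
    intro x h1 h2
    have hx1 : ¬ x ≤ a' - 1 := not_le.mpr (by linarith)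
    have hx2 : ¬ x ≤ a' := not_le.mpr (lt_of_lt_of_le ha'b' h1)
    show (if x ≤ a' - 1 then x else if x ≤ a' then A2 x else if x ≤ b' then Fc x
      else if x ≤ b' + 1 then A4 x else x) = A4 x
    rw [if_neg hx1, if_neg hx2]
    rcases eq_or_lt_of_le h1 with he | hl
    · rw [if_pos (le_of_eq he.symm), ← he, hA4a]
      exact hFc_eq b' ⟨ha'b'.le, le_rfl⟩
    · rw [if_neg (not_le.mpr hl), if_pos h2]
  have hG5 : ∀ x, b' + 1 ≤ x → G x = x := by
    intro x h1
    have hx1 : ¬ x ≤ a' - 1 := not_le.mpr (by linarith)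
    have hx2 : ¬ x ≤ a' := not_le.mpr (by linarith)
    have hx3 : ¬ x ≤ b' := not_le.mpr (by linarith)
    show (if x ≤ a' - 1 then x else if x ≤ a' then A2 x else if x ≤ b' then Fc x
      else if x ≤ b' + 1 then A4 x else x) = x
    rw [if_neg hx1, if_neg hx2, if_neg hx3]
    rcases eq_or_lt_of_le h1 with he | hl
    · rw [if_pos (le_of_eq he.symm), ← he, hA4b]
    · rw [if_neg (not_le.mpr hl)]
  -- strict monotonicity of G
  have hSM1 : StrictMonoOn G (Set.Iic (a' - 1)) := by
    intro x hx y hy hxy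
    rw [hG1 x hx, hG1 y hy]; exact hxy
  have hSM2 : StrictMonoOn G (Set.Icc (a' - 1) a') := by
    intro x hx y hy hxy
    rw [hG2 x hx.1 hx.2, hG2 y hy.1 hy.2]
    show (a'-1) + (x - (a'-1)) * (F a' - (a'-1)) < (a'-1) + (y - (a'-1)) * (F a' - (a'-1))
    nlinarith
  have hSM3 : StrictMonoOn G (Set.Icc a' b') := by
    intro x hx y hy hxy
    rw [hG3 x hx, hG3 y hy]; exact hKplus hx hy hxy
  have hSM4 : StrictMonoOn G (Set.Icc b' (b' + 1)) := by
    intro x hx y hy hxy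
    rw [hG4 x hx.1 hx.2, hG4 y hy.1 hy.2]
    show F b' + (x - b') * ((b'+1) - F b') < F b' + (y - b') * ((b'+1) - F b')
    nlinarith
  have hSM5 : StrictMonoOn G (Set.Ici (b' + 1)) := by
    intro x hx y hy hxy
    rw [hG5 x hx, hG5 y hy]; exact hxy
  have hGmono : StrictMono G :=
    smOn_glue G b'
      (smOn_Iic_Icc G a' b' (smOn_Iic_Icc G (a' - 1) a' hSM1 hSM2) hSM3)
      (smOn_Icc_Ici G b' (b' + 1) hSM4 hSM5)
  -- continuity of G
  have hA2cont : Continuous A2 := by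
    show Continuous fun x => (a' - 1) + (x - (a' - 1)) * (F a' - (a' - 1))
    exact continuous_const.add ((continuous_id.sub continuous_const).mul continuous_const)
  have hA4cont : Continuous A4 := by
    show Continuous fun x => F b' + (x - b') * ((b' + 1) - F b')
    exact continuous_const.add ((continuous_id.sub continuous_const).mul continuous_const)
  have hGcont : Continuous G := by
    rw [hGdef]
    refine Continuous.if_le continuous_id ?_ continuous_id continuous_const ?_
    · refine Continuous.if_le hA2cont ?_ continuous_id continuous_const ?_
      · refine Continuous.if_le hFc_cont ?_ continuous_id continuous_const ?_
        · refine Continuous.if_le hA4cont continuous_id continuous_id continuous_const ?_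
          intro x hx
          rw [hx]
          exact hA4b
        · intro x hx
          rw [hx]
          rw [if_pos (by linarith : b' ≤ b' + 1), hA4a]
          exact hFc_eq b' ⟨ha'b'.le, le_rfl⟩
      · intro x hx
        rw [hx]
        rw [if_pos ha'b'.le, hA2b]
        exact (hFc_eq a' ⟨le_rfl, ha'b'.le⟩).symm
    · intro x hx
      rw [hx]
      rw [if_pos (by linarith : a' - 1 ≤ a'), hA2a]
  have hGsurj : Function.Surjective G :=
    surj_of_id_outside G hGcont (a' - 1) (b' + 1) hG1 hG5
  set gOI : ℝ ≃o ℝ := StrictMono.orderIsoOfSurjective G hGmono hGsurj with hgOIdef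
  have hcoe : ⇑gOI = G := StrictMono.coe_orderIsoOfSurjective G hGmono hGsurj
  -- extremes of F on [a,b]
  have himg : IsCompact (F '' Set.Icc a b) := isCompact_Icc.image_of_continuousOn hPM.cont
  have hne : (F '' Set.Icc a b).Nonempty := ⟨F a, a, ⟨le_rfl, hab.le⟩, rfl⟩
  set m := sInf (F '' Set.Icc a b) with hmdef
  set M := sSup (F '' Set.Icc a b) with hMdef
  obtain ⟨xm, hxm, hFxm⟩ := himg.sInf_mem hne
  obtain ⟨xM, hxM, hFxM⟩ := himg.sSup_mem hne
  have hmab : m ∈ Set.Icc a' b' := by rw [hmdef, ← hFxm]; exact hK hxm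
  have hMab : M ∈ Set.Icc a' b' := by rw [hMdef, ← hFxM]; exact hK hxM
  have hmle : ∀ x ∈ Set.Icc a b, m ≤ F x := fun x hx => csInf_le himg.bddBelow ⟨x, hx, rfl⟩
  have hMge : ∀ x ∈ Set.Icc a b, F x ≤ M := fun x hx => le_csSup himg.bddAbove ⟨x, hx, rfl⟩
  -- marked data
  set sα : ℝ := min m ((a' + F a')/2) with hsαdef
  set tβ : ℝ := max M ((b' + F b')/2) with htβdef
  have hαs : a' < gOI a' → a' < sα ∧ sα < gOI a' := by
    rw [hcoe, hG3 a' ⟨le_rfl, ha'b'.le⟩]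
    intro h
    have hm : a' < m := by
      rcases eq_or_lt_of_le hmab.1 with he | hl
      · exfalso
        have := (hK0 xm hxm).1 (by rw [hFxm, ← hmdef, ← he])
        rw [this] at h
        exact lt_irrefl a' h
      · exact hl
    exact ⟨lt_min hm (by linarith), (min_le_right _ _).trans_lt (by linarith)⟩
  have hβt : gOI b' < b' → gOI b' < tβ ∧ tβ < b' := by
    rw [hcoe, hG3 b' ⟨ha'b'.le, le_rfl⟩]
    intro h
    have hM : M < b' := by
      rcases eq_or_lt_of_le hMab.2 with he | hl
      · exfalso
        have := (hK0 xM hxM).2 (by rw [hFxM, ← hMdef, he])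
        rw [this] at h
        exact lt_irrefl b' h
      · exact hl
    exact ⟨lt_max_of_lt_right (by linarith), max_lt hM (by linarith)⟩
  -- apply the global root construction
  obtain ⟨f0, hf0mono, hf0cont, hf0iter, hf0sand, hf0α, hf0β⟩ :=
    glue_root gOI n hn
      (fun x => ⟨min x (a' - 1) - 1, by linarith [min_le_left x (a' - 1)],
        by rw [hcoe]; exact hG1 _ (by linarith [min_le_right x (a' - 1)])⟩)
      (fun x => ⟨max x (b' + 1) + 1, by linarith [le_max_left x (b' + 1)],
        by rw [hcoe]; exact hG5 _ (by linarith [le_max_right x (b' + 1)])⟩)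
      a' sα b' tβ hαs hβt
  rw [hcoe] at hf0iter hf0sand hf0α hf0β
  have hf0_fix : ∀ x, G x = x → f0 x = x := by
    intro x hx
    have h1 := (hf0sand x).1
    have h2 := (hf0sand x).2
    rw [hx, min_self] at h1
    rw [hx, max_self] at h2
    exact le_antisymm h2 h1
  -- the two endpoint estimates
  have hGa'F : G a' = F a' := hG3 a' ⟨le_rfl, ha'b'.le⟩
  have hGb'F : G b' = F b' := hG3 b' ⟨ha'b'.le, le_rfl⟩
  have hLa : f0^[n-1] a' ≤ m := by
    rcases eq_or_lt_of_le hFa'.1 with he | hl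
    · have hGa : G a' = a' := by rw [hGa'F, ← he]
      rw [Function.iterate_fixed (hf0_fix a' hGa) (n-1)]
      exact hmab.1
    · have h := hf0α (by rw [hGa'F]; exact hl)
      exact h.trans (min_le_left _ _)
  have hLb : M ≤ f0^[n-1] b' := by
    rcases eq_or_lt_of_le hFb'.2 with he | hl
    · have hGb : G b' = b' := by rw [hGb'F, he]
      rw [Function.iterate_fixed (hf0_fix b' hGb) (n-1)]
      exact hMab.2
    · have h := hf0β (by rw [hGb'F]; exact hl)
      exact (le_max_left _ _).trans h
  -- f0 preserves [a',b']
  have hf0maps : Set.MapsTo f0 (Set.Icc a' b') (Set.Icc a' b') := by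
    intro x hx
    have h1 := (hf0sand x).1
    have h2 := (hf0sand x).2
    have hGx : G x = F x := hG3 x hx
    have hFx := hK (hsub hx)
    constructor
    · calc a' ≤ min x (G x) := le_min hx.1 (by rw [hGx]; exact hFx.1)
        _ ≤ f0 x := h1
    · calc f0 x ≤ max x (G x) := h2
        _ ≤ b' := max_le hx.2 (by rw [hGx]; exact hFx.2)
  -- the inverse of f0^[n-1]
  have hf0surj : Function.Surjective f0 :=
    surj_of_id_outside f0 hf0cont (a' - 1) (b' + 1)
      (fun x hx => hf0_fix x (hG1 x hx)) (fun x hx => hf0_fix x (hG5 x hx))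
  set L : ℝ → ℝ := f0^[n-1] with hLdef
  have hLmono : StrictMono L := hf0mono.iterate _
  have hLsurj : Function.Surjective L := hf0surj.iterate _
  set LOI : ℝ ≃o ℝ := StrictMono.orderIsoOfSurjective L hLmono hLsurj with hLOIdef
  have hLcoe : ⇑LOI = L := StrictMono.coe_orderIsoOfSurjective L hLmono hLsurj
  set r : ℝ → ℝ := ⇑LOI.symm with hrdef
  have hrL : ∀ x, r (L x) = x := by
    intro x
    have h := LOI.symm_apply_apply x
    rw [hLcoe] at h
    exact h
  have hLr : ∀ y, L (r y) = y := by
    intro y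
    have h := LOI.apply_symm_apply y
    rw [← hLcoe]
    exact h
  have hrmono : Monotone r := LOI.symm.monotone
  -- the root of F
  set fR : ℝ → ℝ := fun x => r (F x) with hfRdef
  have hfmapsK : ∀ x ∈ Set.Icc a b, r (F x) ∈ Set.Icc a' b' := by
    intro x hx
    constructor
    · have h := hrmono (hLa.trans (hmle x hx) : L a' ≤ F x)
      rwa [hrL] at h
    · have h := hrmono ((hMge x hx).trans hLb : F x ≤ L b')
      rwa [hrL] at h
  have hfz : ∀ z ∈ Set.Icc a' b', r (F z) = f0 z := by
    intro z hz
    have h2 := hf0iter z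
    rw [hG3 z hz] at h2
    have h3 : F z = L (f0 z) := by
      rw [← h2, show n = (n-1)+1 by omega, Function.iterate_succ_apply]
    rw [h3, hrL]
  refine ⟨fR, LOI.symm.continuous.comp_continuousOn hPM.cont,
    fun x hx => hsub (hfmapsK x hx), ?_⟩
  intro x hx
  have hstep : ∀ jj : ℕ, ∀ z ∈ Set.Icc a' b', fR^[jj] z = f0^[jj] z := by
    intro jj
    induction jj with
    | zero => intro z hz; simp
    | succ jj ih =>
        intro z hz
        rw [Function.iterate_succ_apply, Function.iterate_succ_apply]
        have h1 : fR z = f0 z := hfz z hz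
        rw [h1]
        exact ih (f0 z) (hf0maps hz)
  have hfx : fR x ∈ Set.Icc a' b' := hfmapsK x hx
  have h4 : fR^[n] x = fR^[n-1] (fR x) := by
    conv_lhs => rw [show n = (n-1)+1 by omega]
    rw [Function.iterate_succ_apply]
  rw [h4, hstep (n-1) (fR x) hfx]
  show L (r (F x)) = F x
  exact hLr (F x)
end
end

section
/- Let α < β be reals and let Φ : [α,β] → [α,β] be continuous and strictly increasing with Φ(x) > x for all x ∈ [α,β). Fix x_1 ∈ (α, Φ(α)) and a continuous strictly increasing bijection φ_0 : [α, x_1] → [x_1, Φ(α)]. Then there exists a unique continuous strictly increasing function φ : [α,β] → [α,β] such that φ agrees with φ_0 on [α, x_1] and φ∘φ = Φ on [α,β]. -/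
open Set Function

noncomputable section

section Stmt10Helpers

private lemma surjIcc {a b : ℝ} {g : ℝ → ℝ} (hab : a ≤ b) (hc : ContinuousOn g (Icc a b)) :
    SurjOn g (Icc a b) (Icc (g a) (g b)) :=
  fun _ hy => intermediate_value_Icc hab hc hy

private lemma contOn_of_strictMonoOn_surjOn {a b : ℝ} {f : ℝ → ℝ} (hab : a ≤ b)
    (hm : StrictMonoOn f (Icc a b)) (hs : SurjOn f (Icc a b) (Icc (f a) (f b))) :
    ContinuousOn f (Icc a b) := by
  have hmem : ∀ x : Icc a b, f x ∈ Icc (f a) (f b) := fun x =>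
    ⟨hm.monotoneOn (left_mem_Icc.2 hab) x.2 x.2.1, hm.monotoneOn x.2 (right_mem_Icc.2 hab) x.2.2⟩
  set F : Icc a b → Icc (f a) (f b) := fun x => ⟨f x, hmem x⟩ with hF
  have hFmono : StrictMono F := by
    intro x y h
    show f x < f y
    exact hm x.2 y.2 h
  have hFsurj : Function.Surjective F := by
    intro z
    obtain ⟨t, ht, hft⟩ := hs z.2
    exact ⟨⟨t, ht⟩, Subtype.ext hft⟩
  have hFc : Continuous F := by
    have h := (StrictMono.orderIsoOfSurjective F hFmono hFsurj).continuous
    rwa [StrictMono.coe_orderIsoOfSurjective] at h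
  rw [continuousOn_iff_continuous_restrict]
  exact continuous_subtype_val.comp hFc

private lemma invFunOn_spec {a b c d : ℝ} {g : ℝ → ℝ} (hab : a ≤ b)
    (hc : ContinuousOn g (Icc a b)) (hm : StrictMonoOn g (Icc a b))
    (hga : g a = c) (hgb : g b = d) :
    (∀ y ∈ Icc c d, invFunOn g (Icc a b) y ∈ Icc a b ∧ g (invFunOn g (Icc a b) y) = y) ∧
    (∀ t ∈ Icc a b, invFunOn g (Icc a b) (g t) = t) ∧
    StrictMonoOn (invFunOn g (Icc a b)) (Icc c d) ∧
    ContinuousOn (invFunOn g (Icc a b)) (Icc c d) := by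
  subst hga; subst hgb
  have h1 : ∀ y ∈ Icc (g a) (g b),
      invFunOn g (Icc a b) y ∈ Icc a b ∧ g (invFunOn g (Icc a b) y) = y := by
    intro y hy
    obtain ⟨t, ht, hgt⟩ := surjIcc hab hc hy
    exact ⟨invFunOn_mem ⟨t, ht, hgt⟩, invFunOn_eq ⟨t, ht, hgt⟩⟩
  have h2 : ∀ t ∈ Icc a b, invFunOn g (Icc a b) (g t) = t :=
    fun t ht => hm.injOn.leftInvOn_invFunOn ht
  have h3 : StrictMonoOn (invFunOn g (Icc a b)) (Icc (g a) (g b)) := by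
    intro y1 hy1 y2 hy2 h12
    obtain ⟨m1, e1⟩ := h1 y1 hy1
    obtain ⟨m2, e2⟩ := h1 y2 hy2
    by_contra hcon
    push_neg at hcon
    have := hm.monotoneOn m2 m1 hcon
    rw [e1, e2] at this
    exact absurd h12 (not_lt.2 this)
  refine ⟨h1, h2, h3, ?_⟩
  have ea : invFunOn g (Icc a b) (g a) = a := h2 a (left_mem_Icc.2 hab)
  have eb : invFunOn g (Icc a b) (g b) = b := h2 b (right_mem_Icc.2 hab)
  have hab' : g a ≤ g b := hm.monotoneOn (left_mem_Icc.2 hab) (right_mem_Icc.2 hab) hab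
  refine contOn_of_strictMonoOn_surjOn hab' h3 ?_
  rw [ea, eb]
  intro t ht
  exact ⟨g t, ⟨hm.monotoneOn (left_mem_Icc.2 hab) ht ht.1,
    hm.monotoneOn ht (right_mem_Icc.2 hab) ht.2⟩, h2 t ht⟩

end Stmt10Helpers

private noncomputable def paux (Φ : ℝ → ℝ) (α x₁ : ℝ) (n : ℕ) : ℝ :=
  Φ^[n / 2] (if n % 2 = 0 then α else x₁)

private noncomputable def Gaux (Φ φ₀ : ℝ → ℝ) (p : ℕ → ℝ) : ℕ → ℝ → ℝ
  | 0 => φ₀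
  | n + 1 => fun y => Φ (Function.invFunOn (Gaux Φ φ₀ p n) (Set.Icc (p n) (p (n + 1))) y)


/-- unique extension of an initial piece `φ₀` to a strictly
increasing continuous square iterative root of `Φ`. -/
theorem stmt10 (α β : ℝ) (hαβ : α < β) (Φ : ℝ → ℝ)
    (hc : ContinuousOn Φ (Set.Icc α β)) (hm : StrictMonoOn Φ (Set.Icc α β))
    (hmaps : Set.MapsTo Φ (Set.Icc α β) (Set.Icc α β))
    (habove : ∀ x ∈ Set.Ico α β, x < Φ x)
    (x₁ : ℝ) (hx₁ : x₁ ∈ Set.Ioo α (Φ α))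
    (φ₀ : ℝ → ℝ) (hφ₀c : ContinuousOn φ₀ (Set.Icc α x₁))
    (hφ₀m : StrictMonoOn φ₀ (Set.Icc α x₁))
    (hφ₀a : φ₀ α = x₁) (hφ₀b : φ₀ x₁ = Φ α) :
    ∃ φ : ℝ → ℝ,
      (ContinuousOn φ (Set.Icc α β) ∧ StrictMonoOn φ (Set.Icc α β) ∧
        Set.MapsTo φ (Set.Icc α β) (Set.Icc α β) ∧
        (∀ x ∈ Set.Icc α x₁, φ x = φ₀ x) ∧
        (∀ x ∈ Set.Icc α β, φ (φ x) = Φ x)) ∧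
      ∀ ψ : ℝ → ℝ,
        (ContinuousOn ψ (Set.Icc α β) ∧ StrictMonoOn ψ (Set.Icc α β) ∧
          Set.MapsTo ψ (Set.Icc α β) (Set.Icc α β) ∧
          (∀ x ∈ Set.Icc α x₁, ψ x = φ₀ x) ∧
          (∀ x ∈ Set.Icc α β, ψ (ψ x) = Φ x)) →
        ∀ x ∈ Set.Icc α β, ψ x = φ x := by
  classical
  obtain ⟨hx₁α, hx₁Φ⟩ := hx₁
  have hαmem : α ∈ Icc α β := left_mem_Icc.2 hαβ.le
  have hβmem : β ∈ Icc α β := right_mem_Icc.2 hαβ.le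
  have hΦα : Φ α ∈ Icc α β := hmaps hαmem
  have hx₁mem : x₁ ∈ Icc α β := ⟨hx₁α.le, hx₁Φ.le.trans hΦα.2⟩
  -- Φ fixes β
  have hΦβ : Φ β = β := by
    have h1 : Φ β ≤ β := (hmaps hβmem).2
    have h2 : β ≤ Φ β := by
      by_contra hcon
      push_neg at hcon
      set x := max α ((Φ β + β) / 2) with hx
      have hxα : α ≤ x := le_max_left _ _
      have hxβ : x < β := max_lt hαβ (by linarith)
      have h3 : x < Φ x := habove x ⟨hxα, hxβ⟩
      have h4 : Φ x ≤ Φ β := hm.monotoneOn ⟨hxα, hxβ.le⟩ hβmem hxβ.le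
      have h5 : Φ β < x := lt_of_lt_of_le (by linarith) (le_max_right _ _)
      linarith
    linarith
  -- the ladder of points
  set p : ℕ → ℝ := paux Φ α x₁ with hp
  have hp0 : p 0 = α := by simp [hp, paux]
  have hp1 : p 1 = x₁ := by simp [hp, paux]
  have hpstep : ∀ n, p (n + 2) = Φ (p n) := by
    intro n
    simp only [hp, paux]
    rw [Nat.add_div_right _ (by norm_num), Nat.add_mod_right,
      Function.iterate_succ_apply']
  have hp2 : p 2 = Φ α := by rw [show (2 : ℕ) = 0 + 2 from rfl, hpstep, hp0]
  have hK : ∀ n, p n ∈ Icc α β ∧ p n < p (n + 1) := by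
    have main : ∀ n, (p n ∈ Icc α β ∧ p n < p (n + 1)) ∧
        (p (n + 1) ∈ Icc α β ∧ p (n + 1) < p (n + 2)) := by
      intro n
      induction n with
      | zero =>
        refine ⟨⟨?_, ?_⟩, ?_, ?_⟩
        · rw [hp0]; exact hαmem
        · rw [hp0, hp1]; exact hx₁α
        · rw [hp1]; exact hx₁mem
        · rw [hp1, hp2]; exact hx₁Φ
      | succ k ih =>
        obtain ⟨⟨h1, h2⟩, h3, h4⟩ := ih
        refine ⟨⟨h3, h4⟩, ?_, ?_⟩
        · rw [hpstep]; exact hmaps h1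
        · rw [hpstep k, show k + 3 = (k + 1) + 2 from rfl, hpstep]
          exact hm h1 h3 h2
    exact fun n => (main n).1
  have hmono_p : StrictMono p := strictMono_nat_of_lt_succ fun n => (hK n).2
  have hpα : ∀ n, α ≤ p n := fun n => (hK n).1.1
  have hpβ' : ∀ n, p n < β := fun n => lt_of_lt_of_le (hK n).2 (hK (n + 1)).1.2
  have hIccsub : ∀ n, Icc (p n) (p (n + 1)) ⊆ Icc α β := fun n x hx =>
    ⟨(hpα n).trans hx.1, hx.2.trans (hK (n + 1)).1.2⟩
  -- p tends to β
  have hptend : Filter.Tendsto p Filter.atTop (nhds β) := by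
    have hbdd : BddAbove (Set.range p) := ⟨β, fun y hy => by
      obtain ⟨n, rfl⟩ := hy; exact (hK n).1.2⟩
    have hlim : Filter.Tendsto p Filter.atTop (nhds (⨆ n, p n)) :=
      tendsto_atTop_ciSup hmono_p.monotone hbdd
    set L := ⨆ n, p n with hL
    have hLle : L ≤ β := ciSup_le fun n => (hK n).1.2
    have hLge : α ≤ L := (hpα 0).trans (le_ciSup hbdd 0)
    have hLβ : L = β := by
      by_contra hne
      have hLlt : L < β := lt_of_le_of_ne hLle hne
      have hfix : L < Φ L := habove L ⟨hLge, hLlt⟩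
      have hcomp : Filter.Tendsto (fun n => Φ (p n)) Filter.atTop (nhds (Φ L)) := by
        have hco := (hc L ⟨hLge, hLle⟩).tendsto
        exact hco.comp (tendsto_nhdsWithin_iff.2
          ⟨hlim, Filter.Eventually.of_forall fun n => (hK n).1⟩)
      have hcomp2 : Filter.Tendsto (fun n => Φ (p n)) Filter.atTop (nhds L) := by
        have hfe : (fun n => Φ (p n)) = fun n => p (n + 2) :=
          funext fun n => (hpstep n).symm
        rw [hfe]
        exact hlim.comp (Filter.tendsto_add_atTop_nat 2)
      have := tendsto_nhds_unique hcomp2 hcomp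
      linarith
    rwa [hLβ] at hlim
  have hex : ∀ x, x < β → ∃ n, x ≤ p (n + 1) := by
    intro x hx
    obtain ⟨n, hn⟩ := (hptend.eventually (eventually_ge_nhds hx)).exists
    exact ⟨n, hn.trans (hK n).2.le⟩
  -- the ladder of functions
  set G : ℕ → ℝ → ℝ := Gaux Φ φ₀ p with hG
  have hG0 : G 0 = φ₀ := rfl
  have hGsucc : ∀ n y, G (n + 1) y =
      Φ (invFunOn (G n) (Icc (p n) (p (n + 1))) y) := fun n y => rfl
  have key : ∀ n, ContinuousOn (G n) (Icc (p n) (p (n + 1))) ∧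
      StrictMonoOn (G n) (Icc (p n) (p (n + 1))) ∧
      G n (p n) = p (n + 1) ∧ G n (p (n + 1)) = p (n + 2) := by
    intro n
    induction n with
    | zero =>
      rw [hG0]
      simp only [show (0 : ℕ) + 1 = 1 from rfl, show (0 : ℕ) + 2 = 2 from rfl]
      refine ⟨?_, ?_, ?_, ?_⟩
      · rw [hp0, hp1]; exact hφ₀c
      · rw [hp0, hp1]; exact hφ₀m
      · rw [hp0, hp1]; exact hφ₀a
      · rw [hp1, hp2]; exact hφ₀b
    | succ k ih =>
      obtain ⟨ihc, ihm, iha, ihb⟩ := ih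
      have hab : p k ≤ p (k + 1) := (hK k).2.le
      obtain ⟨s1, s2, s3, s4⟩ := invFunOn_spec hab ihc ihm iha ihb
      have e1 : invFunOn (G k) (Icc (p k) (p (k + 1))) (p (k + 1)) = p k := by
        nth_rewrite 2 [← iha]
        exact s2 _ (left_mem_Icc.2 hab)
      have e2 : invFunOn (G k) (Icc (p k) (p (k + 1))) (p (k + 2)) = p (k + 1) := by
        rw [← ihb]; exact s2 _ (right_mem_Icc.2 hab)
      refine ⟨?_, ?_, ?_, ?_⟩
      · have : ContinuousOn (fun y => Φ (invFunOn (G k) (Icc (p k) (p (k + 1))) y))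
            (Icc (p (k + 1)) (p (k + 2))) :=
          hc.comp s4 fun y hy => hIccsub k (s1 y hy).1
        exact this
      · intro y1 h1 y2 h2 h12
        rw [hGsucc, hGsucc]
        exact hm (hIccsub k (s1 y1 h1).1) (hIccsub k (s1 y2 h2).1) (s3 h1 h2 h12)
      · rw [hGsucc, e1, ← hpstep]
      · rw [hGsucc, e2]
        exact (hpstep (k + 1)).symm
  have hGid : ∀ n, ∀ x ∈ Icc (p n) (p (n + 1)), G (n + 1) (G n x) = Φ x := by
    intro n x hx
    rw [hGsucc]
    congr 1
    exact (key n).2.1.injOn.leftInvOn_invFunOn hx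
  have hmapsI : ∀ n, ∀ x ∈ Icc (p n) (p (n + 1)), G n x ∈ Icc (p (n + 1)) (p (n + 2)) := by
    intro n x hx
    obtain ⟨_, hmn, ha, hb⟩ := key n
    constructor
    · have := hmn.monotoneOn (left_mem_Icc.2 (hK n).2.le) hx hx.1
      rwa [ha] at this
    · have := hmn.monotoneOn hx (right_mem_Icc.2 (hK n).2.le) hx.2
      rwa [hb] at this
  have hsurjI : ∀ n, SurjOn (G n) (Icc (p n) (p (n + 1))) (Icc (p (n + 1)) (p (n + 2))) := by
    intro n y hy
    have h := surjIcc (hK n).2.le (key n).1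
    rw [(key n).2.2.1, (key n).2.2.2] at h
    exact h hy
  -- definition of φ
  set S : ℝ → Set ℕ := fun x => {n | x ≤ p (n + 1)} with hS
  set φ : ℝ → ℝ := fun x => if x ∈ Ico α β then G (sInf (S x)) x else β with hφdefn
  have hφdef : ∀ x ∈ Ico α β, φ x = G (sInf (S x)) x := by
    intro x hx
    simp only [hφdefn, if_pos hx]
  have hφβ : φ β = β := by
    simp only [hφdefn, if_neg (fun h : β ∈ Ico α β => absurd h.2 (lt_irrefl β))]
  have hidx : ∀ x ∈ Ico α β, x ∈ Icc (p (sInf (S x))) (p (sInf (S x) + 1)) := by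
    intro x hx
    have hne : (S x).Nonempty := hex x hx.2
    have hup : x ≤ p (sInf (S x) + 1) := Nat.sInf_mem hne
    refine ⟨?_, hup⟩
    rcases Nat.eq_zero_or_pos (sInf (S x)) with h0 | hpos
    · rw [h0, hp0]; exact hx.1
    · obtain ⟨j, hj⟩ := Nat.exists_eq_succ_of_ne_zero hpos.ne'
      have hnot : j ∉ S x := Nat.notMem_of_lt_sInf (hj ▸ j.lt_succ_self)
      rw [hj]
      exact le_of_lt (lt_of_not_ge hnot)
  -- φ agrees with G m on the m-th rung
  have hA : ∀ m, ∀ x ∈ Icc (p m) (p (m + 1)), φ x = G m x := by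
    intro m x hx
    have hxI : x ∈ Ico α β := ⟨(hpα m).trans hx.1, lt_of_le_of_lt hx.2 (hpβ' (m + 1))⟩
    rw [hφdef x hxI]
    have hkm : sInf (S x) ≤ m := Nat.sInf_le hx.2
    rcases eq_or_lt_of_le hkm with heq | hlt
    · rw [heq]
    · set k := sInf (S x) with hk
      have h1 : x ≤ p (k + 1) := Nat.sInf_mem (hex x hxI.2)
      have h2 : p (k + 1) ≤ p m := hmono_p.monotone hlt
      have hxm : x = p m := le_antisymm (h1.trans h2) hx.1
      have h3 : p (k + 1) = p m := le_antisymm h2 (hxm ▸ h1)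
      have h4 : k + 1 = m := hmono_p.injective h3
      subst h4
      rw [hxm, (key k).2.2.2, (key (k + 1)).2.2.1]
  -- basic properties of φ
  have hφlt : ∀ x ∈ Ico α β, φ x < β := by
    intro x hx
    rw [hφdef x hx]
    have := hmapsI _ x (hidx x hx)
    exact lt_of_le_of_lt this.2 (hpβ' _)
  have hφmaps : MapsTo φ (Icc α β) (Icc α β) := by
    intro x hx
    rcases eq_or_lt_of_le hx.2 with h | h
    · rw [h, hφβ]; exact hβmem
    · rw [hφdef x ⟨hx.1, h⟩]
      exact hIccsub _ (hmapsI _ x (hidx x ⟨hx.1, h⟩))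
  have hmonoI : ∀ n, StrictMonoOn φ (Icc (p n) (p (n + 1))) := by
    intro n x hx y hy hxy
    rw [hA n x hx, hA n y hy]
    exact (key n).2.1 hx hy hxy
  have hmonos : ∀ n, StrictMonoOn φ (Icc α (p (n + 1))) := by
    intro n
    induction n with
    | zero =>
      have h := hmonoI 0
      rwa [hp0] at h
    | succ k ih =>
      have hu := ih.union (hmonoI (k + 1))
        (isGreatest_Icc ((hpα 0).trans_eq' hp0.symm |>.trans (hmono_p.monotone (Nat.zero_le (k+1))) : α ≤ p (k + 1)))
        (isLeast_Icc (hK (k + 1)).2.le)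
      rwa [Icc_union_Icc_eq_Icc (a := α)
        ((hpα 0).trans_eq' hp0.symm |>.trans (hmono_p.monotone (Nat.zero_le (k+1))) : α ≤ p (k + 1))
        (hK (k + 1)).2.le] at hu
  have hφmono : StrictMonoOn φ (Icc α β) := by
    intro x hx y hy hxy
    rcases eq_or_lt_of_le hy.2 with h | h
    · rw [h, hφβ]
      exact hφlt x ⟨hx.1, h ▸ hxy⟩
    · obtain ⟨n, hn⟩ := hex y h
      exact hmonos n ⟨hx.1, hxy.le.trans hn⟩ ⟨hy.1, hn⟩ hxy
  have hφα : φ α = x₁ := by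
    have hmem0 : α ∈ Icc (p 0) (p 1) := by rw [hp0, hp1]; exact ⟨le_rfl, hx₁α.le⟩
    rw [hA 0 α hmem0, hG0, hφ₀a]
  have hφsurj : SurjOn φ (Icc α β) (Icc (φ α) (φ β)) := by
    rw [hφα, hφβ]
    intro y hy
    rcases eq_or_lt_of_le hy.2 with h | h
    · exact ⟨β, hβmem, by rw [hφβ, h]⟩
    · have hne : (S y).Nonempty := hex y h
      have hup : y ≤ p (sInf (S y) + 1) := Nat.sInf_mem hne
      have hyI : ∃ n, y ∈ Icc (p (n + 1)) (p (n + 2)) := by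
        rcases Nat.eq_zero_or_pos (sInf (S y)) with h0 | hpos
        · rw [h0] at hup
          refine ⟨0, ?_, ?_⟩
          · rw [hp1]; exact hy.1
          · exact hup.trans (hK 1).2.le
        · obtain ⟨j, hj⟩ := Nat.exists_eq_succ_of_ne_zero hpos.ne'
          have hnot : j ∉ S y := Nat.notMem_of_lt_sInf (hj ▸ j.lt_succ_self)
          refine ⟨j, le_of_lt (lt_of_not_ge hnot), ?_⟩
          rw [hj] at hup
          exact hup
      obtain ⟨n, hyn⟩ := hyI
      obtain ⟨t, ht, hGt⟩ := hsurjI n hyn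
      exact ⟨t, hIccsub n ht, by rw [hA n t ht, hGt]⟩
  have hφcont : ContinuousOn φ (Icc α β) :=
    contOn_of_strictMonoOn_surjOn hαβ.le hφmono hφsurj
  have hφφ₀ : ∀ x ∈ Icc α x₁, φ x = φ₀ x := by
    intro x hx
    have hmem0 : x ∈ Icc (p 0) (p 1) := by rw [hp0, hp1]; exact hx
    rw [hA 0 x hmem0, hG0]
  have hφfe : ∀ x ∈ Icc α β, φ (φ x) = Φ x := by
    intro x hx
    rcases eq_or_lt_of_le hx.2 with h | h
    · rw [h, hφβ, hφβ, hΦβ]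
    · have hxI : x ∈ Ico α β := ⟨hx.1, h⟩
      have hxn := hidx x hxI
      rw [hφdef x hxI]
      have hGx : G (sInf (S x)) x ∈ Icc (p (sInf (S x) + 1)) (p (sInf (S x) + 2)) :=
        hmapsI _ x hxn
      rw [hA (sInf (S x) + 1) _ hGx]
      exact hGid _ x hxn
  refine ⟨φ, ⟨hφcont, hφmono, hφmaps, hφφ₀, hφfe⟩, ?_⟩
  rintro ψ ⟨hψc, hψm, hψmaps, hψ₀, hψfe⟩
  have hψβ : ψ β = β := by
    have h1 : ψ β ≤ β := (hψmaps hβmem).2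
    have h2 : ψ (ψ β) ≤ ψ β := by
      rcases eq_or_lt_of_le h1 with h | h
      · rw [h]; exact h1
      · exact (hψm (hψmaps hβmem) hβmem h).le
    have h3 : β ≤ ψ β :=
      calc β = Φ β := hΦβ.symm
      _ = ψ (ψ β) := (hψfe β hβmem).symm
      _ ≤ ψ β := h2
    exact le_antisymm h1 h3
  have hψn : ∀ n, ∀ x ∈ Icc (p n) (p (n + 1)), ψ x = G n x := by
    intro n
    induction n with
    | zero =>
      intro x hx
      rw [hp0, hp1] at hx
      rw [hψ₀ x hx, hG0]
    | succ k ih =>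
      intro y hy
      obtain ⟨t, ht, hGt⟩ := hsurjI k hy
      have hψt : ψ t = y := by rw [ih t ht, hGt]
      have hψy : ψ y = Φ t := by rw [← hψt]; exact hψfe t (hIccsub k ht)
      rw [hψy, ← hGt]
      exact (hGid k t ht).symm
  intro x hx
  rcases eq_or_lt_of_le hx.2 with h | h
  · rw [h, hψβ, hφβ]
  · have hxI : x ∈ Ico α β := ⟨hx.1, h⟩
    rw [hφdef x hxI, hψn _ x (hidx x hxI)]
end
end
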